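/- arXiv:2010.12162 — 8 statements merged into one kernel-verified Lean document; each statement's English description precedes it below -/
import Mathlib

section
/- Let m ≥ 2 be an integer, let B be a finite set of integers each divisible by m, and let f be an integer not divisible by m. Then the set C = mℕ ∪ B ∪ {f} arises as a minimal additive complement in ℤ. -/
open Pointwise

/-- `C` is a minimal additive complement to `W` in `ℤ`. -/
def IsMAC (C W : Set ℤ) : Prop :=
  C + W = Set.univ ∧ ∀ C' : Set ℤ, C' ⊂ C → C' + W ≠ Set.univ

/-- `C` arises as a minimal additive complement in `ℤ`. -/
def ArisesAsMAC (C : Set ℤ) : Prop :=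
  ∃ W : Set ℤ, IsMAC C W

theorem eventually_periodic_singleton_F_is_MAC
    (m : ℤ) (hm : 2 ≤ m)
    (B : Set ℤ) (hBfin : B.Finite) (hBdvd : ∀ b ∈ B, m ∣ b)
    (f : ℤ) (hf : ¬ m ∣ f) :
    ArisesAsMAC ({x : ℤ | ∃ n : ℕ, x = m * n} ∪ B ∪ {f}) := by
  classical
  obtain ⟨K, hK⟩ : ∃ K : ℤ, ∀ b ∈ B, K ≤ b := by
    obtain ⟨K, hK⟩ := hBfin.bddBelow
    exact ⟨K, fun b hb => hK hb⟩
  set C : Set ℤ := {x : ℤ | ∃ n : ℕ, x = m * n} ∪ B ∪ {f} with hCdef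
  set W : Set ℤ :=
    {w : ℤ | (m ∣ w ∧ w < 0 ∧ w ∉ B) ∨ w = f ∨ (¬ m ∣ w ∧ ¬ m ∣ (w - f))} with hWdef
  -- a multiple of m by a nonpositive integer is ≤ that integer
  have hmul_le : ∀ t : ℤ, t ≤ 0 → m * t ≤ t := by
    intro t ht
    nlinarith
  have hmemCm : ∀ t : ℤ, 0 ≤ t → m * t ∈ C := by
    intro t ht
    exact Or.inl (Or.inl ⟨t.toNat, by rw [Int.toNat_of_nonneg ht]⟩)
  refine ⟨W, ?_, ?_⟩
  · -- coverage
    ext x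
    simp only [Set.mem_univ, iff_true]
    rw [Set.mem_add]
    by_cases h0 : m ∣ x
    · obtain ⟨q, hq⟩ := h0
      set t : ℤ := min q (min K 0) - 1 with htdef
      have ht0 : t < 0 := by omega
      have htq : t ≤ q := by omega
      have hmt : m * t ≤ t := hmul_le t (le_of_lt ht0)
      refine ⟨m * (q - t), hmemCm _ (by omega), m * t, ?_, by ring_nf; omega⟩
      refine Or.inl ⟨⟨t, rfl⟩, by omega, fun hb => ?_⟩
      have := hK _ hb
      omega
    · by_cases hr : m ∣ (x - f)
      · obtain ⟨a, ha⟩ := hr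
        by_cases haT : 0 ≤ a ∨ m * a ∈ B
        · refine ⟨m * a, ?_, f, Or.inr (Or.inl rfl), by omega⟩
          rcases haT with h | h
          · exact hmemCm a h
          · exact Or.inl (Or.inr h)
        · push_neg at haT
          have ha0 : a < 0 := by omega
          have hmt : m * a ≤ a := hmul_le a (le_of_lt ha0)
          refine ⟨f, Or.inr rfl, m * a, ?_, by omega⟩
          exact Or.inl ⟨⟨a, rfl⟩, by omega, haT.2⟩
      · refine ⟨m * 0, hmemCm 0 le_rfl, x, ?_, by ring_nf⟩
        refine Or.inr (Or.inr ⟨h0, hr⟩)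
  · -- minimality
    intro C' hsub heq
    obtain ⟨c, hcC, hcnot⟩ := Set.exists_of_ssubset hsub
    have hm0 : m ≠ 0 := by omega
    -- helper: decomposition of elements of C
    have key : ∀ t₀ : ℤ, (0 ≤ t₀ ∨ m * t₀ ∈ B) → m * t₀ ∉ C' → False := by
      intro t₀ hT hnot
      have hy : (m * t₀ + f) ∈ C' + W := by rw [heq]; trivial
      rw [Set.mem_add] at hy
      obtain ⟨c', hc', w, hw, hsum⟩ := hy
      have hc'C : c' ∈ C := hsub.subset hc'
      rcases hc'C with hcm | hcf
      · -- m ∣ c'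
        obtain ⟨k, hk⟩ : ∃ k, c' = m * k := by
          rcases hcm with ⟨n, hn⟩ | hb
          · exact ⟨(n : ℤ), hn⟩
          · obtain ⟨k, hk⟩ := hBdvd _ hb; exact ⟨k, hk⟩
        have hwval : w = m * (t₀ - k) + f := by
          rw [hk] at hsum; ring_nf; ring_nf at hsum ⊢; omega
        rcases hw with ⟨⟨j, hj⟩, _, _⟩ | hwf | ⟨_, hnd⟩
        · exact hf ⟨j - (t₀ - k), by rw [mul_sub]; omega⟩
        · have : k = t₀ := by
            have : m * (t₀ - k) = 0 := by omega
            rcases mul_eq_zero.mp this with h | h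
            · omega
            · omega
          rw [hk, this] at hc'
          exact hnot hc'
        · exact hnd ⟨t₀ - k, by omega⟩
      · -- c' = f
        simp only [Set.mem_singleton_iff] at hcf
        subst hcf
        have hwval : w = m * t₀ := by omega
        subst hwval
        rcases hw with ⟨_, hneg, hnB⟩ | hwf | ⟨hnd, _⟩
        · rcases hT with h | h
          · nlinarith
          · exact hnB h
        · exact hf ⟨t₀, hwf.symm⟩
        · exact hnd ⟨t₀, rfl⟩
    rcases hcC with hcm | hcf
    · rcases hcm with ⟨n, hn⟩ | hb
      · exact key (n : ℤ) (Or.inl (by positivity)) (by rw [← hn]; exact hcnot)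
      · obtain ⟨k, hk⟩ := hBdvd _ hb
        exact key k (Or.inr (by rw [← hk]; exact hb)) (by rw [← hk]; exact hcnot)
    · -- c = f
      simp only [Set.mem_singleton_iff] at hcf
      set t₀ : ℤ := min K 0 - 1 with ht₀def
      have ht0 : t₀ < 0 := by omega
      have hmt : m * t₀ ≤ t₀ := hmul_le t₀ (le_of_lt ht0)
      have hy : (f + m * t₀) ∈ C' + W := by rw [heq]; trivial
      rw [Set.mem_add] at hy
      obtain ⟨c', hc', w, hw, hsum⟩ := hy
      have hc'C : c' ∈ C := hsub.subset hc'
      rcases hc'C with hcm | hcf'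
      · obtain ⟨k, hk⟩ : ∃ k, c' = m * k := by
          rcases hcm with ⟨n, hn⟩ | hb
          · exact ⟨(n : ℤ), hn⟩
          · obtain ⟨j, hj⟩ := hBdvd _ hb; exact ⟨j, hj⟩
        have hwval : w = m * (t₀ - k) + f := by
          rw [hk] at hsum; ring_nf; ring_nf at hsum ⊢; omega
        rcases hw with ⟨⟨j, hj⟩, _, _⟩ | hwf | ⟨_, hnd⟩
        · exact hf ⟨j - (t₀ - k), by rw [mul_sub]; omega⟩
        · have hkt : k = t₀ := by
            have : m * (t₀ - k) = 0 := by omega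
            rcases mul_eq_zero.mp this with h | h
            · omega
            · omega
          rw [hkt] at hk
          rw [hk] at hc'
          have hCmem : m * t₀ ∈ C := hsub.subset hc'
          rcases hCmem with hcm2 | hcf2
          · rcases hcm2 with ⟨n, hn⟩ | hb
            · have hn0 : (0:ℤ) ≤ (n:ℤ) := by positivity
              nlinarith
            · have := hK _ hb
              omega
          · simp only [Set.mem_singleton_iff] at hcf2
            exact hf ⟨t₀, hcf2.symm⟩
        · exact hnd ⟨t₀ - k, by omega⟩
      · simp only [Set.mem_singleton_iff] at hcf'
        exact hcnot (by rw [hcf, ← hcf']; exact hc')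
end

section
/- Let f be an odd integer. Then the set 2ℤ ∪ {f} (all even integers together with one odd integer f) does not arise as a minimal additive complement in ℤ. -/
open Pointwise

theorem two_Z_union_odd_singleton_not_MAC (f : ℤ) (hf : Odd f) :
    ¬ ArisesAsMAC ({x : ℤ | (2 : ℤ) ∣ x} ∪ {f}) := by
  rintro ⟨W, hcov, hmin⟩
  have hf2 : ¬ (2 : ℤ) ∣ f := by
    obtain ⟨k, hk⟩ := hf; omega
  have hmem : ∀ z : ℤ, ∃ c ∈ ({x : ℤ | (2 : ℤ) ∣ x} ∪ {f}), ∃ w ∈ W, c + w = z := by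
    intro z
    have hz : z ∈ ({x : ℤ | (2 : ℤ) ∣ x} ∪ {f}) + W := by rw [hcov]; trivial
    simpa [Set.mem_add] using hz
  by_cases hW : ∃ w₁ ∈ W, ∃ w₂ ∈ W, ¬ (2 : ℤ) ∣ (w₁ - w₂)
  · -- W contains both parities: drop f
    obtain ⟨w₁, hw₁, w₂, hw₂, hodd⟩ := hW
    refine hmin {x : ℤ | (2 : ℤ) ∣ x} ⟨Set.subset_union_left, fun hsub => ?_⟩ ?_
    · exact hf2 (hsub (Or.inr rfl))
    · rw [Set.eq_univ_iff_forall]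
      intro z
      by_cases h1 : (2 : ℤ) ∣ (z - w₁)
      · have := Set.add_mem_add (s := {x : ℤ | (2 : ℤ) ∣ x}) (t := W) h1 hw₁
        simpa using this
      · have h2 : (2 : ℤ) ∣ (z - w₂) := by omega
        have := Set.add_mem_add (s := {x : ℤ | (2 : ℤ) ∣ x}) (t := W) h2 hw₂
        simpa using this
  · -- W lies in one parity class: drop 0
    push_neg at hW
    obtain ⟨c₀, hc₀, w₁, hw₁, hcw₁⟩ := hmem 0
    obtain ⟨c, hc, w₂, hw₂, hcw₂⟩ := hmem (w₁ + f + 2)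
    have hne : w₂ ≠ w₁ := by
      intro h
      subst h
      rcases hc with hc | hc
      · simp only [Set.mem_setOf_eq] at hc; omega
      · simp only [Set.mem_singleton_iff] at hc; omega
    refine hmin (({x : ℤ | (2 : ℤ) ∣ x} ∪ {f}) \ {0}) ⟨Set.diff_subset, fun hsub => ?_⟩ ?_
    · have h0 : (0 : ℤ) ∈ ({x : ℤ | (2 : ℤ) ∣ x} ∪ {f}) := Or.inl ⟨0, by ring⟩
      have := hsub h0
      simp at this
    · rw [Set.eq_univ_iff_forall]
      intro z
      obtain ⟨c', hc', w', hw', hcw'⟩ := hmem z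
      by_cases hz : c' = 0
      · -- z = w' ∈ W; use z - w₁ or z - w₂, one of them is nonzero and even
        subst hz
        have hzw : z = w' := by omega
        have hp1 : (2 : ℤ) ∣ (w' - w₁) := hW w' hw' w₁ hw₁
        have hp2 : (2 : ℤ) ∣ (w' - w₂) := hW w' hw' w₂ hw₂
        by_cases h1 : z - w₁ = 0
        · have h2 : z - w₂ ≠ 0 := by omega
          have hmem2 : z - w₂ ∈ (({x : ℤ | (2 : ℤ) ∣ x} ∪ {f}) \ {0}) :=
            ⟨Or.inl (by simp only [Set.mem_setOf_eq]; omega), by simpa using h2⟩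
          have := Set.add_mem_add hmem2 hw₂
          simpa using this
        · have hmem1 : z - w₁ ∈ (({x : ℤ | (2 : ℤ) ∣ x} ∪ {f}) \ {0}) :=
            ⟨Or.inl (by simp only [Set.mem_setOf_eq]; omega), by simpa using h1⟩
          have := Set.add_mem_add hmem1 hw₁
          simpa using this
      · have hmemc : c' ∈ (({x : ℤ | (2 : ℤ) ∣ x} ∪ {f}) \ {0}) := ⟨hc', by simpa using hz⟩
        have := Set.add_mem_add hmemc hw'
        rw [hcw'] at this
        exact this
end

section
/- Let m ≥ 2 be an integer and let F be a finite nonempty set of integers such that all elements of F are congruent to one another modulo m and no element of F is divisible by m. Then the set C = mℕ ∪ F arises as a minimal additive complement in ℤ. -/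
open Pointwise

theorem mN_union_single_class_F_is_MAC
    (m : ℤ) (hm : 2 ≤ m)
    (F : Set ℤ) (hFfin : F.Finite) (hFne : F.Nonempty)
    (hFcong : ∀ f₁ ∈ F, ∀ f₂ ∈ F, m ∣ f₁ - f₂)
    (hFndvd : ∀ f ∈ F, ¬ m ∣ f) :
    ArisesAsMAC ({x : ℤ | ∃ n : ℕ, x = m * n} ∪ F) := by
  classical
  have hm0 : (0:ℤ) < m := by omega
  have hFsne : hFfin.toFinset.Nonempty := hFfin.toFinset_nonempty.mpr hFne
  set fmax : ℤ := hFfin.toFinset.max' hFsne with hfmaxdef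
  set fmin : ℤ := hFfin.toFinset.min' hFsne with hfmindef
  have hfmaxF : fmax ∈ F := hFfin.mem_toFinset.mp (hFfin.toFinset.max'_mem hFsne)
  have hfminF : fmin ∈ F := hFfin.mem_toFinset.mp (hFfin.toFinset.min'_mem hFsne)
  have hle_max : ∀ f ∈ F, f ≤ fmax := fun f hf =>
    hFfin.toFinset.le_max' f (hFfin.mem_toFinset.mpr hf)
  have hmin_le : ∀ f ∈ F, fmin ≤ f := fun f hf =>
    hFfin.toFinset.min'_le f (hFfin.mem_toFinset.mpr hf)
  set D : ℤ := fmax - fmin with hDdef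
  have hD0 : 0 ≤ D := by have := hmin_le fmax hfmaxF; omega
  have hmD : m ∣ D := hFcong fmax hfmaxF fmin hfminF
  set N : ℤ := 2*D + m with hNdef
  have hN0 : 0 < N := by omega
  have hmN : m ∣ N := by
    refine dvd_add ?_ dvd_rfl
    exact Dvd.dvd.mul_left hmD 2
  set zt : ℤ → ℤ := fun f => N * (f - fmax) - N with hztdef
  set Zbad : Set ℤ := {x | ∃ g ∈ F, ∃ f' ∈ F, f' ≠ g ∧ x = zt g - f'} with hZbaddef
  set B : Set ℤ := {x | m ∣ x + fmax ∧ x ≤ -fmax - m ∧ x ∉ Zbad} with hBdef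
  set R : Set ℤ := {x | ¬m ∣ x ∧ ¬m ∣ x + fmax} with hRdef
  set W : Set ℤ := ({0} : Set ℤ) ∪ B ∪ R with hWdef
  have hmfmax : ¬ m ∣ fmax := hFndvd fmax hfmaxF
  -- basic membership facts
  have hmemW0 : (0:ℤ) ∈ W := Or.inl (Or.inl rfl)
  have hmemNC : ∀ x : ℤ, 0 ≤ x → m ∣ x → x ∈ ({x : ℤ | ∃ n : ℕ, x = m * n} ∪ F) := by
    intro x hx ⟨q, hq⟩
    have hq0 : 0 ≤ q := by nlinarith
    exact Or.inl ⟨q.toNat, by rw [hq, Int.toNat_of_nonneg hq0]⟩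
  have hztdvd : ∀ f ∈ F, m ∣ zt f := by
    intro f hf
    have h1 : m ∣ f - fmax := hFcong f hf fmax hfmaxF
    have h2 : m ∣ N * (f - fmax) := Dvd.dvd.mul_left h1 N
    exact dvd_sub h2 hmN
  have hztneg : ∀ f ∈ F, zt f ≤ -N := by
    intro f hf
    have h1 : f - fmax ≤ 0 := by have := hle_max f hf; omega
    have h2 : N * (f - fmax) ≤ 0 := mul_nonpos_of_nonneg_of_nonpos hN0.le h1
    simp only [hztdef]
    omega
  -- W elements in the 0 class (mod m) are exactly 0
  have hW0 : ∀ w ∈ W, m ∣ w → w = 0 := by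
    intro w hw hdvd
    rcases hw with (h0 | hB') | hR'
    · exact h0
    · exfalso
      obtain ⟨hd, -, -⟩ := hB'
      have : m ∣ fmax := by
        have := dvd_sub hd hdvd
        simpa using this
      exact hmfmax this
    · exact absurd hdvd hR'.1
  -- W elements in the (-fmax) class (mod m) are in B
  have hWB : ∀ w ∈ W, m ∣ w + fmax → w ∈ B := by
    intro w hw hdvd
    rcases hw with (h0 | hB') | hR'
    · exfalso
      apply hmfmax
      rw [Set.mem_singleton_iff] at h0
      simpa [h0] using hdvd
    · exact hB'
    · exact absurd hdvd hR'.2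
  -- lower bound on Zbad
  have hZlb : ∀ x ∈ Zbad, -(N*D) - N - fmax ≤ x := by
    rintro x ⟨g, hg, f', hf', -, rfl⟩
    have h1 : -D ≤ g - fmax := by have := hmin_le g hg; have := hle_max g hg; omega
    have h2 : N * (-D) ≤ N * (g - fmax) := by
      exact mul_le_mul_of_nonneg_left h1 hN0.le
    have h3 : f' ≤ fmax := hle_max f' hf'
    simp only [hztdef]
    nlinarith
  -- Coverage
  have hcover : ({x : ℤ | ∃ n : ℕ, x = m * n} ∪ F) + W = Set.univ := by
    apply Set.eq_univ_of_forall
    intro z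
    rw [Set.mem_add]
    by_cases hz0 : m ∣ z
    · by_cases hzpos : 0 ≤ z
      · exact ⟨z, hmemNC z hzpos hz0, 0, hmemW0, add_zero z⟩
      · -- z < 0 and m ∣ z
        have hzm : z ≤ -m := by
          obtain ⟨q, hq⟩ := hz0
          have hq1 : q ≤ -1 := by nlinarith
          nlinarith
        by_cases hzb : z - fmax ∈ Zbad
        · obtain ⟨g, hg, f', hf', hne, hzg⟩ := hzb
          have hztg : zt g = N * (g - fmax) - N := rfl
          set f'' : ℤ := if f' = fmax then g else fmin with hf''def
          have hf''F : f'' ∈ F := by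
            rw [hf''def]; split
            · exact hg
            · exact hfminF
          refine ⟨f'', Or.inr hf''F, z - f'', ?_, by ring⟩
          refine Or.inl (Or.inr ⟨?_, ?_, ?_⟩)
          · -- divisibility
            have h1 : m ∣ fmax - f'' := hFcong fmax hfmaxF f'' hf''F
            have : z - f'' + fmax = z + (fmax - f'') := by ring
            rw [this]
            exact dvd_add hz0 h1
          · -- size bound
            have h1 : N * (g - fmax) ≤ 0 :=
              mul_nonpos_of_nonneg_of_nonpos hN0.le (by have := hle_max g hg; omega)
            have h2 : fmin ≤ f' := hmin_le f' hf'
            have h3 : fmin ≤ f'' := hmin_le f'' hf''F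
            have hz' : z = N * (g - fmax) - N - f' + fmax := by
              rw [hztg] at hzg; omega
            omega
          · -- not in Zbad
            rintro ⟨h, hh, f3, hf3, hne3, heq3⟩
            have hzth : zt h = N * (h - fmax) - N := rfl
            rw [hztg] at hzg
            rw [hzth] at heq3
            have key : N * (g - h) = f' + f'' - fmax - f3 := by linarith [mul_sub N g h, mul_sub N g fmax, mul_sub N h fmax]
            have hb1 : fmin ≤ f' := hmin_le f' hf'
            have hb2 : f' ≤ fmax := hle_max f' hf'
            have hb3 : fmin ≤ f'' := hmin_le f'' hf''F
            have hb4 : f'' ≤ fmax := hle_max f'' hf''F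
            have hb5 : fmin ≤ f3 := hmin_le f3 hf3
            have hb6 : f3 ≤ fmax := hle_max f3 hf3
            have hgh : g = h := by
              by_contra hgh'
              rcases (by omega : 1 ≤ g - h ∨ g - h ≤ -1) with hc | hc
              · have : N * 1 ≤ N * (g - h) := mul_le_mul_of_nonneg_left hc hN0.le
                omega
              · have : N * (g - h) ≤ N * (-1) := mul_le_mul_of_nonneg_left hc hN0.le
                omega
            rw [hgh] at key
            simp only [sub_self, mul_zero] at key
            -- so f3 = f' + f'' - fmax
            rw [hf''def] at key
            by_cases hc : f' = fmax
            · rw [if_pos hc] at key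
              have : f3 = g := by omega
              rw [hgh] at this
              exact hne3 this
            · rw [if_neg hc] at key
              have hlt : f' < fmax := lt_of_le_of_ne hb2 hc
              omega
        · refine ⟨fmax, Or.inr hfmaxF, z - fmax, Or.inl (Or.inr ⟨?_, by omega, hzb⟩), by ring⟩
          simpa using hz0
    · by_cases hzu : m ∣ z + fmax
      · -- class of -fmax : go far down below Zbad
        set E : ℤ := z + N*D + N + fmax + m with hEdef
        have hE : E ≤ m * E.toNat := by
          have h1 := Int.self_le_toNat E
          have h2 : (0:ℤ) ≤ (E.toNat : ℤ) := Int.natCast_nonneg _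
          nlinarith
        refine ⟨m * E.toNat, Or.inl ⟨E.toNat, rfl⟩, z - m * E.toNat, ?_, by ring⟩
        refine Or.inl (Or.inr ⟨?_, ?_, ?_⟩)
        · have : z - m * E.toNat + fmax = (z + fmax) - m * E.toNat := by ring
          rw [this]
          exact dvd_sub hzu ⟨E.toNat, rfl⟩
        · have h1 : 0 ≤ N * D := mul_nonneg hN0.le hD0
          omega
        · intro hmem
          have := hZlb _ hmem
          omega
      · refine ⟨0, Or.inl ⟨0, by simp⟩, z, Or.inr ⟨hz0, hzu⟩, by ring⟩
  refine ⟨W, hcover, ?_⟩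
  -- Minimality
  intro C' hss heq
  obtain ⟨c, hcC, hcC'⟩ := Set.exists_of_ssubset hss
  rcases hcC with ⟨n, rfl⟩ | hcF
  · -- c = m * n : the target m * n is only covered using c itself
    have hmem : (m * (n:ℤ)) ∈ C' + W := heq ▸ Set.mem_univ _
    rw [Set.mem_add] at hmem
    obtain ⟨c', hc', w, hw, hsum⟩ := hmem
    have hc'C := hss.subset hc'
    have hmn0 : (0:ℤ) ≤ m * (n:ℤ) := mul_nonneg hm0.le (Int.natCast_nonneg n)
    rcases hc'C with ⟨n', hn'⟩ | hf
    · -- same class: w must be 0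
      have hdvd : m ∣ w := by
        have : w = m * (n:ℤ) - m * (n':ℤ) := by omega
        rw [this]
        exact dvd_sub ⟨n, rfl⟩ ⟨n', rfl⟩
      have hw0 : w = 0 := hW0 w hw hdvd
      have : c' = m * (n:ℤ) := by omega
      rw [this] at hc'
      exact hcC' hc'
    · -- c' ∈ F: w would be in B, too low
      exfalso
      have hdvd : m ∣ w + fmax := by
        have h1 : m ∣ c' - fmax := hFcong c' hf fmax hfmaxF
        have : w + fmax = m * (n:ℤ) - (c' - fmax) := by omega
        rw [this]
        exact dvd_sub ⟨n, rfl⟩ h1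
      have hwB := hWB w hw hdvd
      obtain ⟨-, hwle, -⟩ := hwB
      have : c' ≤ fmax := hle_max c' hf
      omega
  · -- c ∈ F : the target zt c is only covered using c itself
    have hmem : (zt c) ∈ C' + W := heq ▸ Set.mem_univ _
    rw [Set.mem_add] at hmem
    obtain ⟨c', hc', w, hw, hsum⟩ := hmem
    have hc'C := hss.subset hc'
    rcases hc'C with ⟨n', hn'⟩ | hf
    · -- impossible: zt c < 0 but would be m*n' + 0
      have hdvd : m ∣ w := by
        have h1 := hztdvd c hcF
        have : w = zt c - m * (n':ℤ) := by omega
        rw [this]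
        exact dvd_sub h1 ⟨n', rfl⟩
      have hw0 : w = 0 := hW0 w hw hdvd
      have h1 : zt c = m * (n':ℤ) := by omega
      have h2 : (0:ℤ) ≤ m * (n':ℤ) := mul_nonneg hm0.le (Int.natCast_nonneg n')
      have h3 := hztneg c hcF
      omega
    · -- c' ∈ F, w ∈ B, so w ∉ Zbad; but if c' ≠ c then w ∈ Zbad
      have hdvd : m ∣ w + fmax := by
        have h1 : m ∣ c' - fmax := hFcong c' hf fmax hfmaxF
        have h2 := hztdvd c hcF
        have : w + fmax = zt c - c' + fmax := by omega
        rw [this]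
        have : zt c - c' + fmax = zt c - (c' - fmax) := by ring
        rw [this]
        exact dvd_sub h2 h1
      have hwB := hWB w hw hdvd
      obtain ⟨-, -, hwnb⟩ := hwB
      by_cases hcc : c' = c
      · rw [hcc] at hc'
        exact hcC' hc'
      · exact hwnb ⟨c, hcF, c', hf, hcc, by omega⟩
end

section
/- Let m ≥ 2 be an integer, let B be a finite set of integers each divisible by m, and let F be a finite nonempty set of integers such that all elements of F are congruent to one another modulo m and no element of F is divisible by m. If there exists a subset W ⊆ ℤ such that F + W = mℤ₋ \ B, then the set C = mℕ ∪ B ∪ F arises as a minimal additive complement in ℤ. -/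
open Pointwise

theorem coverable_negative_part_implies_MAC
    (m : ℤ) (hm : 2 ≤ m)
    (B : Set ℤ) (hBfin : B.Finite) (hBdvd : ∀ b ∈ B, m ∣ b)
    (F : Set ℤ) (hFfin : F.Finite) (hFne : F.Nonempty)
    (hFcong : ∀ f₁ ∈ F, ∀ f₂ ∈ F, m ∣ f₁ - f₂)
    (hFndvd : ∀ f ∈ F, ¬ m ∣ f)
    (hcov : ∃ W : Set ℤ, F + W = {x : ℤ | ∃ n : ℤ, n < 0 ∧ x = m * n} \ B) :
    ArisesAsMAC ({x : ℤ | ∃ n : ℕ, x = m * n} ∪ B ∪ F) := by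
  classical
  obtain ⟨W, hW⟩ := hcov
  obtain ⟨f0, hf0⟩ := hFne
  have hm0 : (0:ℤ) < m := by omega
  have hmf0 : ¬ m ∣ f0 := hFndvd f0 hf0
  -- small multiplication helpers
  have hmulneg : ∀ k : ℤ, m * k < 0 → k < 0 := by
    intro k hk
    by_contra h
    push_neg at h
    nlinarith [mul_nonneg hm0.le h]
  have hmulnonneg : ∀ k : ℤ, 0 ≤ m * k → 0 ≤ k := by
    intro k hk
    by_contra h
    push_neg at h
    nlinarith
  have hKmK : ∀ K : ℤ, 0 ≤ K → K ≤ m * K := by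
    intro K h; nlinarith
  -- max and min of F
  have hFsm : ∀ f, f ∈ hFfin.toFinset ↔ f ∈ F := fun f => hFfin.mem_toFinset
  have hFsne : hFfin.toFinset.Nonempty := ⟨f0, (hFsm f0).mpr hf0⟩
  obtain ⟨fmax, hfmaxF, hle_max⟩ : ∃ u ∈ F, ∀ f ∈ F, f ≤ u := by
    refine ⟨hFfin.toFinset.max' hFsne, (hFsm _).mp (hFfin.toFinset.max'_mem hFsne), ?_⟩
    exact fun f hf => hFfin.toFinset.le_max' f ((hFsm f).mpr hf)
  obtain ⟨fmin, hfminF, hmin_le⟩ : ∃ l ∈ F, ∀ f ∈ F, l ≤ f := by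
    refine ⟨hFfin.toFinset.min' hFsne, (hFsm _).mp (hFfin.toFinset.min'_mem hFsne), ?_⟩
    exact fun f hf => hFfin.toFinset.min'_le f ((hFsm f).mpr hf)
  obtain ⟨lB, hlB⟩ : ∃ lB, ∀ b ∈ B, lB ≤ b := by
    obtain ⟨lB, h⟩ := hBfin.bddBelow
    exact ⟨lB, fun b hb => h hb⟩
  -- constants
  set Mf := fmax - fmin with hMfdef
  have hMf0 : 0 ≤ Mf := by
    have h1 := hle_max f0 hf0; have h2 := hmin_le f0 hf0; omega
  set A0 := |f0| + Mf with hA0def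
  have hA00 : 0 ≤ A0 := by have := abs_nonneg f0; omega
  have hA0F : ∀ f ∈ F, -A0 ≤ f ∧ f ≤ A0 := by
    intro f hf
    have h1 := hle_max f hf
    have h2 := hmin_le f hf
    have h3 := hle_max f0 hf0
    have h4 := hmin_le f0 hf0
    have h5 := le_abs_self f0
    have h6 := neg_abs_le f0
    constructor <;> omega
  set lB0 := min lB 0 with hlB0def
  have hlB0a : lB0 ≤ lB := min_le_left _ _
  have hlB0b : lB0 ≤ 0 := min_le_right _ _
  set T := lB0 - A0 - 1 with hTdef
  set cc := 3 * Mf + 3 with hccdef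
  have hcc0 : 0 < cc := by omega
  set b0 := min (T - cc * Mf - A0 - Mf - 1) 0 with hb0def
  have hb0a : b0 ≤ T - cc * Mf - A0 - Mf - 1 := min_le_left _ _
  have hb0b : b0 ≤ 0 := min_le_right _ _
  have hbase : m * b0 ≤ T - cc * Mf - A0 - Mf - 1 := by nlinarith
  obtain ⟨X, hX⟩ : ∃ X : ℤ → ℤ, ∀ f, X f = m * b0 + cc * (f - f0) := ⟨_, fun f => rfl⟩
  have hXub : ∀ f ∈ F, X f ≤ T - A0 - Mf - 1 := by
    intro f hf
    have h1 := hA0F f hf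
    have h2 := hA0F f0 hf0
    have h3 : cc * (f - f0) ≤ cc * Mf := by
      have := hle_max f hf; have := hmin_le f0 hf0
      have : f - f0 ≤ Mf := by omega
      nlinarith
    rw [hX]; omega
  have hXlb : ∀ f ∈ F, m * b0 - cc * Mf ≤ X f := by
    intro f hf
    have h3 : -(cc * Mf) ≤ cc * (f - f0) := by
      have := hmin_le f hf; have := hle_max f0 hf0
      have : -Mf ≤ f - f0 := by omega
      nlinarith
    rw [hX]; omega
  have hXdvd : ∀ f ∈ F, m ∣ X f := by
    intro f hf
    rw [hX]
    exact dvd_add (dvd_mul_right m b0) ((hFcong f hf f0 hf0).mul_left cc)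
  have hsep : ∀ p ∈ F, ∀ q ∈ F, p ≠ q → 2 * cc ≤ |X p - X q| := by
    intro p hp q hq hpq
    have hd : m ∣ p - q := hFcong p hp q hq
    have hne : p - q ≠ 0 := sub_ne_zero.mpr hpq
    have habs : (m:ℤ) ≤ |p - q| := Int.le_of_dvd (abs_pos.mpr hne) ((dvd_abs m (p-q)).mpr hd)
    have h1 : X p - X q = cc * (p - q) := by rw [hX, hX]; ring
    rw [h1, abs_mul, abs_of_nonneg hcc0.le]
    nlinarith [abs_nonneg (p - q)]
  -- the sets
  set P : Set ℤ := {v | ∃ f ∈ F, ∃ h ∈ F, h ≠ f ∧ v = X f - h} with hPdef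
  have hPmem : ∀ v, v ∈ P ↔ ∃ f ∈ F, ∃ h ∈ F, h ≠ f ∧ v = X f - h := fun v => Iff.rfl
  have hPub : ∀ v ∈ P, v ≤ T - Mf - 1 ∧ m * b0 - cc * Mf - A0 ≤ v := by
    intro v hv
    obtain ⟨f, hf, h, hh, hne, rfl⟩ := (hPmem v).mp hv
    have h1 := hXub f hf
    have h2 := hXlb f hf
    have h3 := hA0F h hh
    omega
  set S1 : Set ℤ := {v | (v ∈ W ∧ T < v) ∨ (v ≤ T ∧ m ∣ v + f0 ∧ v ∉ P)} with hS1def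
  have hS1mem : ∀ v, v ∈ S1 ↔ ((v ∈ W ∧ T < v) ∨ (v ≤ T ∧ m ∣ v + f0 ∧ v ∉ P)) :=
    fun v => Iff.rfl
  set S2 : Set ℤ := {v | v < 0 ∧ ¬ m ∣ v ∧ ¬ m ∣ v + f0} with hS2def
  have hS2mem : ∀ v, v ∈ S2 ↔ (v < 0 ∧ ¬ m ∣ v ∧ ¬ m ∣ v + f0) := fun v => Iff.rfl
  set W' : Set ℤ := {v | v = 0 ∨ v ∈ S1 ∨ v ∈ S2} with hW'def
  have hW'mem : ∀ v, v ∈ W' ↔ (v = 0 ∨ v ∈ S1 ∨ v ∈ S2) := fun v => Iff.rfl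
  set D : Set ℤ := {x : ℤ | ∃ n : ℤ, n < 0 ∧ x = m * n} \ B with hDdef
  have hmemFW : ∀ x, x ∈ D ↔ ∃ f ∈ F, ∃ w ∈ W, f + w = x := by
    intro x; rw [← hW]; exact Set.mem_add
  have hDfacts : ∀ x ∈ D, x < 0 ∧ x ∉ B ∧ m ∣ x := by
    rintro x ⟨⟨n, hn, rfl⟩, hxB⟩
    exact ⟨by nlinarith, hxB, ⟨n, rfl⟩⟩
  have hWdvd : ∀ w ∈ W, m ∣ w + f0 := by
    intro w hw
    have hmem : f0 + w ∈ D := by rw [← hW]; exact Set.add_mem_add hf0 hw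
    obtain ⟨n, hn, he⟩ := hmem.1
    exact ⟨n, by linarith⟩
  have hS1dvd : ∀ v ∈ S1, m ∣ v + f0 := by
    intro v hv
    rcases (hS1mem v).mp hv with ⟨hvW, -⟩ | ⟨-, h, -⟩
    · exact hWdvd v hvW
    · exact h
  -- F + S1 ⊆ D
  have hFS1D : ∀ f ∈ F, ∀ v ∈ S1, f + v ∈ D := by
    intro f hf v hv
    rcases (hS1mem v).mp hv with ⟨hvW, -⟩ | ⟨hvT, hvd, -⟩
    · rw [← hW]; exact Set.add_mem_add hf hvW
    · have hfA := hA0F f hf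
      have hfv : f + v ≤ lB0 - 1 := by omega
      have hdvd : m ∣ f + v := by
        have h1 := hFcong f hf f0 hf0
        have h2 := dvd_add h1 hvd
        have h3 : f - f0 + (v + f0) = f + v := by ring
        rwa [h3] at h2
      obtain ⟨k, hk⟩ := hdvd
      refine ⟨⟨k, ?_, hk⟩, ?_⟩
      · exact hmulneg k (by omega)
      · intro hB
        have := hlB _ hB
        omega
  -- coverage of D by F + S1
  have hcovD : ∀ y ∈ D, ∃ f ∈ F, ∃ v ∈ S1, f + v = y := by
    intro y hy
    obtain ⟨f, hf, w, hw, hfw⟩ := (hmemFW y).mp hy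
    have hydvd := (hDfacts y hy).2.2
    by_cases hT : T < w
    · exact ⟨f, hf, w, (hS1mem w).mpr (Or.inl ⟨hw, hT⟩), hfw⟩
    push_neg at hT
    have hwd : m ∣ w + f0 := hWdvd w hw
    by_cases hPc : w ∈ P
    · -- punctured case
      obtain ⟨f₁, hf₁, h, hh, hhne, hweq⟩ := (hPmem w).mp hPc
      have hex : ∃ g ∈ F, y - g ∉ P := by
        by_contra hall
        push_neg at hall
        have hsame : ∀ g ∈ F, ∃ q ∈ F, q ≠ f₁ ∧ y - g = X f₁ - q := by
          intro g hg
          obtain ⟨p, hp, q, hq, hqne, heq⟩ := (hPmem _).mp (hall g hg)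
          have hpf₁ : p = f₁ := by
            by_contra hne2
            have hs := hsep p hp f₁ hf₁ hne2
            have he2 : X p - X f₁ = f - g + q - h := by omega
            have b1 := hle_max f hf
            have b2 := hmin_le f hf
            have b3 := hle_max g hg
            have b4 := hmin_le g hg
            have b5 := hle_max q hq
            have b6 := hmin_le q hq
            have b7 := hle_max h hh
            have b8 := hmin_le h hh
            rcases abs_cases (X p - X f₁) with ⟨ha, -⟩ | ⟨ha, -⟩ <;> omega
          subst hpf₁
          exact ⟨q, hq, hqne, heq⟩
        obtain ⟨q1, hq1F, hq1ne, he1⟩ := hsame fmax hfmaxF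
        obtain ⟨q2, hq2F, hq2ne, he2⟩ := hsame fmin hfminF
        obtain ⟨q3, hq3F, hq3ne, he3⟩ := hsame f₁ hf₁
        have b1 := hle_max q1 hq1F
        have b2 := hmin_le q2 hq2F
        exact hq3ne (by omega)
      obtain ⟨g, hg, hgP⟩ := hex
      have hwub := (hPub w hPc).1
      refine ⟨g, hg, y - g, (hS1mem _).mpr (Or.inr ⟨?_, ?_, hgP⟩), by ring⟩
      · have b1 := hle_max f hf
        have b2 := hmin_le g hg
        have b3 := hle_max g hg
        have b4 := hmin_le f hf
        omega
      · have h1 := hFcong g hg f0 hf0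
        have h2 := dvd_sub hydvd h1
        have h3 : y - (g - f0) = y - g + f0 := by ring
        rwa [h3] at h2
    · exact ⟨f, hf, w, (hS1mem w).mpr (Or.inr ⟨hT, hwd, hPc⟩), hfw⟩
  -- natural multiples
  have hmN : ∀ K : ℤ, 0 ≤ K → m * K ∈ {x : ℤ | ∃ n : ℕ, x = m * n} := by
    intro K hK
    exact ⟨K.toNat, by rw [Int.toNat_of_nonneg hK]⟩
  refine ⟨W', ?_, ?_⟩
  · -- coverage
    apply Set.eq_univ_of_forall
    intro x
    rw [Set.mem_add]
    by_cases h1 : m ∣ x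
    · rcases le_or_gt 0 x with hx0 | hx0
      · obtain ⟨k, hk⟩ := h1
        have hk0 : 0 ≤ k := hmulnonneg k (by omega)
        refine ⟨x, Or.inl (Or.inl ?_), 0, (hW'mem 0).mpr (Or.inl rfl), add_zero x⟩
        rw [hk]; exact hmN k hk0
      · by_cases hxB : x ∈ B
        · exact ⟨x, Or.inl (Or.inr hxB), 0, (hW'mem 0).mpr (Or.inl rfl), add_zero x⟩
        · have hxD : x ∈ D := by
            obtain ⟨k, hk⟩ := h1
            exact ⟨⟨k, hmulneg k (by omega), hk⟩, hxB⟩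
          obtain ⟨f, hf, v, hv, hfv⟩ := hcovD x hxD
          exact ⟨f, Or.inr hf, v, (hW'mem v).mpr (Or.inr (Or.inl hv)), hfv⟩
    · by_cases h2 : m ∣ x + f0
      · set bd := min T (m * b0 - cc * Mf - A0 - 1) with hbddef
        have hbd1 : bd ≤ T := min_le_left _ _
        have hbd2 : bd ≤ m * b0 - cc * Mf - A0 - 1 := min_le_right _ _
        set K := max (x - bd) 0 with hKdef
        have hK0 : 0 ≤ K := le_max_right _ _
        have hKb : x - bd ≤ K := le_max_left _ _
        have hmK := hKmK K hK0
        refine ⟨m * K, Or.inl (Or.inl (hmN K hK0)), x - m * K,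
          (hW'mem _).mpr (Or.inr (Or.inl ((hS1mem _).mpr (Or.inr ⟨?_, ?_, ?_⟩)))), by ring⟩
        · omega
        · have h3 := dvd_sub h2 (dvd_mul_right m K)
          have h4 : x + f0 - m * K = x - m * K + f0 := by ring
          rwa [h4] at h3
        · intro hPc
          have := (hPub _ hPc).2
          omega
      · set K := max (x + 1) 0 with hKdef
        have hK0 : 0 ≤ K := le_max_right _ _
        have hKb : x + 1 ≤ K := le_max_left _ _
        have hmK := hKmK K hK0
        refine ⟨m * K, Or.inl (Or.inl (hmN K hK0)), x - m * K,
          (hW'mem _).mpr (Or.inr (Or.inr ((hS2mem _).mpr ⟨?_, ?_, ?_⟩))), by ring⟩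
        · omega
        · intro hd
          apply h1
          have h3 := dvd_add hd (dvd_mul_right m K)
          have h4 : x - m * K + m * K = x := by ring
          rwa [h4] at h3
        · intro hd
          apply h2
          have h3 := dvd_add hd (dvd_mul_right m K)
          have h4 : x - m * K + f0 + m * K = x + f0 := by ring
          rwa [h4] at h3
  · -- minimality
    intro C' hC' hcontra
    obtain ⟨c, hcC, hcC'⟩ := Set.exists_of_ssubset hC'
    have hsub := hC'.1
    by_cases hcF : c ∈ F
    · -- witness X c
      have hXcd := hXdvd c hcF
      have hXcub := hXub c hcF
      have hXneg : X c < 0 := by omega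
      have hXnB : X c ∉ B := fun hB => by have := hlB _ hB; omega
      have hmem : X c ∈ C' + W' := by rw [hcontra]; exact Set.mem_univ _
      obtain ⟨c', hc'C', w, hw, hsum⟩ := Set.mem_add.mp hmem
      have hc'C := hsub hc'C'
      rcases (hW'mem w).mp hw with hw0 | hwS1 | hwS2
      · subst hw0
        rcases hc'C with (⟨n, hn⟩ | hc'B) | hc'F
        · have : (0:ℤ) ≤ c' := by
            rw [hn]; exact mul_nonneg hm0.le n.cast_nonneg
          omega
        · have he : c' = X c := by omega
          exact hXnB (he ▸ hc'B)
        · exact hFndvd c' hc'F (by rw [← add_zero c', hsum]; exact hXcd)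
      · have hwdf0 := hS1dvd w hwS1
        rcases hc'C with (⟨n, hn⟩ | hc'B) | hc'F
        · have hc'd : m ∣ c' := ⟨n, hn⟩
          have hwdvd : m ∣ w := by
            have := dvd_sub hXcd hc'd
            have h4 : X c - c' = w := by omega
            rwa [h4] at this
          exact hmf0 (by have := dvd_sub hwdf0 hwdvd; simpa using this)
        · have hc'd : m ∣ c' := hBdvd c' hc'B
          have hwdvd : m ∣ w := by
            have := dvd_sub hXcd hc'd
            have h4 : X c - c' = w := by omega
            rwa [h4] at this
          exact hmf0 (by have := dvd_sub hwdf0 hwdvd; simpa using this)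
        · rcases (hS1mem w).mp hwS1 with ⟨hwW, hwT⟩ | ⟨hwT, hwd, hwP⟩
          · have := hA0F c' hc'F
            omega
          · by_cases hcc' : c' = c
            · subst hcc'; exact hcC' hc'C'
            · exact hwP ((hPmem w).mpr ⟨c, hcF, c', hc'F, hcc', by omega⟩)
      · obtain ⟨hwneg, hwnd, hwnd2⟩ := (hS2mem w).mp hwS2
        rcases hc'C with (⟨n, hn⟩ | hc'B) | hc'F
        · refine hwnd ?_
          have := dvd_sub hXcd ⟨n, hn⟩
          have h4 : X c - c' = w := by omega
          rwa [h4] at this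
        · refine hwnd ?_
          have := dvd_sub hXcd (hBdvd c' hc'B)
          have h4 : X c - c' = w := by omega
          rwa [h4] at this
        · refine hwnd2 ?_
          have h1 := hFcong c' hc'F f0 hf0
          have := dvd_sub hXcd h1
          have h4 : X c - (c' - f0) = w + f0 := by omega
          rwa [h4] at this
    · -- c is a multiple of m
      have hc : m ∣ c ∧ (0 ≤ c ∨ c ∈ B) := by
        rcases hcC with (⟨n, hn⟩ | hcB) | hcF'
        · exact ⟨⟨n, hn⟩, Or.inl (by rw [hn]; exact mul_nonneg hm0.le n.cast_nonneg)⟩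
        · exact ⟨hBdvd c hcB, Or.inr hcB⟩
        · exact absurd hcF' hcF
      have hmem : c ∈ C' + W' := by rw [hcontra]; exact Set.mem_univ _
      obtain ⟨c', hc'C', w, hw, hsum⟩ := Set.mem_add.mp hmem
      have hc'C := hsub hc'C'
      rcases (hW'mem w).mp hw with hw0 | hwS1 | hwS2
      · subst hw0
        have : c' = c := by omega
        subst this
        exact hcC' hc'C'
      · have hwdf0 := hS1dvd w hwS1
        rcases hc'C with (⟨n, hn⟩ | hc'B) | hc'F
        · have hwdvd : m ∣ w := by
            have := dvd_sub hc.1 ⟨n, hn⟩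
            have h4 : c - c' = w := by omega
            rwa [h4] at this
          exact hmf0 (by have := dvd_sub hwdf0 hwdvd; simpa using this)
        · have hwdvd : m ∣ w := by
            have := dvd_sub hc.1 (hBdvd c' hc'B)
            have h4 : c - c' = w := by omega
            rwa [h4] at this
          exact hmf0 (by have := dvd_sub hwdf0 hwdvd; simpa using this)
        · have hcD : c ∈ D := by rw [← hsum]; exact hFS1D c' hc'F w hwS1
          have := hDfacts c hcD
          rcases hc.2 with h | h
          · omega
          · exact this.2.1 h
      · obtain ⟨hwneg, hwnd, hwnd2⟩ := (hS2mem w).mp hwS2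
        rcases hc'C with (⟨n, hn⟩ | hc'B) | hc'F
        · refine hwnd ?_
          have := dvd_sub hc.1 ⟨n, hn⟩
          have h4 : c - c' = w := by omega
          rwa [h4] at this
        · refine hwnd ?_
          have := dvd_sub hc.1 (hBdvd c' hc'B)
          have h4 : c - c' = w := by omega
          rwa [h4] at this
        · refine hwnd2 ?_
          have h1 := hFcong c' hc'F f0 hf0
          have := dvd_sub hc.1 h1
          have h4 : c - (c' - f0) = w + f0 := by omega
          rwa [h4] at this
end

section
/- Let m ≥ 2 be an integer, let B be a finite set of integers each divisible by m, let f̃ be an integer with 1 ≤ f̃ ≤ m − 1, and let F be a finite nonempty set of integers each congruent to f̃ modulo m. Suppose there exist sets S₁, …, Sₙ ⊆ ℤ with S₁ ∪ ⋯ ∪ Sₙ = mℕ ∪ B such that for each i there exists Wᵢ ⊆ ℤ with F + Wᵢ = mℤ \ Sᵢ. If m ≥ f̃ + 2f̃·⌊n/f̃⌋ + (n mod f̃), then the set C = mℕ ∪ B ∪ F arises as a minimal additive complement in ℤ. -/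
open Pointwise

private lemma exists_low_mult (m y : ℤ) (hm : 1 ≤ m) : ∃ x : ℤ, m ∣ x ∧ x ≤ y := by
  refine ⟨m * (-(y.natAbs : ℤ)), ⟨_, rfl⟩, ?_⟩
  have h1 : -(y.natAbs : ℤ) ≤ y := by omega
  have h2 : (0:ℤ) ≤ (y.natAbs : ℤ) := by positivity
  nlinarith

private lemma gadget (m ft E : ℤ) (hm : 2 ≤ m)
    (F : Set ℤ) (hFfin : F.Finite) (hFne : F.Nonempty)
    (hFcong : ∀ f ∈ F, m ∣ f - ft) (hE : m ∣ E) :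
    ∃ X : Set ℤ,
      (∀ x ∈ X, m ∣ x + ft) ∧
      (F + X = {x : ℤ | m ∣ x ∧ x ≤ E}) ∧
      (∀ y : ℤ, ∃ x ∈ X, x ≤ y) ∧
      (∀ f ∈ F, ∃ z : ℤ,
        (∀ a ∈ F, ∀ b ∈ F, z ≤ E + a - b) ∧ z ∈ F + X ∧
        (∀ f' ∈ F, ∀ x ∈ X, f' + x = z → f' = f)) := by
  classical
  obtain ⟨f₀, hf₀⟩ := hFne
  set Fs := hFfin.toFinset with hFs
  have hFsne : Fs.Nonempty := ⟨f₀, hFfin.mem_toFinset.mpr hf₀⟩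
  set Fmax := Fs.max' hFsne with hFmaxdef
  set Fmin := Fs.min' hFsne with hFmindef
  have hmemFs : ∀ f, f ∈ Fs ↔ f ∈ F := fun f => hFfin.mem_toFinset
  have hFmax : Fmax ∈ F := (hmemFs _).1 (Fs.max'_mem hFsne)
  have hFmin : Fmin ∈ F := (hmemFs _).1 (Fs.min'_mem hFsne)
  have hle_max : ∀ f ∈ F, f ≤ Fmax := fun f hf => Fs.le_max' f ((hmemFs f).2 hf)
  have hmin_le : ∀ f ∈ F, Fmin ≤ f := fun f hf => Fs.min'_le f ((hmemFs f).2 hf)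
  set D := Fmax - Fmin with hD
  have hD0 : 0 ≤ D := by have := hle_max _ hFmin; linarith
  have hFF : ∀ f ∈ F, ∀ g ∈ F, m ∣ f - g := by
    intro f hf g hg
    have h1 := hFcong f hf; have h2 := hFcong g hg
    have h3 := dvd_sub h1 h2
    have heq : f - ft - (g - ft) = f - g := by ring
    rwa [heq] at h3
  have hDdvd : m ∣ D := hFF _ hFmax _ hFmin
  set ζ : ℤ → ℤ := fun f => E - 2*D - 2*m - (D+1)*(f - Fmin) with hζ
  have hζval : ∀ f, ζ f = E - 2*D - 2*m - (D+1)*(f - Fmin) := fun f => rfl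
  have hζdvd : ∀ f ∈ F, m ∣ ζ f := by
    intro f hf
    have h1 : m ∣ (D+1)*(f - Fmin) := Dvd.dvd.mul_left (hFF f hf _ hFmin) _
    have h2 : m ∣ 2*D := Dvd.dvd.mul_left hDdvd 2
    rw [hζval]
    exact dvd_sub (dvd_sub (dvd_sub hE h2) ⟨2, by ring⟩) h1
  have hζdepth : ∀ f ∈ F, ζ f ≤ E - 2*D - 2*m := by
    intro f hf
    have h1 : 0 ≤ f - Fmin := by have := hmin_le f hf; linarith
    have h2 : 0 ≤ (D+1)*(f - Fmin) := mul_nonneg (by linarith) h1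
    rw [hζval]; linarith
  have hζlo : ∀ f ∈ F, E - 2*D - 2*m - (D+1)*D ≤ ζ f := by
    intro f hf
    have h1 : f - Fmin ≤ D := by have := hle_max f hf; linarith
    have h0 : 0 ≤ f - Fmin := by have := hmin_le f hf; linarith
    have h2 : (D+1)*(f - Fmin) ≤ (D+1)*D := by nlinarith
    rw [hζval]; linarith
  have hζspace : ∀ f ∈ F, ∀ g ∈ F, f ≠ g →
      (2*D + 2 ≤ ζ f - ζ g ∨ 2*D + 2 ≤ ζ g - ζ f) := by
    intro f hf g hg hne
    have hd : m ∣ g - f := hFF g hg f hf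
    have hne' : g - f ≠ 0 := sub_ne_zero.mpr (Ne.symm hne)
    have habs : m ≤ |g - f| := Int.le_of_dvd (abs_pos.mpr hne') ((dvd_abs m _).mpr hd)
    have hval : ζ f - ζ g = (D+1)*(g - f) := by rw [hζval, hζval]; ring
    have hval2 : ζ g - ζ f = (D+1)*(f - g) := by rw [hζval, hζval]; ring
    have hD1 : (0:ℤ) ≤ D + 1 := by linarith
    rcases abs_cases (g - f) with ⟨heq, _⟩ | ⟨heq, _⟩
    · left
      have hgf : m ≤ g - f := by linarith
      nlinarith
    · right
      have hgf : m ≤ f - g := by linarith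
      nlinarith
  set P : Set ℤ := {x | ∃ f ∈ F, ∃ g ∈ F, x = ζ f - g} with hP
  set Q : Set ℤ := {x | ∃ f ∈ F, x = ζ f - f} with hQ
  set X : Set ℤ := ({x | m ∣ x + ft ∧ x ≤ E - Fmax} \ P) ∪ Q with hX
  have hQX : Q ⊆ X := Set.subset_union_right
  have hXdvd : ∀ x ∈ X, m ∣ x + ft := by
    intro x hx
    rcases hx with ⟨⟨h1, _⟩, _⟩ | ⟨f, hf, rfl⟩
    · exact h1
    · have h3 := dvd_sub (hζdvd f hf) (hFcong f hf)
      have heq : ζ f - (f - ft) = ζ f - f + ft := by ring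
      rwa [heq] at h3
  have hmain : F + X = {x : ℤ | m ∣ x ∧ x ≤ E} := by
    ext x
    constructor
    · intro hx
      rw [Set.mem_add] at hx
      obtain ⟨f, hf, v, hv, rfl⟩ := hx
      rcases hv with ⟨⟨h1, h2⟩, _⟩ | ⟨g, hg, rfl⟩
      · constructor
        · have h3 : m ∣ (f - ft) + (v + ft) := dvd_add (hFcong f hf) h1
          have heq : f - ft + (v + ft) = f + v := by ring
          rwa [heq] at h3
        · have := hle_max f hf; linarith
      · constructor
        · have h3 : m ∣ ζ g + (f - g) := dvd_add (hζdvd g hg) (hFF f hf g hg)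
          have heq : ζ g + (f - g) = f + (ζ g - g) := by ring
          rwa [heq] at h3
        · have h1 : f - g ≤ D := by
            have := hle_max f hf; have := hmin_le g hg; linarith
          have h2 := hζdepth g hg
          linarith
    · rintro ⟨hxdvd, hxle⟩
      
      rw [Set.mem_add]
      by_cases hxz : ∃ g ∈ F, x = ζ g
      · obtain ⟨g, hg, rfl⟩ := hxz
        exact ⟨g, hg, ζ g - g, hQX ⟨g, hg, rfl⟩, by ring⟩
      · push_neg at hxz
        have key : ∃ f ∈ F, x - f ∉ P ∧ x - f ≤ E - Fmax := by
          by_cases hA : (x - Fmax) ∈ P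
          · obtain ⟨g, hg, f', hf', hEq⟩ := hA
            have hc1 : 0 ≤ x - ζ g := by
              have := hle_max f' hf'; linarith
            have hc2 : x - ζ g ≤ D := by
              have := hmin_le f' hf'; linarith
            have hcne : x - ζ g ≠ 0 := sub_ne_zero.mpr (hxz g hg)
            have hc3 : 1 ≤ x - ζ g := by
              rcases (lt_of_le_of_ne hc1 (Ne.symm hcne)) with h
              linarith [Int.add_one_le_iff.mpr h]
            set c := x - ζ g with hc
            have hxd : x ≤ E - 2*D - 2*m + D := by
              have := hζdepth g hg; linarith
            have hbd : ∀ f ∈ F, x - f ≤ E - Fmax := by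
              intro f hf
              have := hmin_le f hf
              linarith
            by_contra hall
            push_neg at hall
            have hall' : ∀ f ∈ F, x - f ∈ P := by
              intro f hf
              by_contra hnp
              linarith [hbd f hf, hall f hf hnp]
            have step : ∀ f ∈ F, f - c ∈ F := by
              intro f hf
              obtain ⟨h, hh, f'', hf'', hEq2⟩ := hall' f hf
              have hw1 : x - ζ h = f - f'' := by linarith
              have hw2 : -D ≤ x - ζ h := by
                have := hmin_le f hf; have := hle_max f'' hf''
                linarith
              have hw3 : x - ζ h ≤ D := by
                have := hle_max f hf; have := hmin_le f'' hf''
                linarith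
              have hhg : h = g := by
                by_contra hne
                rcases hζspace h hh g hg hne with h1 | h1 <;> linarith
              subst hhg
              have hfc : f'' = f - c := by rw [hc]; linarith
              rwa [hfc] at hf''
            have iter : ∀ j : ℕ, Fmax - (j : ℤ) * c ∈ F := by
              intro j
              induction j with
              | zero => simpa using hFmax
              | succ k ih =>
                have h5 := step _ ih
                have heq : Fmax - (k:ℤ)*c - c = Fmax - ((k+1 : ℕ) : ℤ)*c := by
                  push_cast; ring
                rwa [heq] at h5
            have hlast := hmin_le _ (iter (D + 1).toNat)
            have htn : ((D+1).toNat : ℤ) = D + 1 := Int.toNat_of_nonneg (by linarith)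
            rw [htn] at hlast
            nlinarith
          · exact ⟨Fmax, hFmax, hA, by linarith⟩
        obtain ⟨f, hf, hnP, hble⟩ := key
        refine ⟨f, hf, x - f, Or.inl ⟨⟨?_, hble⟩, hnP⟩, by ring⟩
        have h3 : m ∣ x - (f - ft) := dvd_sub hxdvd (hFcong f hf)
        have heq : x - (f - ft) = x - f + ft := by ring
        rwa [heq] at h3
  refine ⟨X, hXdvd, hmain, ?_, ?_⟩
  · intro y
    set L := min (min y (E - Fmax)) (E - 2*D - 2*m - (D+1)*D - Fmax - 1) with hL
    obtain ⟨t, htd, htl⟩ := exists_low_mult m (L + ft) (by linarith)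
    refine ⟨t - ft, Or.inl ⟨⟨?_, ?_⟩, ?_⟩, ?_⟩
    · have heq : t - ft + ft = t := by ring
      rw [heq]; exact htd
    · have h4 : L ≤ E - Fmax := le_trans (min_le_left _ _) (min_le_right _ _)
      linarith
    · rintro ⟨f, hf, g, hg, hEq⟩
      have h1 := hζlo f hf
      have h2 := hle_max g hg
      have h3 : L ≤ E - 2*D - 2*m - (D+1)*D - Fmax - 1 := min_le_right _ _
      linarith
    · have h4 : L ≤ y := le_trans (min_le_left _ _) (min_le_left _ _)
      linarith
  · intro f hf
    refine ⟨ζ f, ?_, ?_, ?_⟩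
    · intro a ha b hb
      have h1 := hζdepth f hf
      have h2 : b - a ≤ D := by
        have := hle_max b hb; have := hmin_le a ha; linarith
      linarith
    · rw [hmain]
      exact ⟨hζdvd f hf, by have := hζdepth f hf; linarith⟩
    · intro f' hf' x hx hEq
      have hxval : x = ζ f - f' := by linarith
      rcases hx with ⟨_, hnp⟩ | ⟨g, hg, hq⟩
      · exact absurd ⟨f, hf, f', hf', hxval⟩ hnp
      · have hgf : g = f := by
          by_contra hne
          have hd1 : ζ f - ζ g = f' - g := by
            rw [hxval] at hq; linarith
          have h2 : f' - g ≤ D := by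
            have := hle_max f' hf'; have := hmin_le g hg; linarith
          have h3 : -D ≤ f' - g := by
            have := hmin_le f' hf'; have := hle_max g hg; linarith
          rcases hζspace f hf g hg (Ne.symm hne) with h1 | h1 <;> linarith
        subst hgf
        rw [hxval] at hq
        linarith

private lemma two_ft_arith (ft a b a' b' : ℤ) (h1 : 0 ≤ b) (h2 : b < ft)
    (h3 : 0 ≤ b') (h4 : b' < ft) :
    (2*ft*a + b = 2*ft*a' + b' → a = a' ∧ b = b') ∧
    (2*ft*a + b + ft ≠ 2*ft*a' + b') := by
  have hft : 0 < ft := lt_of_le_of_lt h1 h2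
  constructor
  · intro h
    have hkey : b - b' = 2*ft*(a' - a) := by linear_combination h
    rcases lt_trichotomy a a' with hh | hh | hh
    · exfalso
      have hge : 1 ≤ a' - a := by linarith
      nlinarith
    · subst hh
      exact ⟨rfl, by linarith⟩
    · exfalso
      have hge : 1 ≤ a - a' := by linarith
      nlinarith
  · intro h
    have hkey : b + ft - b' = 2*ft*(a' - a) := by linear_combination h
    rcases lt_trichotomy a a' with hh | hh | hh
    · have hge : 1 ≤ a' - a := by linarith
      nlinarith
    · subst hh; nlinarith
    · have hge : 1 ≤ a - a' := by linarith
      nlinarith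

theorem set_cover_bound_implies_MAC
    (m : ℤ) (hm : 2 ≤ m)
    (B : Set ℤ) (hBfin : B.Finite) (hBdvd : ∀ b ∈ B, m ∣ b)
    (ft : ℤ) (hf₁ : 1 ≤ ft) (hf₂ : ft ≤ m - 1)
    (F : Set ℤ) (hFfin : F.Finite) (hFne : F.Nonempty)
    (hFcong : ∀ f ∈ F, m ∣ f - ft)
    (n : ℕ) (S : Fin n → Set ℤ)
    (hScover : (⋃ i, S i) = {x : ℤ | ∃ k : ℕ, x = m * k} ∪ B)
    (hScov : ∀ i, ∃ W : Set ℤ, F + W = {x : ℤ | m ∣ x} \ S i)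
    (hbound : ft + 2 * ft * ((n : ℤ) / ft) + (n : ℤ) % ft ≤ m) :
    ArisesAsMAC ({x : ℤ | ∃ k : ℕ, x = m * k} ∪ B ∪ F) := by
  unfold ArisesAsMAC IsMAC

  classical
  set N : Set ℤ := {x : ℤ | ∃ k : ℕ, x = m * k} with hNdef
  have hftpos : (0:ℤ) < ft := by linarith
  have hmpos : (0:ℤ) < m := by linarith
  have h0N : (0:ℤ) ∈ N := ⟨0, by simp⟩
  have hftnd : ¬ m ∣ ft := by
    intro h
    have := Int.le_of_dvd hftpos h
    linarith
  -- index i₀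
  have h0U : (0:ℤ) ∈ ⋃ i, S i := by rw [hScover]; exact Or.inl h0N
  obtain ⟨i₀, -⟩ := Set.mem_iUnion.mp h0U
  -- N ∪ B facts
  obtain ⟨f₀, hf₀⟩ := hFne
  set Bs := insert (0:ℤ) hBfin.toFinset with hBs
  have hBsne : Bs.Nonempty := ⟨0, Finset.mem_insert_self _ _⟩
  set M₀ := Bs.min' hBsne with hM₀def
  have hM₀mem : M₀ ∈ Bs := by rw [hM₀def]; exact Bs.min'_mem hBsne
  have hM₀dvd : m ∣ M₀ := by
    rcases Finset.mem_insert.mp hM₀mem with h | h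
    · rw [h]; exact dvd_zero m
    · exact hBdvd _ (hBfin.mem_toFinset.mp h)
  have hM₀le0 : M₀ ≤ 0 := Bs.min'_le 0 (Finset.mem_insert_self _ _)
  have hM₀leB : ∀ b ∈ B, M₀ ≤ b := fun b hb =>
    Bs.min'_le b (Finset.mem_insert_of_mem (hBfin.mem_toFinset.mpr hb))
  have hNB : ∀ x ∈ N ∪ B, M₀ ≤ x ∧ m ∣ x := by
    rintro x (⟨k, rfl⟩ | hx)
    · have : (0:ℤ) ≤ m * k := by positivity
      exact ⟨by linarith, ⟨k, rfl⟩⟩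
    · exact ⟨hM₀leB x hx, hBdvd x hx⟩
  set E := M₀ - m with hEdef
  have hEdvd : m ∣ E := dvd_sub hM₀dvd dvd_rfl
  have hSsub : ∀ i, S i ⊆ N ∪ B := by
    intro i
    rw [← hScover]
    exact Set.subset_iUnion S i
  -- covering complements
  choose W' hW' using hScov
  -- F extremes
  set Fs := hFfin.toFinset with hFs
  have hFsne : Fs.Nonempty := ⟨f₀, hFfin.mem_toFinset.mpr hf₀⟩
  set Fmax := Fs.max' hFsne with hFmaxdef
  set Fmin := Fs.min' hFsne with hFmindef
  have hFmax : Fmax ∈ F := hFfin.mem_toFinset.mp (Fs.max'_mem hFsne)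
  have hFmin : Fmin ∈ F := hFfin.mem_toFinset.mp (Fs.min'_mem hFsne)
  have hle_max : ∀ f ∈ F, f ≤ Fmax := fun f hf => Fs.le_max' f (hFfin.mem_toFinset.mpr hf)
  have hmin_le : ∀ f ∈ F, Fmin ≤ f := fun f hf => Fs.min'_le f (hFfin.mem_toFinset.mpr hf)
  -- gadget
  obtain ⟨X, hXdvd, hXmain, hXunb, hXuniq⟩ :=
    gadget m ft E hm F hFfin ⟨f₀, hf₀⟩ hFcong hEdvd
  set Whigh := {w ∈ W' i₀ | M₀ - Fmax ≤ w} with hWhigh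
  set V : Fin n → Set ℤ := fun i => if i = i₀ then X ∪ Whigh else W' i with hVdef
  have hVi₀ : V i₀ = X ∪ Whigh := by simp [hVdef]
  have hVne : ∀ i, i ≠ i₀ → V i = W' i := by intro i h; simp [hVdef, h]
  have hW'dvd : ∀ i, ∀ w ∈ W' i, m ∣ w + ft := by
    intro i w hw
    have h1 : f₀ + w ∈ F + W' i := Set.mem_add.mpr ⟨f₀, hf₀, w, hw, rfl⟩
    rw [hW' i] at h1
    have h2 : m ∣ f₀ + w := h1.1
    have h3 := dvd_sub h2 (hFcong f₀ hf₀)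
    have heq : f₀ + w - (f₀ - ft) = w + ft := by ring
    rwa [heq] at h3
  have hV1 : ∀ i, ∀ v ∈ V i, m ∣ v + ft := by
    intro i v hv
    by_cases h : i = i₀
    · subst h; rw [hVi₀] at hv
      rcases hv with hv | hv
      · exact hXdvd v hv
      · exact hW'dvd i v hv.1
    · rw [hVne i h] at hv; exact hW'dvd i v hv
  have hV2 : ∀ i, ∀ f ∈ F, ∀ v ∈ V i, m ∣ f + v ∧ f + v ∉ S i := by
    intro i f hf v hv
    by_cases h : i = i₀
    · subst h; rw [hVi₀] at hv
      rcases hv with hv | hv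
      · have h1 : f + v ∈ F + X := Set.mem_add.mpr ⟨f, hf, v, hv, rfl⟩
        rw [hXmain] at h1
        refine ⟨h1.1, fun hS => ?_⟩
        have h2 := (hNB _ (hSsub i hS)).1
        have h3 := h1.2
        rw [hEdef] at h3
        linarith
      · have h1 : f + v ∈ F + W' i := Set.mem_add.mpr ⟨f, hf, v, hv.1, rfl⟩
        rw [hW' i] at h1
        exact ⟨h1.1, h1.2⟩
    · rw [hVne i h] at hv
      have h1 : f + v ∈ F + W' i := Set.mem_add.mpr ⟨f, hf, v, hv, rfl⟩
      rw [hW' i] at h1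
      exact ⟨h1.1, h1.2⟩
  have hV3 : ∀ i, ∀ x : ℤ, m ∣ x → x ∉ S i → ∃ f ∈ F, ∃ v ∈ V i, f + v = x := by
    intro i x hxd hxS
    by_cases h : i = i₀
    · subst h
      rcases le_or_gt x E with hle | hlt
      · have h1 : x ∈ F + X := by rw [hXmain]; exact ⟨hxd, hle⟩
        obtain ⟨f, hf, v, hv, hfv⟩ := Set.mem_add.mp h1
        exact ⟨f, hf, v, by rw [hVi₀]; exact Or.inl hv, hfv⟩
      · have hxM : M₀ ≤ x := by
          by_contra hc
          push_neg at hc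
          have h1 : m ∣ M₀ - x := dvd_sub hM₀dvd hxd
          have h2 : 0 < M₀ - x := by linarith
          have := Int.le_of_dvd h2 h1
          rw [hEdef] at hlt
          linarith
        have h1 : x ∈ F + W' i := by rw [hW' i]; exact ⟨hxd, hxS⟩
        obtain ⟨f, hf, v, hv, hfv⟩ := Set.mem_add.mp h1
        have hvh : v ∈ Whigh := by
          refine ⟨hv, ?_⟩
          have := hle_max f hf
          linarith
        exact ⟨f, hf, v, by rw [hVi₀]; exact Or.inr hvh, hfv⟩
    · rw [hVne i h]
      have h1 : x ∈ F + W' i := by rw [hW' i]; exact ⟨hxd, hxS⟩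
      obtain ⟨f, hf, v, hv, hfv⟩ := Set.mem_add.mp h1
      exact ⟨f, hf, v, hv, hfv⟩
  have hV4 : ∀ i, ∀ y : ℤ, ∃ v ∈ V i, v ≤ y := by
    intro i y
    by_cases h : i = i₀
    · subst h
      obtain ⟨v, hv, hvy⟩ := hXunb y
      exact ⟨v, by rw [hVi₀]; exact Or.inl hv, hvy⟩
    · rw [hVne i h]
      obtain ⟨t, htd, htl⟩ := exists_low_mult m (min E (y + Fmin)) (by linarith)
      have htE : t ≤ E := le_trans htl (min_le_left _ _)
      have htS : t ∉ S i := by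
        intro hS
        have := (hNB _ (hSsub i hS)).1
        rw [hEdef] at htE
        linarith
      have h1 : t ∈ F + W' i := by rw [hW' i]; exact ⟨htd, htS⟩
      obtain ⟨f, hf, v, hv, hfv⟩ := Set.mem_add.mp h1
      refine ⟨v, hv, ?_⟩
      have h2 := hmin_le f hf
      have h3 : t ≤ y + Fmin := le_trans htl (min_le_right _ _)
      linarith
  -- residue function
  set r : Fin n → ℤ := fun i => 2*ft*(((i:ℕ):ℤ)/ft) + ((i:ℕ):ℤ)%ft with hrdef
  have hrfacts : ∀ i : Fin n, 0 ≤ ((i:ℕ):ℤ)%ft ∧ ((i:ℕ):ℤ)%ft < ft ∧ 0 ≤ ((i:ℕ):ℤ)/ft := by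
    intro i
    exact ⟨Int.emod_nonneg _ (ne_of_gt hftpos), Int.emod_lt_of_pos _ hftpos,
      Int.ediv_nonneg (by positivity) (le_of_lt hftpos)⟩
  have hr_lb : ∀ i, 0 ≤ r i := by
    intro i
    obtain ⟨h1, h2, h3⟩ := hrfacts i
    have : 0 ≤ 2*ft*(((i:ℕ):ℤ)/ft) := by positivity
    simp only [hrdef]; linarith
  have hr_ub : ∀ i, r i + ft ≤ m - 1 := by
    intro i
    obtain ⟨h1, h2, h3⟩ := hrfacts i
    have hIlt : ((i:ℕ):ℤ) ≤ (n:ℤ) - 1 := by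
      have := i.isLt
      omega
    have hI0 : (0:ℤ) ≤ ((i:ℕ):ℤ) := by positivity
    have hdm := Int.mul_ediv_add_emod ((i:ℕ):ℤ) ft
    have hndm := Int.mul_ediv_add_emod (n:ℤ) ft
    have hdiv_le : ((i:ℕ):ℤ)/ft ≤ (n:ℤ)/ft := by
      apply Int.ediv_le_ediv hftpos
      linarith
    have hmul : ft*(((i:ℕ):ℤ)/ft) ≤ ft*((n:ℤ)/ft) :=
      mul_le_mul_of_nonneg_left hdiv_le (le_of_lt hftpos)
    simp only [hrdef]
    linarith
  have hrinj : ∀ i j : Fin n, m ∣ r i - r j → i = j := by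
    intro i j hd
    obtain ⟨hi1, hi2, hi3⟩ := hrfacts i
    obtain ⟨hj1, hj2, hj3⟩ := hrfacts j
    have hbi := hr_lb i; have hbj := hr_lb j
    have hui := hr_ub i; have huj := hr_ub j
    have habs : |r i - r j| < m := by
      rw [abs_lt]; constructor <;> linarith
    have hz : r i - r j = 0 := Int.eq_zero_of_abs_lt_dvd hd habs
    have heq : 2*ft*(((i:ℕ):ℤ)/ft) + ((i:ℕ):ℤ)%ft
        = 2*ft*(((j:ℕ):ℤ)/ft) + ((j:ℕ):ℤ)%ft := by
      simp only [hrdef] at hz; linarith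
    obtain ⟨ha, hb⟩ := (two_ft_arith ft _ _ _ _ hi1 hi2 hj1 hj2).1 heq
    have hdm_i := Int.mul_ediv_add_emod ((i:ℕ):ℤ) ft
    have hdm_j := Int.mul_ediv_add_emod ((j:ℕ):ℤ) ft
    have hIJ : ((i:ℕ):ℤ) = ((j:ℕ):ℤ) := by
      rw [← hdm_i, ← hdm_j, ha, hb]
    have : (i:ℕ) = (j:ℕ) := by exact_mod_cast hIJ
    exact Fin.ext this
  have hrind : ∀ i j : Fin n, ¬ m ∣ (r i + ft - r j) := by
    intro i j hd
    obtain ⟨hi1, hi2, hi3⟩ := hrfacts i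
    obtain ⟨hj1, hj2, hj3⟩ := hrfacts j
    have hbi := hr_lb i; have hbj := hr_lb j
    have hui := hr_ub i; have huj := hr_ub j
    have habs : |r i + ft - r j| < m := by
      rw [abs_lt]; constructor <;> linarith
    have hz : r i + ft - r j = 0 := Int.eq_zero_of_abs_lt_dvd hd habs
    have heq : 2*ft*(((i:ℕ):ℤ)/ft) + ((i:ℕ):ℤ)%ft + ft
        = 2*ft*(((j:ℕ):ℤ)/ft) + ((j:ℕ):ℤ)%ft := by
      simp only [hrdef] at hz; linarith
    exact (two_ft_arith ft _ _ _ _ hi1 hi2 hj1 hj2).2 heq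
  -- the complement
  set A₀ : Set ℤ := {w : ℤ | ∀ i : Fin n, ¬ m ∣ (w - r i) ∧ ¬ m ∣ (w - (r i - ft))} with hA₀
  set A₁ : Set ℤ := {w : ℤ | ∃ i : Fin n, w = r i} with hA₁
  set A₂ : Set ℤ := {w : ℤ | ∃ i : Fin n, ∃ v ∈ V i, w = v + r i} with hA₂
  set Wset : Set ℤ := A₀ ∪ A₁ ∪ A₂ with hWsetdef
  -- helper: membership in N
  have hmemN : ∀ x : ℤ, m ∣ x → 0 ≤ x → x ∈ N := by
    rintro x ⟨d, rfl⟩ hx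
    have hd0 : 0 ≤ d := by
      by_contra hc
      push_neg at hc
      nlinarith
    exact ⟨d.toNat, by rw [Int.toNat_of_nonneg hd0]⟩
  -- residue classification of C
  have hres1 : ∀ c, c ∈ N ∪ B ∪ F → m ∣ c → c ∈ N ∪ B := by
    rintro c (hc | hc) hd
    · exact hc
    · exfalso
      have h1 := hFcong c hc
      have h2 := dvd_sub hd h1
      have heq : c - (c - ft) = ft := by ring
      rw [heq] at h2
      exact hftnd h2
  have hres2 : ∀ c, c ∈ N ∪ B ∪ F → m ∣ c - ft → c ∈ F := by
    rintro c (hc | hc) hd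
    · exfalso
      have h1 := (hNB c hc).2
      have h2 := dvd_sub h1 hd
      have heq : c - (c - ft) = ft := by ring
      rw [heq] at h2
      exact hftnd h2
    · exact hc
  have hresor : ∀ c, c ∈ N ∪ B ∪ F → m ∣ c ∨ m ∣ c - ft := by
    rintro c (hc | hc)
    · exact Or.inl (hNB c hc).2
    · exact Or.inr (hFcong c hc)
  refine ⟨Wset, ?_, ?_⟩
  · -- coverage
    apply Set.eq_univ_of_forall
    intro z
    by_cases h1 : ∃ i, m ∣ z - r i
    · obtain ⟨i, hi⟩ := h1
      by_cases h2 : z - r i ∈ S i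
      · exact Set.mem_add.mpr ⟨z - r i, Or.inl (hSsub i h2),
          r i, Or.inl (Or.inr ⟨i, rfl⟩), by ring⟩
      · obtain ⟨f, hf, v, hv, hfv⟩ := hV3 i (z - r i) hi h2
        exact Set.mem_add.mpr ⟨f, Or.inr hf, v + r i,
          Or.inr ⟨i, v, hv, rfl⟩, by linarith⟩
    · by_cases h2 : ∃ i, m ∣ z - (r i - ft)
      · obtain ⟨i, hi⟩ := h2
        obtain ⟨v, hv, hvle⟩ := hV4 i (z - r i)
        have hc1 : m ∣ z - r i - v := by
          have ha := hV1 i v hv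
          have hb := dvd_sub hi ha
          have heq : z - (r i - ft) - (v + ft) = z - r i - v := by ring
          rwa [heq] at hb
        have hc2 : (0:ℤ) ≤ z - r i - v := by linarith
        refine Set.mem_add.mpr ⟨z - r i - v, Or.inl (Or.inl (hmemN _ hc1 hc2)),
          v + r i, Or.inr ⟨i, v, hv, rfl⟩, by ring⟩
      · push_neg at h1 h2
        refine Set.mem_add.mpr ⟨0, Or.inl (Or.inl h0N), z,
          Or.inl (Or.inl fun i => ⟨h1 i, h2 i⟩), by ring⟩
  · -- minimality
    intro C' hss hEqU
    obtain ⟨c₀, hc₀C, hc₀n⟩ := Set.exists_of_ssubset hss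
    have hsub : C' ⊆ N ∪ B ∪ F := hss.subset
    rcases hc₀C with hc₀NB | hc₀F
    · -- c₀ ∈ N ∪ B
      have hc₀U : c₀ ∈ ⋃ i, S i := by rw [hScover]; exact hc₀NB
      obtain ⟨i, hc₀S⟩ := Set.mem_iUnion.mp hc₀U
      have hc₀d : m ∣ c₀ := (hNB c₀ hc₀NB).2
      have hz : c₀ + r i ∈ C' + Wset := hEqU ▸ Set.mem_univ _
      obtain ⟨c', hc', w, hw, hsum⟩ := Set.mem_add.mp hz
      have hc'C := hsub hc'
      rcases hw with (hw | hw) | hw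
      · rcases hresor c' hc'C with hd | hd
        · have : m ∣ w - r i := by
            have heq : w - r i = c₀ - c' := by linarith
            rw [heq]
            exact dvd_sub hc₀d hd
          exact (hw i).1 this
        · have : m ∣ w - (r i - ft) := by
            have heq : w - (r i - ft) = c₀ - (c' - ft) := by linarith
            rw [heq]
            exact dvd_sub hc₀d hd
          exact (hw i).2 this
      · obtain ⟨j, rfl⟩ := hw
        rcases hresor c' hc'C with hd | hd
        · have h3 : m ∣ r i - r j := by
            have heq : r i - r j = c' - c₀ := by linarith
            rw [heq]
            exact dvd_sub hd hc₀d
          have := hrinj i j h3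
          subst this
          have : c' = c₀ := by linarith
          rw [this] at hc'
          exact hc₀n hc'
        · have h3 : m ∣ r j + ft - r i := by
            have heq : r j + ft - r i = c₀ - (c' - ft) := by linarith
            rw [heq]
            exact dvd_sub hc₀d hd
          exact hrind j i h3
      · obtain ⟨j, v, hv, rfl⟩ := hw
        have hvd := hV1 j v hv
        rcases hresor c' hc'C with hd | hd
        · have h3 : m ∣ r i + ft - r j := by
            have heq : r i + ft - r j = c' + (v + ft) - c₀ := by linarith
            rw [heq]
            exact dvd_sub (dvd_add hd hvd) hc₀d
          exact hrind i j h3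
        · have h3 : m ∣ r i - r j := by
            have heq : r i - r j = (c' - ft) + (v + ft) - c₀ := by linarith
            rw [heq]
            exact dvd_sub (dvd_add hd hvd) hc₀d
          have hij := hrinj i j h3
          subst hij
          have hc'F : c' ∈ F := hres2 c' hc'C hd
          have h4 := (hV2 i c' hc'F v hv).2
          have h5 : c' + v = c₀ := by linarith
          rw [h5] at h4
          exact h4 hc₀S
    · -- c₀ ∈ F
      obtain ⟨z₀, hz₀bd, hz₀mem, hz₀uniq⟩ := hXuniq c₀ hc₀F
      rw [hXmain] at hz₀mem
      obtain ⟨hz₀d, hz₀le⟩ := hz₀mem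
      have hz : z₀ + r i₀ ∈ C' + Wset := hEqU ▸ Set.mem_univ _
      obtain ⟨c', hc', w, hw, hsum⟩ := Set.mem_add.mp hz
      have hc'C := hsub hc'
      rcases hw with (hw | hw) | hw
      · rcases hresor c' hc'C with hd | hd
        · have : m ∣ w - r i₀ := by
            have heq : w - r i₀ = z₀ - c' := by linarith
            rw [heq]
            exact dvd_sub hz₀d hd
          exact (hw i₀).1 this
        · have : m ∣ w - (r i₀ - ft) := by
            have heq : w - (r i₀ - ft) = z₀ - (c' - ft) := by linarith
            rw [heq]
            exact dvd_sub hz₀d hd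
          exact (hw i₀).2 this
      · obtain ⟨j, rfl⟩ := hw
        rcases hresor c' hc'C with hd | hd
        · have h3 : m ∣ r i₀ - r j := by
            have heq : r i₀ - r j = c' - z₀ := by linarith
            rw [heq]
            exact dvd_sub hd hz₀d
          have hij := hrinj i₀ j h3
          subst hij
          have hc'z : c' = z₀ := by linarith
          have hc'NB : c' ∈ N ∪ B := hres1 c' hc'C hd
          have h4 := (hNB c' hc'NB).1
          rw [hc'z, hEdef] at *
          linarith
        · have h3 : m ∣ r j + ft - r i₀ := by
            have heq : r j + ft - r i₀ = z₀ - (c' - ft) := by linarith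
            rw [heq]
            exact dvd_sub hz₀d hd
          exact hrind j i₀ h3
      · obtain ⟨j, v, hv, rfl⟩ := hw
        have hvd := hV1 j v hv
        rcases hresor c' hc'C with hd | hd
        · have h3 : m ∣ r i₀ + ft - r j := by
            have heq : r i₀ + ft - r j = c' + (v + ft) - z₀ := by linarith
            rw [heq]
            exact dvd_sub (dvd_add hd hvd) hz₀d
          exact hrind i₀ j h3
        · have h3 : m ∣ r i₀ - r j := by
            have heq : r i₀ - r j = (c' - ft) + (v + ft) - z₀ := by linarith
            rw [heq]
            exact dvd_sub (dvd_add hd hvd) hz₀d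
          have hij := hrinj i₀ j h3
          subst hij
          have hc'F : c' ∈ F := hres2 c' hc'C hd
          have h5 : c' + v = z₀ := by linarith
          rw [hVi₀] at hv
          rcases hv with hvX | hvW
          · have := hz₀uniq c' hc'F v hvX h5
            rw [this] at hc'
            exact hc₀n hc'
          · have h6 : M₀ - Fmax ≤ v := hvW.2
            have h7 := hz₀bd c' hc'F Fmax hFmax
            rw [hEdef] at h7
            linarith
end

section
/- Let m ≥ 2 be an integer, let B be a finite set of integers each divisible by m, let f̃ be an integer with 1 ≤ f̃ ≤ m − 1, and let F be a finite nonempty set of integers each congruent to f̃ modulo m. If m ≥ f̃ + 2f̃·⌊(|B|+1)/f̃⌋ + ((|B|+1) mod f̃), then the set C = mℕ ∪ B ∪ F arises as a minimal additive complement in ℤ. -/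
open Pointwise
private lemma emod_helper {m ρ : ℤ} (v : ℤ) (h0 : 0 ≤ ρ) (h1 : ρ < m) :
    (ρ + m * v) % m = ρ := by
  rw [Int.add_mul_emod_self_left, Int.emod_eq_of_lt h0 h1]

private lemma class_eq {m ρ₁ ρ₂ : ℤ} {v₁ v₂ : ℤ} (h01 : 0 ≤ ρ₁) (h11 : ρ₁ < m)
    (h02 : 0 ≤ ρ₂) (h12 : ρ₂ < m) (h : ρ₁ + m * v₁ = ρ₂ + m * v₂) :
    ρ₁ = ρ₂ ∧ v₁ = v₂ := by
  have hm : 0 < m := lt_of_le_of_lt h01 h11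
  have hρ : ρ₁ = ρ₂ := by
    have h2 := congrArg (· % m) h
    rwa [emod_helper v₁ h01 h11, emod_helper v₂ h02 h12] at h2
  refine ⟨hρ, ?_⟩
  have h3 : m * v₁ = m * v₂ := by linarith
  exact mul_left_cancel₀ (ne_of_gt hm) h3

private def uF (ft j : ℤ) : ℤ := 2 * ft * (j / ft) + j % ft

private lemma uF_range {ft m n : ℤ} (hft : 1 ≤ ft)
    (hbound : ft + 2 * ft * (n / ft) + n % ft ≤ m) {j : ℤ} (h0 : 0 ≤ j) (hj : j < n) :
    0 ≤ uF ft j ∧ uF ft j + ft < m := by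
  have hft0 : (0:ℤ) < ft := hft
  have hftne : ft ≠ 0 := by omega
  have hq := Int.mul_ediv_add_emod j ft
  have hq' := Int.mul_ediv_add_emod n ft
  have hr0 : 0 ≤ j % ft := Int.emod_nonneg j hftne
  have hr1 : j % ft < ft := Int.emod_lt_of_pos j hft0
  have hs0 : 0 ≤ n % ft := Int.emod_nonneg n hftne
  have hs1 : n % ft < ft := Int.emod_lt_of_pos n hft0
  have hdiv0 : 0 ≤ j / ft := Int.ediv_nonneg h0 (by omega)
  constructor
  · have h1 : 0 ≤ 2 * ft * (j / ft) := by positivity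
    unfold uF; linarith
  · unfold uF
    have hqle : j / ft ≤ n / ft := by
      by_contra hcon
      push_neg at hcon
      have h2 : n / ft + 1 ≤ j / ft := hcon
      have h3 : ft * (n / ft + 1) ≤ ft * (j / ft) :=
        mul_le_mul_of_nonneg_left h2 (by linarith)
      nlinarith
    rcases eq_or_lt_of_le hqle with heq | hlt
    · have hrlt : j % ft < n % ft := by
        rw [heq] at hq
        nlinarith
      nlinarith
    · have h2 : j / ft + 1 ≤ n / ft := hlt
      have h3 : ft * (j / ft + 1) ≤ ft * (n / ft) :=
        mul_le_mul_of_nonneg_left h2 (by linarith)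
      nlinarith

private lemma uF_inj {ft : ℤ} (hft : 1 ≤ ft) {i j : ℤ} (h0i : 0 ≤ i) (h0j : 0 ≤ j)
    (h : uF ft i = uF ft j) : i = j := by
  have hft0 : (0:ℤ) < ft := hft
  have hftne : ft ≠ 0 := by omega
  have hqi := Int.mul_ediv_add_emod i ft
  have hqj := Int.mul_ediv_add_emod j ft
  have hri0 : 0 ≤ i % ft := Int.emod_nonneg i hftne
  have hri1 : i % ft < ft := Int.emod_lt_of_pos i hft0
  have hrj0 : 0 ≤ j % ft := Int.emod_nonneg j hftne
  have hrj1 : j % ft < ft := Int.emod_lt_of_pos j hft0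
  unfold uF at h
  rcases lt_trichotomy (i / ft) (j / ft) with hlt | heq | hgt
  · have h2 : i / ft + 1 ≤ j / ft := hlt
    have h3 : ft * (i / ft + 1) ≤ ft * (j / ft) := mul_le_mul_of_nonneg_left h2 (by linarith)
    nlinarith
  · have h4 : ft * (i / ft) = ft * (j / ft) := by rw [heq]
    have h5 : 2 * ft * (i / ft) = 2 * ft * (j / ft) := by rw [heq]
    linarith
  · have h2 : j / ft + 1 ≤ i / ft := hgt
    have h3 : ft * (j / ft + 1) ≤ ft * (i / ft) := mul_le_mul_of_nonneg_left h2 (by linarith)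
    nlinarith

private lemma uF_ne {ft : ℤ} (hft : 1 ≤ ft) {i j : ℤ} (h0i : 0 ≤ i) (h0j : 0 ≤ j) :
    uF ft i ≠ uF ft j + ft := by
  intro h
  have hft0 : (0:ℤ) < ft := hft
  have hftne : ft ≠ 0 := by omega
  have hri0 : 0 ≤ i % ft := Int.emod_nonneg i hftne
  have hri1 : i % ft < ft := Int.emod_lt_of_pos i hft0
  have hrj0 : 0 ≤ j % ft := Int.emod_nonneg j hftne
  have hrj1 : j % ft < ft := Int.emod_lt_of_pos j hft0
  unfold uF at h
  rcases le_or_gt (i / ft) (j / ft) with hle | hgt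
  · have h3 : 2 * ft * (i / ft) ≤ 2 * ft * (j / ft) := mul_le_mul_of_nonneg_left hle (by linarith)
    linarith
  · have h2 : j / ft + 1 ≤ i / ft := hgt
    have h3 : 2 * ft * (j / ft + 1) ≤ 2 * ft * (i / ft) := mul_le_mul_of_nonneg_left h2 (by linarith)
    nlinarith

theorem eventually_MAC_bound
    (m : ℤ) (hm : 2 ≤ m)
    (B : Finset ℤ) (hBdvd : ∀ b ∈ B, m ∣ b)
    (ft : ℤ) (hf₁ : 1 ≤ ft) (hf₂ : ft ≤ m - 1)
    (F : Set ℤ) (hFfin : F.Finite) (hFne : F.Nonempty)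
    (hFcong : ∀ f ∈ F, m ∣ f - ft)
    (hbound : ft + 2 * ft * (((B.card : ℤ) + 1) / ft) + ((B.card : ℤ) + 1) % ft ≤ m) :
    ArisesAsMAC ({x : ℤ | ∃ k : ℕ, x = m * k} ∪ ↑B ∪ F) := by
  classical
  have hm0 : (0:ℤ) < m := by omega
  have hmne : m ≠ 0 := by omega
  set n : ℤ := (B.card : ℤ) + 1 with hn
  have hcard0 : (0:ℤ) ≤ (B.card : ℤ) := Int.natCast_nonneg _
  have hn1 : 1 ≤ n := by omega
  -- the set A of positions of F
  set A : Finset ℤ := hFfin.toFinset.image (fun x => (x - ft) / m) with hAdef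
  have hAmem : ∀ f' ∈ F, ft + m * ((f' - ft) / m) = f' ∧ (f' - ft) / m ∈ A := by
    intro f' hf'
    constructor
    · have h1 := Int.mul_ediv_cancel' (hFcong f' hf')
      linarith
    · exact Finset.mem_image.mpr ⟨f', hFfin.mem_toFinset.mpr hf', rfl⟩
  have hAelem : ∀ a ∈ A, ∃ f' ∈ F, f' = ft + m * a := by
    intro a ha
    obtain ⟨x, hx, rfl⟩ := Finset.mem_image.mp ha
    exact ⟨x, hFfin.mem_toFinset.mp hx, ((hAmem x (hFfin.mem_toFinset.mp hx)).1).symm⟩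
  have hAne : A.Nonempty := by
    obtain ⟨f0, hf0⟩ := hFne
    exact ⟨_, (hAmem f0 hf0).2⟩
  set amax : ℤ := A.max' hAne with hamaxdef
  set amin : ℤ := A.min' hAne with hamindef
  have hbnds : ∀ a ∈ A, amin ≤ a ∧ a ≤ amax := fun a ha => ⟨A.min'_le a ha, A.le_max' a ha⟩
  have hminmax : amin ≤ amax := (hbnds _ (A.max'_mem hAne)).1
  set d : ℤ := amax - amin with hddef
  have hd0 : 0 ≤ d := by omega
  set S : ℤ := 4 * (d + 1) with hSdef
  have hS0 : 0 < S := by omega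
  set Gb : ℤ := 1 + ∑ b ∈ B, |b| with hGbdef
  have hGb1 : 1 ≤ Gb := by
    have : (0:ℤ) ≤ ∑ b ∈ B, |b| := Finset.sum_nonneg fun i _ => abs_nonneg i
    omega
  have hβbound : ∀ b ∈ B, |b / m| ≤ Gb - 1 := by
    intro b hb
    have h1 : m * (b / m) = b := Int.mul_ediv_cancel' (hBdvd b hb)
    have h2 : |b| = |m| * |b / m| := by rw [← abs_mul, h1]
    have h3 : |b / m| ≤ |b| := by
      have h4 : (1:ℤ) * |b/m| ≤ |m| * |b/m| := by
        apply mul_le_mul_of_nonneg_right _ (abs_nonneg _)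
        rw [abs_of_pos hm0]; omega
      linarith
    have h5 : |b| ≤ ∑ b ∈ B, |b| :=
      Finset.single_le_sum (fun i _ => abs_nonneg i) hb
    omega
  set K : ℤ := (A.card : ℤ) with hKdef
  set idxA : ℤ → ℤ := fun a => ((A.filter (fun x => x < a)).card : ℤ) with hidxAdef
  have hidxA0 : ∀ a, 0 ≤ idxA a := fun a => Int.natCast_nonneg _
  have hidxAK : ∀ a, idxA a ≤ K := by
    intro a
    simp only [hidxAdef, hKdef]
    exact_mod_cast Finset.card_filter_le _ _
  have hidxAmono : ∀ a ∈ A, ∀ a' ∈ A, a < a' → idxA a < idxA a' := by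
    intro a ha a' ha' hlt
    simp only [hidxAdef]
    have : (A.filter (fun x => x < a)) ⊂ (A.filter (fun x => x < a')) := by
      constructor
      · intro x hx
        simp only [Finset.mem_filter] at hx ⊢
        exact ⟨hx.1, by omega⟩
      · intro hsub
        have : a ∈ A.filter (fun x => x < a) := hsub (by simp [Finset.mem_filter, ha, hlt])
        simp [Finset.mem_filter] at this
    exact_mod_cast Finset.card_lt_card this
  have hidxAinj : ∀ a ∈ A, ∀ a' ∈ A, idxA a = idxA a' → a = a' := by
    intro a ha a' ha' heq
    rcases lt_trichotomy a a' with h | h | h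
    · have := hidxAmono a ha a' ha' h; omega
    · exact h
    · have := hidxAmono a' ha' a ha h; omega
  set E : ℤ → ℤ := fun a => -amax - 2 - d - Gb - S * (1 + idxA a) with hEdef
  have hEub : ∀ a, E a ≤ -amax - 2 - d - Gb - S := by
    intro a
    simp only [hEdef]
    have h1 : S * 1 ≤ S * (1 + idxA a) := by
      apply mul_le_mul_of_nonneg_left _ (by omega)
      have := hidxA0 a; omega
    linarith
  have hElb : ∀ a, -amax - 2 - d - Gb - S * (1 + K) ≤ E a := by
    intro a
    simp only [hEdef]
    have h1 : S * (1 + idxA a) ≤ S * (1 + K) := by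
      apply mul_le_mul_of_nonneg_left _ (by omega)
      have := hidxAK a; omega
    linarith
  -- separation of anchors
  have hEsep : ∀ a ∈ A, ∀ a' ∈ A, a ≠ a' → S ≤ E a - E a' ∨ S ≤ E a' - E a := by
    intro a ha a' ha' hne
    have hidne : idxA a ≠ idxA a' := fun h => hne (hidxAinj a ha a' ha' h)
    simp only [hEdef]
    rcases lt_or_gt_of_ne hidne with h | h
    · left
      have h2 : idxA a + 1 ≤ idxA a' := h
      have h3 : S * (1 + idxA a) + S * 1 ≤ S * (1 + idxA a') := by nlinarith
      linarith
    · right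
      have h2 : idxA a' + 1 ≤ idxA a := h
      have h3 : S * (1 + idxA a') + S * 1 ≤ S * (1 + idxA a) := by nlinarith
      linarith
  -- Bneg
  set Bneg : Finset ℤ := (B.image (fun b => b / m)).filter (fun β => β < 0) with hBnegdef
  have hBnegmem : ∀ β ∈ Bneg, β < 0 ∧ (∃ b ∈ B, b = m * β) ∧ 1 - Gb ≤ β := by
    intro β hβ
    simp only [hBnegdef, Finset.mem_filter, Finset.mem_image] at hβ
    obtain ⟨⟨b, hb, rfl⟩, hneg⟩ := hβ
    refine ⟨hneg, ⟨b, hb, (Int.mul_ediv_cancel' (hBdvd b hb)).symm⟩, ?_⟩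
    have := hβbound b hb
    rw [abs_of_neg hneg] at this
    omega
  set idxB : ℤ → ℤ := fun β => ((Bneg.filter (fun x => x < β)).card : ℤ) with hidxBdef
  have hidxB0 : ∀ β, 0 ≤ idxB β := fun β => Int.natCast_nonneg _
  have hidxBlt : ∀ β ∈ Bneg, idxB β < (Bneg.card : ℤ) := by
    intro β hβ
    simp only [hidxBdef]
    have : (Bneg.filter (fun x => x < β)) ⊂ Bneg := by
      constructor
      · exact Finset.filter_subset _ _
      · intro hsub
        have : β ∈ Bneg.filter (fun x => x < β) := hsub hβ
        simp [Finset.mem_filter] at this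
    exact_mod_cast Finset.card_lt_card this
  have hBnegcard : (Bneg.card : ℤ) ≤ (B.card : ℤ) := by
    have h1 : Bneg.card ≤ (B.image (fun b => b / m)).card := by
      apply Finset.card_le_card (Finset.filter_subset _ _)
    have h2 := Finset.card_image_le (s := B) (f := fun b => b / m)
    exact_mod_cast le_trans h1 h2
  have hjrange : ∀ β ∈ Bneg, 0 ≤ 1 + idxB β ∧ 1 + idxB β < n := by
    intro β hβ
    have h1 := hidxB0 β
    have h2 := hidxBlt β hβ
    omega
  have hidxBmono : ∀ β ∈ Bneg, ∀ β' ∈ Bneg, β < β' → idxB β < idxB β' := by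
    intro a ha a' ha' hlt
    simp only [hidxBdef]
    have : (Bneg.filter (fun x => x < a)) ⊂ (Bneg.filter (fun x => x < a')) := by
      constructor
      · intro x hx
        simp only [Finset.mem_filter] at hx ⊢
        exact ⟨hx.1, by omega⟩
      · intro hsub
        have : a ∈ Bneg.filter (fun x => x < a) := hsub (by simp [Finset.mem_filter, ha, hlt])
        simp [Finset.mem_filter] at this
    exact_mod_cast Finset.card_lt_card this
  have hidxBinj : ∀ β ∈ Bneg, ∀ β' ∈ Bneg, idxB β = idxB β' → β = β' := by
    intro a ha a' ha' heq
    rcases lt_trichotomy a a' with h | h | h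
    · have := hidxBmono a ha a' ha' h; omega
    · exact h
    · have := hidxBmono a' ha' a ha h; omega
  -- the u function
  set u : ℤ → ℤ := uF ft with hudef
  have hu0 : u 0 = 0 := by simp [hudef, uF]
  have hurange : ∀ j, 0 ≤ j → j < n → 0 ≤ u j ∧ u j + ft < m := by
    intro j h1 h2
    exact uF_range hf₁ hbound h1 h2
  have huinj : ∀ i j, 0 ≤ i → 0 ≤ j → u i = u j → i = j := by
    intro i j hi hj h
    exact uF_inj hf₁ hi hj h
  have hune : ∀ i j, 0 ≤ i → 0 ≤ j → u i ≠ u j + ft := by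
    intro i j hi hj
    exact uF_ne hf₁ hi hj
  have hu0range : 0 ≤ u 0 ∧ u 0 + ft < m := hurange 0 le_rfl (by omega)
  -- the complement set W
  set W : Set ℤ := {y : ℤ |
      (y ≤ 0 ∧ y % m ≠ u 0 ∧ y % m ≠ u 0 + ft ∧
        ∀ β ∈ Bneg, y % m ≠ u (1 + idxB β) ∧ y % m ≠ u (1 + idxB β) + ft)
    ∨ (y = u 0 + ft)
    ∨ (∃ v : ℤ, y = u 0 + m * v ∧ v ≤ -amax - 1 ∧
        ∀ a ∈ A, ∀ a' ∈ A, a' ≠ a → v ≠ E a + a - a')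
    ∨ (∃ β ∈ Bneg, y = u (1 + idxB β) + ft)
    ∨ (∃ β ∈ Bneg, ∃ v : ℤ, y = u (1 + idxB β) + m * v ∧ v ≤ -amin - 1 ∧
        ∀ a ∈ A, v ≠ β - a)} with hWdef
  -- master trace lemma for "point" classes  u j + ft
  have M1 : ∀ j v : ℤ, (j = 0 ∨ ∃ β ∈ Bneg, j = 1 + idxB β) → (u j + ft + m * v) ∈ W → v = 0 := by
    intro j v hj hv
    have hj0 : 0 ≤ j ∧ j < n := by
      rcases hj with rfl | ⟨β, hβ, rfl⟩
      · omega
      · exact hjrange β hβ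
    have hr := hurange j hj0.1 hj0.2
    have h0 : 0 ≤ u j + ft := by have := hr.1; omega
    have h1 : u j + ft < m := hr.2
    simp only [hWdef, Set.mem_setOf_eq] at hv
    rcases hv with ⟨hy, hne1, hne2, hne3⟩ | hy | ⟨v', hy, _, _⟩ | ⟨β', hβ', hy⟩ | ⟨β', hβ', v', hy, _, _⟩
    · have hmod : (u j + ft + m * v) % m = u j + ft := emod_helper v h0 h1
      rcases hj with rfl | ⟨β, hβ, rfl⟩
      · exact absurd hmod hne2
      · exact absurd hmod (hne3 β hβ).2
    · have := class_eq h0 h1 (by linarith [hu0range.1]) hu0range.2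
        (show u j + ft + m * v = (u 0 + ft) + m * 0 by linarith)
      exact this.2
    · have h2 := hurange 0 le_rfl (by omega)
      have := class_eq h0 h1 h2.1 (by linarith [h2.2])
        (show u j + ft + m * v = u 0 + m * v' from hy)
      exact absurd this.1.symm (hune 0 j le_rfl hj0.1)
    · have hjr := hjrange β' hβ'
      have h2 := hurange _ hjr.1 hjr.2
      have := class_eq h0 h1 (by linarith [h2.1]) h2.2
        (show u j + ft + m * v = (u (1 + idxB β') + ft) + m * 0 by linarith)
      exact this.2
    · have hjr := hjrange β' hβ'
      have h2 := hurange _ hjr.1 hjr.2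
      have := class_eq h0 h1 h2.1 (by linarith [h2.2])
        (show u j + ft + m * v = u (1 + idxB β') + m * v' from hy)
      exact absurd this.1.symm (hune (1 + idxB β') j hjr.1 hj0.1)
  -- master trace lemma for "ray" classes  u j
  have M2 : ∀ j v : ℤ, (j = 0 ∨ ∃ β ∈ Bneg, j = 1 + idxB β) → (u j + m * v) ∈ W →
      (j = 0 → v ≤ -amax - 1 ∧ ∀ a ∈ A, ∀ a' ∈ A, a' ≠ a → v ≠ E a + a - a') ∧
      (∀ β ∈ Bneg, j = 1 + idxB β → v ≤ -amin - 1 ∧ ∀ a ∈ A, v ≠ β - a) := by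
    intro j v hj hv
    have hj0 : 0 ≤ j ∧ j < n := by
      rcases hj with rfl | ⟨β, hβ, rfl⟩
      · omega
      · exact hjrange β hβ
    have hr := hurange j hj0.1 hj0.2
    have h0 : 0 ≤ u j := hr.1
    have h1 : u j < m := by have := hr.2; omega
    simp only [hWdef, Set.mem_setOf_eq] at hv
    rcases hv with ⟨hy, hne1, hne2, hne3⟩ | hy | ⟨v', hy, hc1, hc2⟩ | ⟨β', hβ', hy⟩ | ⟨β', hβ', v', hy, hc1, hc2⟩
    · have hmod : (u j + m * v) % m = u j := emod_helper v h0 h1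
      rcases hj with rfl | ⟨β, hβ, rfl⟩
      · exact absurd hmod hne1
      · exact absurd hmod (hne3 β hβ).1
    · have := class_eq h0 h1 (by linarith [hu0range.1]) hu0range.2
        (show u j + m * v = (u 0 + ft) + m * 0 by linarith)
      exact absurd this.1 (hune j 0 hj0.1 le_rfl)
    · have h2 := hurange 0 le_rfl (by omega)
      have hce := class_eq h0 h1 h2.1 (by linarith [h2.2])
        (show u j + m * v = u 0 + m * v' from hy)
      have hjeq : j = 0 := huinj j 0 hj0.1 le_rfl hce.1
      constructor
      · intro _
        exact hce.2 ▸ ⟨hc1, hc2⟩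
      · intro β hβ hjeq2
        exfalso
        have := hidxB0 β
        omega
    · have hjr := hjrange β' hβ'
      have h2 := hurange _ hjr.1 hjr.2
      have := class_eq h0 h1 (by linarith [h2.1]) h2.2
        (show u j + m * v = (u (1 + idxB β') + ft) + m * 0 by linarith)
      exact absurd this.1 (hune j (1 + idxB β') hj0.1 hjr.1)
    · have hjr := hjrange β' hβ'
      have h2 := hurange _ hjr.1 hjr.2
      have hce := class_eq h0 h1 h2.1 (by linarith [h2.2])
        (show u j + m * v = u (1 + idxB β') + m * v' from hy)
      have hjeq : j = 1 + idxB β' := huinj _ _ hj0.1 hjr.1 hce.1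
      constructor
      · intro hjeq2
        exfalso
        have := hidxB0 β'
        omega
      · intro β hβ hjeq2
        have hββ' : β = β' := hidxBinj β hβ β' hβ' (by omega)
        subst hββ'
        exact hce.2 ▸ ⟨hc1, hc2⟩
  -- coverage helper for the pair-0 ray class
  have hCOV0 : ∀ v : ℤ, v ≤ -1 → ∃ a ∈ A, v - a ≤ -amax - 1 ∧
      ∀ a₁ ∈ A, ∀ a' ∈ A, a' ≠ a₁ → v - a ≠ E a₁ + a₁ - a' := by
    intro v hv
    rcases le_or_gt v (-d - 1) with hcase | hcase
    · by_contra hcon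
      push_neg at hcon
      have hcut : ∀ a ∈ A, v - a ≤ -amax - 1 := by
        intro a ha
        have := (hbnds a ha).1
        simp only [hddef] at hcase
        linarith
      obtain ⟨p, hp, p', hp', hpne, hpeq⟩ :=
        hcon amin (A.min'_mem hAne) (hcut _ (A.min'_mem hAne))
      have hstep : ∀ a ∈ A, a + (E p + p - v) ∈ A ∧ a + (E p + p - v) ≠ p := by
        intro a ha
        obtain ⟨a₁, ha₁, a', ha', hne, heq⟩ := hcon a ha (hcut a ha)
        have ha₁p : a₁ = p := by
          by_contra hne2
          have hbb := hbnds a ha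
          have hbb2 := hbnds a' ha'
          have hbb1 := hbnds a₁ ha₁
          have hbbp := hbnds p hp
          have hbbp' := hbnds p' hp'
          have hbmin := hbnds amin (A.min'_mem hAne)
          rcases hEsep a₁ ha₁ p hp hne2 with hsep | hsep
          · linarith
          · linarith
        subst ha₁p
        have heq2 : a + (E a₁ + a₁ - v) = a' := by linarith
        rw [heq2]
        exact ⟨ha', hne⟩
      have h1 := (hbnds _ (hstep amax (A.max'_mem hAne)).1).2
      have h2 := (hbnds _ (hstep amin (A.min'_mem hAne)).1).1
      have hc0 : E p + p - v = 0 := by linarith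
      have h3 := (hstep p hp).2
      rw [hc0] at h3
      exact h3 (by ring)
    · refine ⟨amax, A.max'_mem hAne, by linarith, ?_⟩
      intro a₁ ha₁ a' ha' hne heq
      have h1 := hEub a₁
      have hb1 := hbnds a₁ ha₁
      have hb2 := hbnds a' ha'
      simp only [hSdef] at h1
      linarith
  -- coverage helper for the pair-i ray classes
  have hCOVi : ∀ β v : ℤ, v ≤ -1 → v ≠ β → ∃ a ∈ A, v - a ≤ -amin - 1 ∧
      ∀ a' ∈ A, v - a ≠ β - a' := by
    intro β v hv hvβ
    by_contra hcon
    push_neg at hcon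
    have hcut : ∀ a ∈ A, v - a ≤ -amin - 1 := by
      intro a ha
      have := (hbnds a ha).1
      linarith
    have hstep : ∀ a ∈ A, a + (β - v) ∈ A := by
      intro a ha
      obtain ⟨a', ha', heq⟩ := hcon a ha (hcut a ha)
      have h2 : a + (β - v) = a' := by linarith
      rw [h2]; exact ha'
    have h1 := (hbnds _ (hstep amax (A.max'_mem hAne))).2
    have h2 := (hbnds _ (hstep amin (A.min'_mem hAne))).1
    exact hvβ (by linarith)
  -- C and membership helpers
  set C : Set ℤ := {x : ℤ | ∃ k : ℕ, x = m * k} ∪ ↑B ∪ F with hCdef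
  have hCM : ∀ v : ℤ, 0 ≤ v → m * v ∈ C := by
    intro v hv
    refine Set.mem_union_left _ (Set.mem_union_left _ ⟨v.toNat, ?_⟩)
    simp [Int.toNat_of_nonneg hv]
  have hCB : ∀ b ∈ B, b ∈ C := fun b hb =>
    Set.mem_union_left _ (Set.mem_union_right _ (Finset.mem_coe.mpr hb))
  have hCF : ∀ f' ∈ F, f' ∈ C := fun f' hf => Set.mem_union_right _ hf
  -- W introduction helpers
  have hWpoint0 : (u 0 + ft) ∈ W := by
    rw [hWdef]; exact Or.inr (Or.inl rfl)
  have hWu0ray : ∀ v' : ℤ, v' ≤ -amax - 1 →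
      (∀ a ∈ A, ∀ a' ∈ A, a' ≠ a → v' ≠ E a + a - a') → (u 0 + m * v') ∈ W := by
    intro v' h1 h2
    rw [hWdef]
    exact Or.inr (Or.inr (Or.inl ⟨v', rfl, h1, h2⟩))
  have hWtip : ∀ β ∈ Bneg, (u (1 + idxB β) + ft) ∈ W := by
    intro β hβ
    rw [hWdef]
    exact Or.inr (Or.inr (Or.inr (Or.inl ⟨β, hβ, rfl⟩)))
  have hWuiray : ∀ β ∈ Bneg, ∀ v' : ℤ, v' ≤ -amin - 1 →
      (∀ a ∈ A, v' ≠ β - a) → (u (1 + idxB β) + m * v') ∈ W := by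
    intro β hβ v' h1 h2
    rw [hWdef]
    exact Or.inr (Or.inr (Or.inr (Or.inr ⟨β, hβ, v', rfl, h1, h2⟩)))
  have hWgen : ∀ y : ℤ, y ≤ 0 → y % m ≠ u 0 → y % m ≠ u 0 + ft →
      (∀ β ∈ Bneg, y % m ≠ u (1 + idxB β) ∧ y % m ≠ u (1 + idxB β) + ft) → y ∈ W := by
    intro y h1 h2 h3 h4
    rw [hWdef]
    exact Or.inl ⟨h1, h2, h3, h4⟩
  -- coverage
  have hCOV : ∀ z : ℤ, ∃ c ∈ C, z - c ∈ W := by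
    intro z
    have hz := Int.mul_ediv_add_emod z m
    have hρ0 : 0 ≤ z % m := Int.emod_nonneg z hmne
    have hρm : z % m < m := Int.emod_lt_of_pos z hm0
    set ρ := z % m with hρdef
    set v := z / m with hvdef
    have hzeq : z = ρ + m * v := by linarith
    by_cases hc1 : ρ = u 0 + ft
    · rcases le_or_gt 0 v with hv0 | hv0
      · refine ⟨m * v, hCM v hv0, ?_⟩
        have he : z - m * v = u 0 + ft := by rw [hzeq, hc1]; ring
        rw [he]; exact hWpoint0
      · obtain ⟨a, ha, hcut, hholes⟩ := hCOV0 v (by linarith)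
        obtain ⟨f', hf', hfa⟩ := hAelem a ha
        refine ⟨f', hCF f' hf', ?_⟩
        have he : z - f' = u 0 + m * (v - a) := by rw [hzeq, hc1, hfa]; ring
        rw [he]; exact hWu0ray (v - a) hcut hholes
    · by_cases hc2 : ρ = u 0
      · have hv'2 : min (min v (-amax - 1)) (-amax - 2 - d - Gb - S * (1 + K) - d - 1) ≤ -amax - 1 :=
          le_trans (min_le_left _ _) (min_le_right _ _)
        have hv'1 : min (min v (-amax - 1)) (-amax - 2 - d - Gb - S * (1 + K) - d - 1) ≤ v :=
          le_trans (min_le_left _ _) (min_le_left _ _)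
        have hv'3 : min (min v (-amax - 1)) (-amax - 2 - d - Gb - S * (1 + K) - d - 1) ≤
            -amax - 2 - d - Gb - S * (1 + K) - d - 1 := min_le_right _ _
        set v' := min (min v (-amax - 1)) (-amax - 2 - d - Gb - S * (1 + K) - d - 1) with hv'def
        refine ⟨m * (v - v'), hCM _ (by linarith), ?_⟩
        have he : z - m * (v - v') = u 0 + m * v' := by rw [hzeq, hc2]; ring
        rw [he]
        refine hWu0ray v' hv'2 ?_
        intro a ha a' ha' hne heq
        have h1 := hElb a
        have hb1 := hbnds a ha
        have hb2 := hbnds a' ha'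
        linarith
      · by_cases hc3 : ∃ β ∈ Bneg, ρ = u (1 + idxB β) + ft
        · obtain ⟨β, hβ, hρeq⟩ := hc3
          rcases le_or_gt 0 v with hv0 | hv0
          · refine ⟨m * v, hCM v hv0, ?_⟩
            have he : z - m * v = u (1 + idxB β) + ft := by rw [hzeq, hρeq]; ring
            rw [he]; exact hWtip β hβ
          · by_cases hvβ : v = β
            · obtain ⟨hβneg, ⟨b, hb, hbeq⟩, _⟩ := hBnegmem β hβ
              refine ⟨b, hCB b hb, ?_⟩
              have he : z - b = u (1 + idxB β) + ft := by rw [hzeq, hρeq, hbeq, hvβ]; ring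
              rw [he]; exact hWtip β hβ
            · obtain ⟨a, ha, hcut, hholes⟩ := hCOVi β v (by linarith) hvβ
              obtain ⟨f', hf', hfa⟩ := hAelem a ha
              refine ⟨f', hCF f' hf', ?_⟩
              have he : z - f' = u (1 + idxB β) + m * (v - a) := by rw [hzeq, hρeq, hfa]; ring
              rw [he]; exact hWuiray β hβ (v - a) hcut hholes
        · by_cases hc4 : ∃ β ∈ Bneg, ρ = u (1 + idxB β)
          · obtain ⟨β, hβ, hρeq⟩ := hc4
            have hv'2 : min (min v (-amin - 1)) (β - amax - 1) ≤ -amin - 1 :=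
              le_trans (min_le_left _ _) (min_le_right _ _)
            have hv'1 : min (min v (-amin - 1)) (β - amax - 1) ≤ v :=
              le_trans (min_le_left _ _) (min_le_left _ _)
            have hv'3 : min (min v (-amin - 1)) (β - amax - 1) ≤ β - amax - 1 := min_le_right _ _
            set v' := min (min v (-amin - 1)) (β - amax - 1) with hv'def
            refine ⟨m * (v - v'), hCM _ (by linarith), ?_⟩
            have he : z - m * (v - v') = u (1 + idxB β) + m * v' := by rw [hzeq, hρeq]; ring
            rw [he]
            refine hWuiray β hβ v' hv'2 ?_
            intro a ha heq
            have hb1 := hbnds a ha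
            linarith
          · push_neg at hc3 hc4
            refine ⟨m * (z.toNat : ℤ), hCM _ (Int.natCast_nonneg _), ?_⟩
            have hw0 : z - m * (z.toNat : ℤ) ≤ 0 := by
              have h1 : z ≤ (z.toNat : ℤ) := Int.self_le_toNat z
              have h2 : (1:ℤ) * (z.toNat : ℤ) ≤ m * (z.toNat : ℤ) :=
                mul_le_mul_of_nonneg_right (by omega) (Int.natCast_nonneg _)
              linarith
            have hwmod : (z - m * (z.toNat : ℤ)) % m = ρ := by
              have he : z - m * (z.toNat : ℤ) = z + m * (-(z.toNat : ℤ)) := by ring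
              rw [he, Int.add_mul_emod_self_left]
            refine hWgen _ hw0 (by rw [hwmod]; exact hc2) (by rw [hwmod]; exact hc1) ?_
            intro β hβ
            exact ⟨by rw [hwmod]; exact hc4 β hβ, by rw [hwmod]; exact hc3 β hβ⟩
  -- witnesses: every element of C is necessary
  have hWIT : ∀ c ∈ C, ∃ x : ℤ, ∀ c' ∈ C, x - c' ∈ W → c' = c := by
    intro c hc
    simp only [hCdef, Set.mem_union, Set.mem_setOf_eq, Finset.mem_coe] at hc
    rcases hc with (⟨k, hk⟩ | hb) | hf
    · -- c = m * k
      subst hk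
      refine ⟨u 0 + ft + m * k, ?_⟩
      intro c' hc' hw
      simp only [hCdef, Set.mem_union, Set.mem_setOf_eq, Finset.mem_coe] at hc'
      rcases hc' with (⟨k', hk'⟩ | hb') | hf'
      · subst hk'
        have hw' : u 0 + ft + m * ((k : ℤ) - (k' : ℤ)) ∈ W := by
          have he : u 0 + ft + m * ((k : ℤ) - (k' : ℤ)) = u 0 + ft + m * k - m * k' := by ring
          rw [he]; exact hw
        have h0 := M1 0 _ (Or.inl rfl) hw'
        have h1 : (k' : ℤ) = (k : ℤ) := by linarith
        rw [h1]
      · have hmb : m * (c' / m) = c' := Int.mul_ediv_cancel' (hBdvd c' hb')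
        have hw' : u 0 + ft + m * ((k : ℤ) - c' / m) ∈ W := by
          have he : u 0 + ft + m * ((k : ℤ) - c' / m) = u 0 + ft + m * k - c' := by
            linear_combination -hmb
          rw [he]; exact hw
        have h0 := M1 0 _ (Or.inl rfl) hw'
        have h1 : c' / m = (k : ℤ) := by linarith
        rw [← hmb, h1]
      · exfalso
        have haf : c' = ft + m * ((c' - ft) / m) := ((hAmem c' hf').1).symm
        have haA := (hAmem c' hf').2
        have hw' : u 0 + m * ((k : ℤ) - (c' - ft) / m) ∈ W := by
          have he : u 0 + m * ((k : ℤ) - (c' - ft) / m) = u 0 + ft + m * k - c' := by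
            nth_rewrite 2 [haf]; ring
          rw [he]; exact hw
        have h0 := (M2 0 _ (Or.inl rfl) hw').1 rfl
        have h1 := (hbnds _ haA).2
        have h2 : (0:ℤ) ≤ (k : ℤ) := Int.natCast_nonneg _
        linarith [h0.1]
    · -- c = b ∈ B
      have hmb : m * (c / m) = c := Int.mul_ediv_cancel' (hBdvd c hb)
      rcases le_or_gt 0 (c / m) with hβ0 | hβ0
      · refine ⟨u 0 + ft + m * (c / m), ?_⟩
        intro c' hc' hw
        simp only [hCdef, Set.mem_union, Set.mem_setOf_eq, Finset.mem_coe] at hc'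
        rcases hc' with (⟨k', hk'⟩ | hb') | hf'
        · subst hk'
          have hw' : u 0 + ft + m * (c / m - (k' : ℤ)) ∈ W := by
            have he : u 0 + ft + m * (c / m - (k' : ℤ)) = u 0 + ft + m * (c / m) - m * k' := by
              ring
            rw [he]; exact hw
          have h0 := M1 0 _ (Or.inl rfl) hw'
          have h1 : (k' : ℤ) = c / m := by linarith
          rw [h1, hmb]
        · have hmb' : m * (c' / m) = c' := Int.mul_ediv_cancel' (hBdvd c' hb')
          have hw' : u 0 + ft + m * (c / m - c' / m) ∈ W := by
            have he : u 0 + ft + m * (c / m - c' / m) = u 0 + ft + m * (c / m) - c' := by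
              linear_combination -hmb'
            rw [he]; exact hw
          have h0 := M1 0 _ (Or.inl rfl) hw'
          have h1 : c' / m = c / m := by linarith
          rw [← hmb', h1, hmb]
        · exfalso
          have haf : c' = ft + m * ((c' - ft) / m) := ((hAmem c' hf').1).symm
          have haA := (hAmem c' hf').2
          have hw' : u 0 + m * (c / m - (c' - ft) / m) ∈ W := by
            have he : u 0 + m * (c / m - (c' - ft) / m) = u 0 + ft + m * (c / m) - c' := by
              nth_rewrite 2 [haf]; ring
            rw [he]; exact hw
          have h0 := (M2 0 _ (Or.inl rfl) hw').1 rfl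
          have h1 := (hbnds _ haA).2
          linarith [h0.1]
      · -- c / m < 0 : the Bneg pair
        have hβmem : c / m ∈ Bneg := by
          simp only [hBnegdef, Finset.mem_filter, Finset.mem_image]
          exact ⟨⟨c, hb, rfl⟩, hβ0⟩
        have hjform : (1 + idxB (c / m) = 0 ∨ ∃ β ∈ Bneg, 1 + idxB (c / m) = 1 + idxB β) :=
          Or.inr ⟨c / m, hβmem, rfl⟩
        refine ⟨u (1 + idxB (c / m)) + ft + m * (c / m), ?_⟩
        intro c' hc' hw
        simp only [hCdef, Set.mem_union, Set.mem_setOf_eq, Finset.mem_coe] at hc'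
        rcases hc' with (⟨k', hk'⟩ | hb') | hf'
        · exfalso
          subst hk'
          have hw' : u (1 + idxB (c / m)) + ft + m * (c / m - (k' : ℤ)) ∈ W := by
            have he : u (1 + idxB (c / m)) + ft + m * (c / m - (k' : ℤ)) =
                u (1 + idxB (c / m)) + ft + m * (c / m) - m * k' := by ring
            rw [he]; exact hw
          have h0 := M1 _ _ hjform hw'
          have h2 : (0:ℤ) ≤ (k' : ℤ) := Int.natCast_nonneg _
          linarith
        · have hmb' : m * (c' / m) = c' := Int.mul_ediv_cancel' (hBdvd c' hb')
          have hw' : u (1 + idxB (c / m)) + ft + m * (c / m - c' / m) ∈ W := by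
            have he : u (1 + idxB (c / m)) + ft + m * (c / m - c' / m) =
                u (1 + idxB (c / m)) + ft + m * (c / m) - c' := by
              linear_combination -hmb'
            rw [he]; exact hw
          have h0 := M1 _ _ hjform hw'
          have h1 : c' / m = c / m := by linarith
          rw [← hmb', h1, hmb]
        · exfalso
          have haf : c' = ft + m * ((c' - ft) / m) := ((hAmem c' hf').1).symm
          have haA := (hAmem c' hf').2
          have hw' : u (1 + idxB (c / m)) + m * (c / m - (c' - ft) / m) ∈ W := by
            have he : u (1 + idxB (c / m)) + m * (c / m - (c' - ft) / m) =
                u (1 + idxB (c / m)) + ft + m * (c / m) - c' := by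
              nth_rewrite 2 [haf]; ring
            rw [he]; exact hw
          have h0 := ((M2 _ _ hjform hw').2 (c / m) hβmem rfl).2 _ haA
          exact h0 rfl
    · -- c = f' ∈ F
      have haf : c = ft + m * ((c - ft) / m) := ((hAmem c hf).1).symm
      have haA := (hAmem c hf).2
      set a : ℤ := (c - ft) / m with hadef
      refine ⟨u 0 + ft + m * (E a + a), ?_⟩
      intro c' hc' hw
      simp only [hCdef, Set.mem_union, Set.mem_setOf_eq, Finset.mem_coe] at hc'
      rcases hc' with (⟨k', hk'⟩ | hb') | hf'
      · exfalso
        subst hk'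
        have hw' : u 0 + ft + m * (E a + a - (k' : ℤ)) ∈ W := by
          have he : u 0 + ft + m * (E a + a - (k' : ℤ)) =
              u 0 + ft + m * (E a + a) - m * k' := by ring
          rw [he]; exact hw
        have h0 := M1 0 _ (Or.inl rfl) hw'
        have h1 := hEub a
        have h2 := (hbnds _ haA).2
        have h3 : (0:ℤ) ≤ (k' : ℤ) := Int.natCast_nonneg _
        simp only [hSdef] at h1
        linarith
      · exfalso
        have hmb' : m * (c' / m) = c' := Int.mul_ediv_cancel' (hBdvd c' hb')
        have hw' : u 0 + ft + m * (E a + a - c' / m) ∈ W := by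
          have he : u 0 + ft + m * (E a + a - c' / m) =
              u 0 + ft + m * (E a + a) - c' := by linear_combination -hmb'
          rw [he]; exact hw
        have h0 := M1 0 _ (Or.inl rfl) hw'
        have h1 := hEub a
        have h2 := (hbnds _ haA).2
        have h3 := abs_le.mp (hβbound c' hb')
        simp only [hSdef] at h1
        linarith [h3.1]
      · have haf' : c' = ft + m * ((c' - ft) / m) := ((hAmem c' hf').1).symm
        have haA' := (hAmem c' hf').2
        have hw' : u 0 + m * (E a + a - (c' - ft) / m) ∈ W := by
          have he : u 0 + m * (E a + a - (c' - ft) / m) =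
              u 0 + ft + m * (E a + a) - c' := by
            nth_rewrite 2 [haf']; ring
          rw [he]; exact hw
        have h0 := (M2 0 _ (Or.inl rfl) hw').1 rfl
        by_cases haa : (c' - ft) / m = a
        · rw [haf', haa, ← haf]
        · exact absurd rfl (h0.2 a haA ((c' - ft) / m) haA' haa)
  -- assemble
  refine ⟨W, ?_, ?_⟩
  · apply Set.eq_univ_of_forall
    intro z
    obtain ⟨c, hcC, hcW⟩ := hCOV z
    exact Set.mem_add.mpr ⟨c, hcC, z - c, hcW, by ring⟩
  · intro C' hC' heq
    obtain ⟨c, hcC, hcnC'⟩ := Set.exists_of_ssubset hC'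
    obtain ⟨x, hx⟩ := hWIT c hcC
    have hxmem : x ∈ C' + W := by rw [heq]; exact Set.mem_univ x
    obtain ⟨c', hc', w, hw, hsum⟩ := Set.mem_add.mp hxmem
    have hceq : c' = c := hx c' (hC'.subset hc') (by rw [show x - c' = w by linarith]; exact hw)
    exact hcnC' (hceq ▸ hc')
end

section
/- Let Â, B̂, F̂ be finite subsets of ℤ × ℤ such that F̂ is nonempty, the x-coordinates of distinct elements of Â are distinct, B̂_/ ⊆ Â_/, and F̂_/ ∩ Â_/ = ∅. Let D = Â_/ ∪ B̂_/ ∪ F̂_/ and suppose there exist W₀ ⊆ ℤ and integers a ≤ b with D + W₀ = {a, a+1, …, b}; set ℓ = b − a + 1. If m is a positive integer with m ≥ (ℓ + 1)·(|Â| + |B̂| + |F̂_/|), then the set C_m = {x + m(y + n) : (x,y) ∈ Â, n ∈ ℕ} ∪ π_m(B̂) ∪ π_m(F̂) arises as a minimal additive complement in ℤ. -/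
open Pointwise

/-- The eventually periodic set of period `m` determined by the patterns
`Ahat` (heads of the arithmetic progressions), `Bhat`, `Fhat`. -/
def patternSet (Ahat Bhat Fhat : Finset (ℤ × ℤ)) (m : ℤ) : Set ℤ :=
  {z : ℤ | ∃ p ∈ Ahat, ∃ n : ℕ, z = p.1 + m * (p.2 + n)} ∪
    ((fun p : ℤ × ℤ => p.1 + m * p.2) '' ↑Bhat) ∪
    ((fun p : ℤ × ℤ => p.1 + m * p.2) '' ↑Fhat)



lemma int_eq_of_small {m A B k : ℤ} (hm : 0 < m) (h : A - B = m * k)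
    (h1 : -m < A - B) (h2 : A - B < m) : A = B ∧ k = 0 := by
  have hk : k = 0 := by
    rcases lt_trichotomy k 0 with hk | hk | hk
    · have : m * k ≤ m * (-1) := by
        apply mul_le_mul_of_nonneg_left (by omega) hm.le
      omega
    · exact hk
    · have : m * 1 ≤ m * k := by
        apply mul_le_mul_of_nonneg_left (by omega) hm.le
      omega
  constructor
  · rw [hk, mul_zero] at h; omega
  · exact hk

lemma exists_shift_not_mem (F : Finset ℤ) (hF : F.Nonempty) {d : ℤ} (hd : d ≠ 0) :
    ∃ y ∈ F, y + d ∉ F := by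
  rcases lt_or_gt_of_ne hd with h | h
  · exact ⟨F.min' hF, F.min'_mem hF, fun hc => absurd (F.min'_le _ hc) (by omega)⟩
  · exact ⟨F.max' hF, F.max'_mem hF, fun hc => absurd (F.le_max' _ hc) (by omega)⟩

lemma Flemma (F : Finset ℤ) (hF : F.Nonempty) :
    ∃ (S : Set ℤ) (wt : ℤ → ℤ),
      (∀ t : ℤ, ∃ y ∈ F, ∃ s ∈ S, y + s = t) ∧
      (∀ y ∈ F, ∀ y' ∈ F, ∀ s ∈ S, y' + s = wt y → y' = y) := by
  classical
  set m₀ := F.min' hF with hm₀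
  set M₀ := F.max' hF with hM₀
  have hdiam : ∀ y ∈ F, m₀ ≤ y ∧ y ≤ M₀ := fun y hy => ⟨F.min'_le y hy, F.le_max' y hy⟩
  set G : ℤ := 2*(M₀ - m₀) + 1 with hG
  have hm₀M₀ : m₀ ≤ M₀ := (hdiam _ (F.min'_mem hF)).2
  have hGpos : 0 < G := by omega
  set wt : ℤ → ℤ := fun y => y + (y - m₀) * G with hwt
  set Wits : Set ℤ := {w | ∃ y ∈ F, wt y = w} with hWits
  set S : Set ℤ := {s | ∃ y ∈ F, s = (y - m₀) * G} ∪ {s | ∀ y ∈ F, y + s ∉ Wits} with hS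
  -- spacing of wits
  have hspace : ∀ y₁ ∈ F, ∀ y₂ ∈ F, wt y₁ - wt y₂ = (y₁ - y₂) * (G + 1) := by
    intro y₁ _ y₂ _; simp only [hwt]; ring
  refine ⟨S, wt, ?_, ?_⟩
  · intro t
    by_cases hw : t ∈ Wits
    · obtain ⟨y, hy, hwy⟩ := hw
      exact ⟨y, hy, (y - m₀) * G, Or.inl ⟨y, hy, rfl⟩, hwy⟩
    · by_cases hnear : ∃ y₂ ∈ F, wt y₂ - t ≤ M₀ - m₀ ∧ t - wt y₂ ≤ M₀ - m₀
      · obtain ⟨y₂, hy₂, hn1, hn2⟩ := hnear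
        have hd : wt y₂ - t ≠ 0 := by
          intro h0
          exact hw ⟨y₂, hy₂, by omega⟩
        obtain ⟨y, hy, hynot⟩ := exists_shift_not_mem F hF hd
        refine ⟨y, hy, t - y, Or.inr ?_, by ring⟩
        intro y' hy' ⟨y₃, hy₃, hwy₃⟩
        -- wt y₃ = y' + (t - y)
        have hb1 := hdiam y hy
        have hb2 := hdiam y' hy'
        have hb3 := hdiam y₂ hy₂
        have h3 : wt y₃ - t = y' - y := by omega
        -- y₃ = y₂ by spacing
        have hy32 : y₃ = y₂ := by
          by_contra hne
          have hsp := hspace y₃ hy₃ y₂ hy₂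
          rcases lt_trichotomy (y₃ - y₂) 0 with hc | hc | hc
          · have : (y₃ - y₂) * (G+1) ≤ (-1) * (G+1) := by
              apply mul_le_mul_of_nonneg_right (by omega) (by omega)
            omega
          · omega
          · have : (1:ℤ) * (G+1) ≤ (y₃ - y₂) * (G+1) := by
              apply mul_le_mul_of_nonneg_right (by omega) (by omega)
            omega
        rw [hy32] at hwy₃
        -- y' = y + (wt y₂ - t) ∈ F contradicting hynot
        have : y + (wt y₂ - t) = y' := by omega
        exact hynot (by rwa [this])
      · refine ⟨M₀, F.max'_mem hF, t - M₀, Or.inr ?_, by ring⟩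
        intro y' hy' ⟨y₃, hy₃, hwy₃⟩
        have hb2 := hdiam y' hy'
        exact hnear ⟨y₃, hy₃, by omega, by omega⟩
  · intro y hy y' hy' s hs heq
    rcases hs with ⟨y₂, hy₂, rfl⟩ | hsafe
    · have hb1 := hdiam y hy
      have hb2 := hdiam y' hy'
      have hb3 := hdiam y₂ hy₂
      -- y' + (y₂ - m₀) G = y + (y - m₀) G  ⇒ y' - y = (y - y₂) G
      have hkey : y' - y = (y - y₂) * G := by
        have : y' + (y₂ - m₀) * G = y + (y - m₀) * G := heq
        nlinarith [this]
      have hy2y : y₂ = y := by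
        rcases lt_trichotomy (y - y₂) 0 with hc | hc | hc
        · have : (y - y₂) * G ≤ (-1) * G := by
            apply mul_le_mul_of_nonneg_right (by omega) (by omega)
          omega
        · omega
        · have : (1:ℤ) * G ≤ (y - y₂) * G := by
            apply mul_le_mul_of_nonneg_right (by omega) (by omega)
          omega
      rw [hy2y] at hkey; omega
    · exfalso
      apply hsafe y' hy'
      rw [heq]
      exact ⟨y, hy, rfl⟩


lemma core
    (m ℓ K a b α : ℤ) (C W₀ : Set ℤ) (D : Finset ℤ) (L : ℤ → Set ℤ)
    {ι : Type} (𝒢 : Finset ι) (slot colx : ι → ℤ) (S S₀ : ι → Set ℤ) (x₀ : ℤ)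
    (hm0 : 0 < m) (hℓ : 1 ≤ ℓ) (hK : 1 ≤ K) (hmK : (ℓ+1) * K ≤ m)
    (hb : b = a + ℓ - 1)
    (hL : ∀ x y : ℤ, y ∈ L x ↔ x + m * y ∈ C)
    (hwin : ∀ x ∈ D, α ≤ x ∧ x ≤ α + ℓ - 1)
    (hdecomp : ∀ c ∈ C, ∃ x ∈ D, ∃ y : ℤ, c = x + m * y)
    (hLne : ∀ x ∈ D, ∃ y : ℤ, y ∈ L x)
    (hsum : ∀ x ∈ D, ∀ w ∈ W₀, a ≤ x + w ∧ x + w ≤ b)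
    (hcov₀ : ∀ z : ℤ, a ≤ z → z ≤ b → ∃ x ∈ D, ∃ w ∈ W₀, x + w = z)
    (hx₀ : x₀ ∈ D)
    (hslotinj : ∀ g ∈ 𝒢, ∀ g' ∈ 𝒢, slot g = slot g' → g = g')
    (hslotb : ∀ g ∈ 𝒢, 0 ≤ slot g ∧ slot g ≤ K - 1)
    (hslotsurj : ∀ j : ℤ, 0 ≤ j → j < K → ∃ g ∈ 𝒢, slot g = j)
    (hcolD : ∀ g ∈ 𝒢, colx g ∈ D)
    (hgcov : ∀ g ∈ 𝒢, ∀ t : ℤ,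
      (∃ y ∈ L (colx g), ∃ s ∈ S g, y + s = t) ∨ (∃ y ∈ L x₀, ∃ s ∈ S₀ g, y + s = t))
    (hsel : ∀ x ∈ D, ∀ y ∈ L x, ∃ g ∈ 𝒢, colx g = x ∧ ∃ t0 : ℤ,
      (∀ y' ∈ L x, ∀ s ∈ S g, y' + s = t0 → y' = y) ∧
      (∀ y'' ∈ L x₀, ∀ s ∈ S₀ g, y'' + s ≠ t0)) :
    ∃ W : Set ℤ, IsMAC C W := by
  classical
  set γ : ι → ℤ := fun g => (ℓ+1) * slot g with hγ
  set Blocks : Set ℤ :=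
    {β | (∃ j : ℤ, 0 ≤ j ∧ j < K ∧ β = (ℓ+1)*j + 1) ∨ ((ℓ+1)*(K-1) + 1 ≤ β ∧ β ≤ m - ℓ)}
    with hBlocksDef
  have hKK : (ℓ+1)*(K-1) + (ℓ+1) = (ℓ+1)*K := by ring
  have hγb : ∀ g ∈ 𝒢, 0 ≤ γ g ∧ γ g ≤ (ℓ+1)*(K-1) := by
    intro g hg
    obtain ⟨h1, h2⟩ := hslotb g hg
    refine ⟨mul_nonneg (by linarith) h1, mul_le_mul_of_nonneg_left h2 (by linarith)⟩
  have hBb : ∀ β ∈ Blocks, 1 ≤ β ∧ β ≤ m - ℓ := by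
    intro β hβ
    rcases hβ with ⟨j, hj0, hjK, rfl⟩ | ⟨h1, h2⟩
    · have p1 : 0 ≤ (ℓ+1)*j := mul_nonneg (by linarith) hj0
      have p2 : (ℓ+1)*j ≤ (ℓ+1)*(K-1) := mul_le_mul_of_nonneg_left (by linarith) (by linarith)
      constructor <;> linarith
    · have p1 : 0 ≤ (ℓ+1)*(K-1) := mul_nonneg (by linarith) (by linarith)
      constructor <;> linarith
  have hBavoid : ∀ β ∈ Blocks, ∀ g ∈ 𝒢, ¬(β ≤ γ g ∧ γ g ≤ β + ℓ - 1) := by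
    rintro β hβ g hg ⟨ha1, ha2⟩
    obtain ⟨hs0, hs1⟩ := hslotb g hg
    have eγ : γ g = (ℓ+1) * slot g := rfl
    rcases hβ with ⟨j, hj0, hjK, rfl⟩ | ⟨h1, h2⟩
    · have hd : (ℓ+1)*(slot g) - (ℓ+1)*j = (ℓ+1)*(slot g - j) := by ring
      rcases lt_trichotomy (slot g - j) 0 with hc | hc | hc
      · have : (ℓ+1)*(slot g - j) ≤ (ℓ+1)*(-1) := mul_le_mul_of_nonneg_left (by linarith) (by linarith)
        rw [eγ] at ha1 ha2; linarith
      · rw [eγ] at ha1 ha2; have : slot g = j := by linarith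
        rw [this] at ha1; linarith
      · have : (ℓ+1)*1 ≤ (ℓ+1)*(slot g - j) := mul_le_mul_of_nonneg_left (by linarith) (by linarith)
        rw [eγ] at ha1 ha2; linarith
    · have := (hγb g hg).2
      linarith
  have hBcover : ∀ δ : ℤ, 0 ≤ δ → δ < m → (∀ g ∈ 𝒢, γ g ≠ δ) →
      ∃ β ∈ Blocks, β ≤ δ ∧ δ ≤ β + ℓ - 1 := by
    intro δ h0 h1 hno
    by_cases hcase : δ < (ℓ+1)*K
    · set j := δ / (ℓ+1) with hj
      set r := δ % (ℓ+1) with hr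
      have hdm : (ℓ+1) * j + r = δ := Int.mul_ediv_add_emod δ (ℓ+1)
      have hr0 : 0 ≤ r := Int.emod_nonneg δ (by omega)
      have hrl : r < ℓ+1 := Int.emod_lt_of_pos δ (by omega)
      have hj0 : 0 ≤ j := Int.ediv_nonneg h0 (by omega)
      have hjK : j < K := by
        by_contra hc
        push_neg at hc
        have : (ℓ+1)*K ≤ (ℓ+1)*j := mul_le_mul_of_nonneg_left hc (by linarith)
        linarith
      by_cases hr1 : r = 0
      · exfalso
        obtain ⟨g, hg, hgj⟩ := hslotsurj j hj0 hjK
        refine hno g hg ?_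
        have eγ : γ g = (ℓ+1) * slot g := rfl
        rw [eγ, hgj]; linarith
      · exact ⟨(ℓ+1)*j + 1, Or.inl ⟨j, hj0, hjK, rfl⟩, by omega, by omega⟩
    · push_neg at hcase
      refine ⟨min δ (m - ℓ), Or.inr ⟨?_, min_le_right _ _⟩, min_le_left _ _, ?_⟩
      · have h2 : (ℓ+1)*(K-1) + 1 ≤ m - ℓ := by linarith
        have h3 : (ℓ+1)*(K-1) + 1 ≤ δ := by linarith
        exact le_min h3 h2
      · rcases min_cases δ (m - ℓ) with ⟨he, _⟩ | ⟨he, _⟩ <;> rw [he] <;> linarith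
  set W : Set ℤ :=
    {w | ∃ w' ∈ W₀, ∃ β ∈ Blocks, ∃ v : ℤ, w = β - a + w' + m * v} ∪
    {w | ∃ g ∈ 𝒢, ((∃ s ∈ S g, w = γ g - colx g + m * s) ∨ (∃ s ∈ S₀ g, w = γ g - x₀ + m * s))}
    with hWdef
  refine ⟨W, ?_, ?_⟩
  · -- coverage
    apply Set.eq_univ_of_forall
    intro z
    rw [Set.mem_add]
    set t := z / m with ht
    set δ := z % m with hδ
    have hzeq : m * t + δ = z := Int.mul_ediv_add_emod z m
    have hδ0 : 0 ≤ δ := Int.emod_nonneg z (by omega)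
    have hδ1 : δ < m := Int.emod_lt_of_pos z hm0
    by_cases hgex : ∃ g ∈ 𝒢, γ g = δ
    · obtain ⟨g, hgG, hgδ⟩ := hgex
      rcases hgcov g hgG t with ⟨y, hyL, s, hsS, hys⟩ | ⟨y, hyL, s, hsS, hys⟩
      · refine ⟨colx g + m * y, (hL _ _).1 hyL, γ g - colx g + m * s,
          Or.inr ⟨g, hgG, Or.inl ⟨s, hsS, rfl⟩⟩, ?_⟩
        have h5 : colx g + m*y + (γ g - colx g + m*s) = γ g + m*(y + s) := by ring
        rw [h5, hys, hgδ]; linarith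
      · refine ⟨x₀ + m * y, (hL _ _).1 hyL, γ g - x₀ + m * s,
          Or.inr ⟨g, hgG, Or.inr ⟨s, hsS, rfl⟩⟩, ?_⟩
        have h5 : x₀ + m*y + (γ g - x₀ + m*s) = γ g + m*(y + s) := by ring
        rw [h5, hys, hgδ]; linarith
    · push_neg at hgex
      obtain ⟨β, hβB, hβ1, hβ2⟩ := hBcover δ hδ0 hδ1 hgex
      obtain ⟨x, hxD, w', hw'W₀, hxw'⟩ := hcov₀ (δ - β + a) (by linarith) (by linarith)
      obtain ⟨y, hyL⟩ := hLne x hxD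
      refine ⟨x + m * y, (hL _ _).1 hyL, β - a + w' + m * (t - y),
        Or.inl ⟨w', hw'W₀, β, hβB, t - y, rfl⟩, ?_⟩
      linear_combination hxw' + hzeq
  · -- minimality
    intro C' hC' hCU
    obtain ⟨c, hcC, hcC'⟩ := Set.exists_of_ssubset hC'
    obtain ⟨x, hxD, y, hceq⟩ := hdecomp c hcC
    have hyL : y ∈ L x := (hL x y).2 (hceq ▸ hcC)
    obtain ⟨g, hgG, hgx, t0, hcl1, hcl2⟩ := hsel x hxD y hyL
    have hzmem : γ g + m * t0 ∈ C' + W := hCU ▸ Set.mem_univ _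
    rw [Set.mem_add] at hzmem
    obtain ⟨c', hc'C', w, hwW, hsum'⟩ := hzmem
    have hc'C : c' ∈ C := hC'.subset hc'C'
    obtain ⟨x', hx'D, y', hc'eq⟩ := hdecomp c' hc'C
    have hy'L : y' ∈ L x' := (hL x' y').2 (hc'eq ▸ hc'C)
    subst hc'eq
    have hwinx' := hwin x' hx'D
    have hγgb := hγb g hgG
    rcases hwW with ⟨w', hw'W₀, β, hβB, v, rfl⟩ | ⟨g', hg'G, hcase⟩
    · have hab' := hsum x' hx'D w' hw'W₀
      have hβb := hBb β hβB
      have key : (x' + w' - a + β) - γ g = m * (t0 - y' - v) := by linear_combination hsum'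
      have h0 := int_eq_of_small hm0 key (by linarith) (by linarith)
      exact absurd ⟨by linarith [h0.1], by linarith [h0.1]⟩ (hBavoid β hβB g hgG)
    · have hγg'b := hγb g' hg'G
      rcases hcase with ⟨s, hsS, rfl⟩ | ⟨s, hsS, rfl⟩
      · have hwc := hwin (colx g') (hcolD g' hg'G)
        have key : ((x' - colx g') + (γ g' - γ g)) - 0 = m * (t0 - y' - s) := by
          linear_combination hsum'
        have h0 := int_eq_of_small hm0 key (by linarith) (by linarith)
        have eγ1 : γ g' = (ℓ+1) * slot g' := rfl
        have eγ2 : γ g = (ℓ+1) * slot g := rfl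
        have h01 := h0.1
        rw [eγ1, eγ2] at h01
        have hd : (ℓ+1)*(slot g' - slot g) = colx g' - x' := by linear_combination h01
        have hslots : slot g' = slot g := by
          rcases lt_trichotomy (slot g' - slot g) 0 with hc | hc | hc
          · have : (ℓ+1)*(slot g' - slot g) ≤ (ℓ+1)*(-1) :=
              mul_le_mul_of_nonneg_left (by linarith) (by linarith)
            linarith
          · linarith
          · have : (ℓ+1)*1 ≤ (ℓ+1)*(slot g' - slot g) :=
              mul_le_mul_of_nonneg_left (by linarith) (by linarith)
            linarith
        have hgg : g' = g := hslotinj g' hg'G g hgG hslots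
        subst hgg
        have hx'c : x' = colx g' := by
          have := h0.1; linarith
        have ht0 : y' + s = t0 := by linarith [h0.2]
        have hy'x : y' ∈ L x := by rw [← hgx, ← hx'c]; exact hy'L
        have hyy : y' = y := hcl1 y' hy'x s hsS ht0
        apply hcC'
        have : x' + m * y' = c := by rw [hceq, hx'c, hgx, hyy]
        rwa [this] at hc'C'
      · have hwc := hwin x₀ hx₀
        have key : ((x' - x₀) + (γ g' - γ g)) - 0 = m * (t0 - y' - s) := by
          linear_combination hsum'
        have h0 := int_eq_of_small hm0 key (by linarith) (by linarith)
        have eγ1 : γ g' = (ℓ+1) * slot g' := rfl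
        have eγ2 : γ g = (ℓ+1) * slot g := rfl
        have h01 := h0.1
        rw [eγ1, eγ2] at h01
        have hd : (ℓ+1)*(slot g' - slot g) = x₀ - x' := by linear_combination h01
        have hslots : slot g' = slot g := by
          rcases lt_trichotomy (slot g' - slot g) 0 with hc | hc | hc
          · have : (ℓ+1)*(slot g' - slot g) ≤ (ℓ+1)*(-1) :=
              mul_le_mul_of_nonneg_left (by linarith) (by linarith)
            linarith
          · linarith
          · have : (ℓ+1)*1 ≤ (ℓ+1)*(slot g' - slot g) :=
              mul_le_mul_of_nonneg_left (by linarith) (by linarith)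
            linarith
        have hgg : g' = g := hslotinj g' hg'G g hgG hslots
        subst hgg
        have hx'c : x' = x₀ := by have := h0.1; linarith
        have ht0 : y' + s = t0 := by linarith [h0.2]
        have hy'x : y' ∈ L x₀ := by rw [← hx'c]; exact hy'L
        exact hcl2 y' hy'x s hsS ht0

theorem eventually_periodic_MAC_explicit_bound
    (Ahat Bhat Fhat : Finset (ℤ × ℤ))
    (hFne : Fhat.Nonempty)
    (hAinj : ∀ p ∈ Ahat, ∀ q ∈ Ahat, p.1 = q.1 → p = q)
    (hBA : Bhat.image Prod.fst ⊆ Ahat.image Prod.fst)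
    (hFA : Fhat.image Prod.fst ∩ Ahat.image Prod.fst = ∅)
    (W₀ : Set ℤ) (a b : ℤ) (hab : a ≤ b)
    (hW₀ : (↑(Ahat.image Prod.fst ∪ Bhat.image Prod.fst ∪ Fhat.image Prod.fst) : Set ℤ)
        + W₀ = Set.Icc a b)
    (m : ℤ) (hmpos : 0 < m)
    (hm : ((b - a + 1) + 1) *
        ((Ahat.card : ℤ) + Bhat.card + (Fhat.image Prod.fst).card) ≤ m) :
    ArisesAsMAC (patternSet Ahat Bhat Fhat m) := by

  classical
  set Aimg := Ahat.image Prod.fst with hAimgdef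
  set Bimg := Bhat.image Prod.fst with hBimgdef
  set Fimg := Fhat.image Prod.fst with hFimgdef
  set D : Finset ℤ := Aimg ∪ Bimg ∪ Fimg with hDdef
  set C : Set ℤ := patternSet Ahat Bhat Fhat m with hCdef
  set L : ℤ → Set ℤ := fun x => {y | x + m * y ∈ C} with hLdef
  set ℓ : ℤ := b - a + 1 with hldef
  set KN : ℕ := Ahat.card + Bhat.card + Fimg.card with hKNdef
  set K : ℤ := (KN : ℤ) with hKdef
  have hl1 : 1 ≤ ℓ := by omega
  have hFimgne : Fimg.Nonempty := hFne.image _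
  have hKN1 : 1 ≤ KN := by
    have := Finset.card_pos.2 hFimgne
    omega
  have hK1 : 1 ≤ K := by rw [hKdef]; exact_mod_cast hKN1
  have hmK : (ℓ + 1) * K ≤ m := by
    have hKeq : K = (Ahat.card : ℤ) + Bhat.card + Fimg.card := by
      rw [hKdef, hKNdef]; push_cast; ring
    rw [hKeq]; exact hm
  -- membership lemmas for C
  have hCA : ∀ p ∈ Ahat, ∀ n : ℕ, p.1 + m * (p.2 + (n : ℤ)) ∈ C := by
    intro p hp n
    rw [hCdef]
    exact Or.inl (Or.inl ⟨p, hp, n, rfl⟩)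
  have hCB : ∀ p ∈ Bhat, p.1 + m * p.2 ∈ C := by
    intro p hp
    rw [hCdef]
    exact Or.inl (Or.inr ⟨p, Finset.mem_coe.2 hp, rfl⟩)
  have hCF : ∀ p ∈ Fhat, p.1 + m * p.2 ∈ C := by
    intro p hp
    rw [hCdef]
    exact Or.inr ⟨p, Finset.mem_coe.2 hp, rfl⟩
  have hCcases : ∀ c ∈ C, (∃ p ∈ Ahat, ∃ n : ℕ, c = p.1 + m * (p.2 + (n : ℤ))) ∨
      (∃ p ∈ Bhat, c = p.1 + m * p.2) ∨ (∃ p ∈ Fhat, c = p.1 + m * p.2) := by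
    intro c hc
    rw [hCdef] at hc
    rcases hc with (h | h) | h
    · exact Or.inl h
    · obtain ⟨p, hp, he⟩ := h
      exact Or.inr (Or.inl ⟨p, Finset.mem_coe.1 hp, he.symm⟩)
    · obtain ⟨p, hp, he⟩ := h
      exact Or.inr (Or.inr ⟨p, Finset.mem_coe.1 hp, he.symm⟩)
  -- D memberships
  have hDA : ∀ p ∈ Ahat, p.1 ∈ D := by
    intro p hp
    exact Finset.mem_union_left _ (Finset.mem_union_left _ (Finset.mem_image_of_mem _ hp))
  have hDB : ∀ p ∈ Bhat, p.1 ∈ D := by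
    intro p hp
    exact Finset.mem_union_left _ (Finset.mem_union_right _ (Finset.mem_image_of_mem _ hp))
  have hDF : ∀ p ∈ Fhat, p.1 ∈ D := by
    intro p hp
    exact Finset.mem_union_right _ (Finset.mem_image_of_mem _ hp)
  have hDAi : ∀ x ∈ Aimg, x ∈ D := by
    intro x hx
    exact Finset.mem_union_left _ (Finset.mem_union_left _ hx)
  have hDFi : ∀ x ∈ Fimg, x ∈ D := by
    intro x hx
    exact Finset.mem_union_right _ hx
  -- W₀ facts
  have hsum : ∀ x ∈ D, ∀ w ∈ W₀, a ≤ x + w ∧ x + w ≤ b := by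
    intro x hx w hw
    have : x + w ∈ (↑D : Set ℤ) + W₀ := Set.add_mem_add (Finset.mem_coe.2 hx) hw
    rw [hW₀] at this
    exact this
  have hW₀ne : W₀.Nonempty := by
    have h1 : a ∈ Set.Icc a b := ⟨le_refl a, hab⟩
    rw [← hW₀] at h1
    obtain ⟨d, _, w, hw, _⟩ := Set.mem_add.1 h1
    exact ⟨w, hw⟩
  obtain ⟨w₀, hw₀⟩ := hW₀ne
  set α : ℤ := a - w₀ with hαdef
  have hwin : ∀ x ∈ D, α ≤ x ∧ x ≤ α + ℓ - 1 := by
    intro x hx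
    have := hsum x hx w₀ hw₀
    omega
  have hcov₀ : ∀ z : ℤ, a ≤ z → z ≤ b → ∃ x ∈ D, ∃ w ∈ W₀, x + w = z := by
    intro z h1 h2
    have hz : z ∈ Set.Icc a b := ⟨h1, h2⟩
    rw [← hW₀] at hz
    obtain ⟨d, hd, w, hw, he⟩ := Set.mem_add.1 hz
    exact ⟨d, Finset.mem_coe.1 hd, w, hw, he⟩
  have hdecomp : ∀ c ∈ C, ∃ x ∈ D, ∃ y : ℤ, c = x + m * y := by
    intro c hc
    rcases hCcases c hc with ⟨p, hp, n, he⟩ | ⟨p, hp, he⟩ | ⟨p, hp, he⟩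
    · exact ⟨p.1, hDA p hp, p.2 + n, he⟩
    · exact ⟨p.1, hDB p hp, p.2, he⟩
    · exact ⟨p.1, hDF p hp, p.2, he⟩
  have hLmem : ∀ x y : ℤ, y ∈ L x ↔ x + m * y ∈ C := by
    intro x y
    rw [hLdef]
    rfl
  have hLne : ∀ x ∈ D, ∃ y : ℤ, y ∈ L x := by
    intro x hx
    rw [hDdef] at hx
    rcases Finset.mem_union.1 hx with hx' | hx'
    · rcases Finset.mem_union.1 hx' with hx'' | hx''
      · obtain ⟨p, hp, hpe⟩ := Finset.mem_image.1 hx''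
        refine ⟨p.2, (hLmem _ _).2 ?_⟩
        rw [← hpe]
        simpa using hCA p hp 0
      · obtain ⟨p, hp, hpe⟩ := Finset.mem_image.1 hx''
        refine ⟨p.2, (hLmem _ _).2 ?_⟩
        rw [← hpe]
        exact hCB p hp
    · obtain ⟨p, hp, hpe⟩ := Finset.mem_image.1 hx'
      refine ⟨p.2, (hLmem _ _).2 ?_⟩
      rw [← hpe]
      exact hCF p hp
  have hm1 : ℓ + 1 ≤ m := by
    have h1 : (ℓ+1) * 1 ≤ (ℓ+1) * K := mul_le_mul_of_nonneg_left hK1 (by linarith)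
    linarith
  have hcolid : ∀ x₁ ∈ D, ∀ x₂ ∈ D, ∀ y₁ y₂ : ℤ, x₁ + m * y₁ = x₂ + m * y₂ →
      x₁ = x₂ ∧ y₁ = y₂ := by
    intro x₁ h₁ x₂ h₂ y₁ y₂ he
    have hw1 := hwin x₁ h₁
    have hw2 := hwin x₂ h₂
    have key : x₁ - x₂ = m * (y₂ - y₁) := by linear_combination he
    have h0 := int_eq_of_small hmpos key (by linarith) (by linarith)
    exact ⟨h0.1, by linarith [h0.2]⟩
  have hnotAF : ∀ x : ℤ, x ∈ Fimg → x ∈ Aimg → False := by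
    intro x h1 h2
    have hx : x ∈ Fimg ∩ Aimg := Finset.mem_inter.2 ⟨h1, h2⟩
    rw [hFA] at hx
    exact Finset.notMem_empty x hx
  have hAcol : ∀ p ∈ Ahat, ∀ y : ℤ, p.2 ≤ y → y ∈ L p.1 := by
    intro p hp y hy
    have h1 : p.1 + m * (p.2 + (((y - p.2).toNat : ℤ))) ∈ C := hCA p hp _
    have he : p.1 + m * y = p.1 + m * (p.2 + (((y - p.2).toNat : ℤ))) := by
      rw [Int.toNat_of_nonneg (by omega : (0:ℤ) ≤ y - p.2)]
      ring
    exact (hLmem _ _).2 (he ▸ h1)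
  -- global lower bound on levels
  set U : Finset (ℤ × ℤ) := Ahat ∪ Bhat ∪ Fhat with hUdef
  have hUne : U.Nonempty := by
    obtain ⟨p, hp⟩ := hFne
    exact ⟨p, Finset.mem_union_right _ hp⟩
  set Bnd : ℤ := ((U.image Prod.snd).min' (hUne.image _)) with hBnddef
  have hBndle : ∀ p ∈ U, Bnd ≤ p.2 := by
    intro p hp
    exact Finset.min'_le _ _ (Finset.mem_image_of_mem _ hp)
  have hBnd : ∀ x ∈ D, ∀ y : ℤ, y ∈ L x → Bnd ≤ y := by
    intro x hx y hy
    rcases hCcases _ ((hLmem x y).1 hy) with ⟨p, hp, n, he⟩ | ⟨p, hp, he⟩ | ⟨p, hp, he⟩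
    · have hid := hcolid x hx p.1 (hDA p hp) y (p.2 + n) he
      have := hBndle p (Finset.mem_union_left _ (Finset.mem_union_left _ hp))
      have hn : (0:ℤ) ≤ (n:ℤ) := Int.natCast_nonneg n
      omega
    · have hid := hcolid x hx p.1 (hDB p hp) y p.2 he
      have := hBndle p (Finset.mem_union_left _ (Finset.mem_union_right _ hp))
      omega
    · have hid := hcolid x hx p.1 (hDF p hp) y p.2 he
      have := hBndle p (Finset.mem_union_right _ hp)
      omega
  -- the minimal frontier for A columns
  have hHex : ∀ x : ℤ, ∃ H : ℤ, x ∈ Aimg →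
      ((∀ y : ℤ, H ≤ y → y ∈ L x) ∧ ∀ H' : ℤ, (∀ y : ℤ, H' ≤ y → y ∈ L x) → H ≤ H') := by
    intro x
    by_cases hx : x ∈ Aimg
    · obtain ⟨p, hp, hpe⟩ := Finset.mem_image.1 hx
      have hgood : ∃ H : ℤ, ∀ y : ℤ, H ≤ y → y ∈ L x :=
        ⟨p.2, fun y hy => hpe ▸ hAcol p hp y hy⟩
      have hbdd : ∃ b0 : ℤ, ∀ H : ℤ, (∀ y : ℤ, H ≤ y → y ∈ L x) → b0 ≤ H :=
        ⟨Bnd, fun H hH => hBnd x (hDAi x hx) H (hH H le_rfl)⟩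
      obtain ⟨lb, hlb1, hlb2⟩ := Int.exists_least_of_bdd hbdd hgood
      exact ⟨lb, fun _ => ⟨hlb1, hlb2⟩⟩
    · exact ⟨0, fun h => absurd h hx⟩
  choose Hfun hHfun using hHex
  have hHtop : ∀ x ∈ Aimg, (∀ y : ℤ, Hfun x ≤ y → y ∈ L x) ∧ (Hfun x - 1 ∉ L x) ∧
      (∀ p ∈ Ahat, p.1 = x → Hfun x ≤ p.2) := by
    intro x hx
    obtain ⟨h1, h2⟩ := hHfun x hx
    refine ⟨h1, ?_, ?_⟩
    · intro hmem
      have hall : ∀ y : ℤ, Hfun x - 1 ≤ y → y ∈ L x := by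
        intro y hy
        rcases eq_or_lt_of_le hy with he | hlt
        · rwa [← he]
        · exact h1 y (by omega)
      have := h2 _ hall
      omega
    · intro p hp hpe
      exact h2 p.2 (fun y hy => hpe ▸ hAcol p hp y hy)
  have hBlow : ∀ x ∈ Aimg, ∀ y : ℤ, y ∈ L x → y < Hfun x → (x, y) ∈ Bhat := by
    intro x hx y hy hlt
    have hxD := hDAi x hx
    rcases hCcases _ ((hLmem x y).1 hy) with ⟨p, hp, n, he⟩ | ⟨p, hp, he⟩ | ⟨p, hp, he⟩
    · exfalso
      have hid := hcolid x hxD p.1 (hDA p hp) y (p.2 + n) he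
      have hH := (hHtop x hx).2.2 p hp hid.1.symm
      have hn : (0:ℤ) ≤ (n:ℤ) := Int.natCast_nonneg n
      omega
    · have hid := hcolid x hxD p.1 (hDB p hp) y p.2 he
      obtain ⟨h1, h2⟩ := hid
      rw [h1, h2]
      exact hp
    · exfalso
      have hid := hcolid x hxD p.1 (hDF p hp) y p.2 he
      exact hnotAF p.1 (Finset.mem_image_of_mem _ hp) (hid.1 ▸ hx)
  -- F columns
  set Ffin : ℤ → Finset ℤ := fun x => (Fhat.filter (fun p => p.1 = x)).image Prod.snd
    with hFfindef
  have hFfinmem : ∀ x y : ℤ, y ∈ Ffin x ↔ (x, y) ∈ Fhat := by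
    intro x y
    rw [hFfindef]
    simp only [Finset.mem_image, Finset.mem_filter]
    constructor
    · rintro ⟨p, ⟨hp, hpx⟩, hpy⟩
      have : (x, y) = p := by rw [← hpx, ← hpy]
      rw [this]
      exact hp
    · intro h
      exact ⟨(x, y), ⟨h, rfl⟩, rfl⟩
  have hFexact : ∀ x ∈ Fimg, ∀ y : ℤ, y ∈ L x → (x, y) ∈ Fhat := by
    intro x hx y hy
    have hxD := hDFi x hx
    rcases hCcases _ ((hLmem x y).1 hy) with ⟨p, hp, n, he⟩ | ⟨p, hp, he⟩ | ⟨p, hp, he⟩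
    · exfalso
      have hid := hcolid x hxD p.1 (hDA p hp) y (p.2 + n) he
      exact hnotAF x hx (hid.1 ▸ Finset.mem_image_of_mem Prod.fst hp)
    · exfalso
      have hid := hcolid x hxD p.1 (hDB p hp) y p.2 he
      exact hnotAF x hx (hid.1 ▸ hBA (Finset.mem_image_of_mem Prod.fst hp))
    · have hid := hcolid x hxD p.1 (hDF p hp) y p.2 he
      obtain ⟨h1, h2⟩ := hid
      rw [h1, h2]
      exact hp
  have hLFeq : ∀ x ∈ Fimg, ∀ y : ℤ, (y ∈ L x ↔ y ∈ Ffin x) := by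
    intro x hx y
    constructor
    · intro hy
      exact (hFfinmem x y).2 (hFexact x hx y hy)
    · intro hy
      have := (hFfinmem x y).1 hy
      exact (hLmem x y).2 (hCF (x, y) this)
  have hFfinne : ∀ x ∈ Fimg, (Ffin x).Nonempty := by
    intro x hx
    obtain ⟨p, hp, hpe⟩ := Finset.mem_image.1 hx
    refine ⟨p.2, (hFfinmem x p.2).2 ?_⟩
    rw [← hpe]
    exact hp
  obtain ⟨p₀, hp₀⟩ := hFne
  set x₀ : ℤ := p₀.1 with hx₀def
  have hx₀F : x₀ ∈ Fimg := Finset.mem_image_of_mem _ hp₀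
  have hx₀D : x₀ ∈ D := hDFi x₀ hx₀F
  have hF₀ne : (Ffin x₀).Nonempty := hFfinne x₀ hx₀F
  set y₀M : ℤ := (Ffin x₀).max' hF₀ne with hy₀Mdef
  have hy₀Mmem : y₀M ∈ L x₀ := (hLFeq x₀ hx₀F y₀M).2 ((Ffin x₀).max'_mem hF₀ne)
  have hy₀Mub : ∀ y ∈ L x₀, y ≤ y₀M := fun y hy =>
    (Ffin x₀).le_max' y ((hLFeq x₀ hx₀F y).1 hy)
  -- F gadget data
  have hSFex : ∀ x : ℤ, ∃ (St : Set ℤ) (wt : ℤ → ℤ), x ∈ Fimg →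
      ((∀ t : ℤ, ∃ y ∈ Ffin x, ∃ s ∈ St, y + s = t) ∧
       (∀ y ∈ Ffin x, ∀ y' ∈ Ffin x, ∀ s ∈ St, y' + s = wt y → y' = y)) := by
    intro x
    by_cases hx : x ∈ Fimg
    · obtain ⟨St, wt, h1, h2⟩ := Flemma (Ffin x) (hFfinne x hx)
      exact ⟨St, wt, fun _ => ⟨h1, h2⟩⟩
    · exact ⟨∅, id, fun h => absurd h hx⟩
  choose SF wtF hSF using hSFex
  -- gadget index
  set 𝒢 : Finset ((ℤ × ℤ) ⊕ ((ℤ × ℤ) ⊕ ℤ)) :=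
    Ahat.image Sum.inl ∪ (Bhat.image (fun p => Sum.inr (Sum.inl p)) ∪
      Fimg.image (fun x => Sum.inr (Sum.inr x))) with h𝒢def
  have hinj1 : Function.Injective (Sum.inl : (ℤ×ℤ) → (ℤ×ℤ) ⊕ ((ℤ×ℤ) ⊕ ℤ)) :=
    Sum.inl_injective
  have hinj2 : Function.Injective (fun p : ℤ×ℤ => (Sum.inr (Sum.inl p) : (ℤ×ℤ) ⊕ ((ℤ×ℤ) ⊕ ℤ))) := by
    intro u v h
    simpa using h
  have hinj3 : Function.Injective (fun x : ℤ => (Sum.inr (Sum.inr x) : (ℤ×ℤ) ⊕ ((ℤ×ℤ) ⊕ ℤ))) := by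
    intro u v h
    simpa using h
  have hd23 : Disjoint (Bhat.image (fun p => (Sum.inr (Sum.inl p) : (ℤ×ℤ) ⊕ ((ℤ×ℤ) ⊕ ℤ))))
      (Fimg.image (fun x => Sum.inr (Sum.inr x))) := by
    rw [Finset.disjoint_left]
    rintro g hg1 hg2
    obtain ⟨p, _, rfl⟩ := Finset.mem_image.1 hg1
    obtain ⟨q, _, hq⟩ := Finset.mem_image.1 hg2
    simp at hq
  have hd123 : Disjoint (Ahat.image (Sum.inl : (ℤ×ℤ) → (ℤ×ℤ) ⊕ ((ℤ×ℤ) ⊕ ℤ)))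
      (Bhat.image (fun p => Sum.inr (Sum.inl p)) ∪ Fimg.image (fun x => Sum.inr (Sum.inr x))) := by
    rw [Finset.disjoint_left]
    rintro g hg1 hg2
    obtain ⟨p, _, rfl⟩ := Finset.mem_image.1 hg1
    rcases Finset.mem_union.1 hg2 with h | h
    · obtain ⟨q, _, hq⟩ := Finset.mem_image.1 h
      simp at hq
    · obtain ⟨q, _, hq⟩ := Finset.mem_image.1 h
      simp at hq
  have hcard : 𝒢.card = KN := by
    rw [h𝒢def, Finset.card_union_of_disjoint hd123, Finset.card_union_of_disjoint hd23,
      Finset.card_image_of_injective _ hinj1, Finset.card_image_of_injective _ hinj2,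
      Finset.card_image_of_injective _ hinj3, hKNdef]
    ring
  set e := Finset.equivFinOfCardEq hcard with hedef
  set slot : ((ℤ×ℤ) ⊕ ((ℤ×ℤ) ⊕ ℤ)) → ℤ :=
    fun g => if h : g ∈ 𝒢 then ((e ⟨g, h⟩ : Fin KN) : ℤ) else 0 with hslotdef
  have hslotinj : ∀ g ∈ 𝒢, ∀ g' ∈ 𝒢, slot g = slot g' → g = g' := by
    intro g hg g' hg' hs
    rw [hslotdef] at hs
    simp only [dif_pos hg, dif_pos hg'] at hs
    have h1 : e ⟨g, hg⟩ = e ⟨g', hg'⟩ := by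
      apply Fin.ext
      exact_mod_cast hs
    have h2 := e.injective h1
    exact congrArg Subtype.val h2
  have hslotb : ∀ g ∈ 𝒢, 0 ≤ slot g ∧ slot g ≤ K - 1 := by
    intro g hg
    rw [hslotdef]
    simp only [dif_pos hg]
    have hlt := (e ⟨g, hg⟩).isLt
    constructor
    · positivity
    · rw [hKdef]
      push_cast
      omega
  have hslotsurj : ∀ j : ℤ, 0 ≤ j → j < K → ∃ g ∈ 𝒢, slot g = j := by
    intro j h0 h1
    have hj : j.toNat < KN := by
      rw [hKdef] at h1
      omega
    refine ⟨(e.symm ⟨j.toNat, hj⟩).1, (e.symm ⟨j.toNat, hj⟩).2, ?_⟩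
    rw [hslotdef]
    simp only [dif_pos (e.symm ⟨j.toNat, hj⟩).2]
    have h2 : e ⟨(e.symm ⟨j.toNat, hj⟩).1, (e.symm ⟨j.toNat, hj⟩).2⟩ = ⟨j.toNat, hj⟩ :=
      e.apply_symm_apply _
    rw [h2]
    simp
    omega
  set colx : ((ℤ×ℤ) ⊕ ((ℤ×ℤ) ⊕ ℤ)) → ℤ := Sum.elim Prod.fst (Sum.elim Prod.fst id)
    with hcolxdef
  set S : ((ℤ×ℤ) ⊕ ((ℤ×ℤ) ⊕ ℤ)) → Set ℤ :=
    Sum.elim (fun _ => ({0} : Set ℤ))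
      (Sum.elim (fun p => ({0, p.2 + 1 - Hfun p.1} : Set ℤ)) (fun x => SF x)) with hSdef
  set S₀ : ((ℤ×ℤ) ⊕ ((ℤ×ℤ) ⊕ ℤ)) → Set ℤ :=
    Sum.elim (fun p => {s : ℤ | s ≤ Hfun p.1 - 1 - y₀M})
      (Sum.elim (fun p => {s : ℤ | s ≤ p.2 - 1 - y₀M}) (fun _ => (∅ : Set ℤ))) with hS₀def
  have h𝒢A : ∀ p ∈ Ahat, (Sum.inl p : (ℤ×ℤ) ⊕ ((ℤ×ℤ) ⊕ ℤ)) ∈ 𝒢 := by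
    intro p hp
    rw [h𝒢def]
    exact Finset.mem_union_left _ (Finset.mem_image_of_mem _ hp)
  have h𝒢B : ∀ p ∈ Bhat, (Sum.inr (Sum.inl p) : (ℤ×ℤ) ⊕ ((ℤ×ℤ) ⊕ ℤ)) ∈ 𝒢 := by
    intro p hp
    rw [h𝒢def]
    exact Finset.mem_union_right _ (Finset.mem_union_left _ (Finset.mem_image_of_mem _ hp))
  have h𝒢F : ∀ x ∈ Fimg, (Sum.inr (Sum.inr x) : (ℤ×ℤ) ⊕ ((ℤ×ℤ) ⊕ ℤ)) ∈ 𝒢 := by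
    intro x hx
    rw [h𝒢def]
    exact Finset.mem_union_right _ (Finset.mem_union_right _ (Finset.mem_image_of_mem _ hx))
  have h𝒢cases : ∀ g ∈ 𝒢, (∃ p ∈ Ahat, g = Sum.inl p) ∨
      (∃ p ∈ Bhat, g = Sum.inr (Sum.inl p)) ∨ (∃ x ∈ Fimg, g = Sum.inr (Sum.inr x)) := by
    intro g hg
    rw [h𝒢def] at hg
    rcases Finset.mem_union.1 hg with h | h
    · obtain ⟨p, hp, he⟩ := Finset.mem_image.1 h
      exact Or.inl ⟨p, hp, he.symm⟩
    · rcases Finset.mem_union.1 h with h' | h'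
      · obtain ⟨p, hp, he⟩ := Finset.mem_image.1 h'
        exact Or.inr (Or.inl ⟨p, hp, he.symm⟩)
      · obtain ⟨x, hx, he⟩ := Finset.mem_image.1 h'
        exact Or.inr (Or.inr ⟨x, hx, he.symm⟩)
  have hcolD : ∀ g ∈ 𝒢, colx g ∈ D := by
    intro g hg
    rcases h𝒢cases g hg with ⟨p, hp, rfl⟩ | ⟨p, hp, rfl⟩ | ⟨x, hx, rfl⟩
    · exact hDA p hp
    · exact hDB p hp
    · exact hDFi x hx
  have hgcov : ∀ g ∈ 𝒢, ∀ t : ℤ,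
      (∃ y ∈ L (colx g), ∃ s ∈ S g, y + s = t) ∨ (∃ y ∈ L x₀, ∃ s ∈ S₀ g, y + s = t) := by
    intro g hg t
    rcases h𝒢cases g hg with ⟨p, hp, rfl⟩ | ⟨p, hp, rfl⟩ | ⟨x, hx, rfl⟩
    · have hxA : p.1 ∈ Aimg := Finset.mem_image_of_mem _ hp
      by_cases hcase : Hfun p.1 ≤ t
      · exact Or.inl ⟨t, (hHtop p.1 hxA).1 t hcase, 0, rfl, by ring⟩
      · push_neg at hcase
        refine Or.inr ⟨y₀M, hy₀Mmem, t - y₀M, ?_, by ring⟩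
        show t - y₀M ≤ Hfun p.1 - 1 - y₀M
        omega
    · have hxA : p.1 ∈ Aimg := hBA (Finset.mem_image_of_mem _ hp)
      have hyB : p.2 ∈ L p.1 := (hLmem _ _).2 (hCB p hp)
      rcases lt_trichotomy t p.2 with hc | hc | hc
      · refine Or.inr ⟨y₀M, hy₀Mmem, t - y₀M, ?_, by ring⟩
        show t - y₀M ≤ p.2 - 1 - y₀M
        omega
      · exact Or.inl ⟨p.2, hyB, 0, Or.inl rfl, by omega⟩
      · refine Or.inl ⟨t - (p.2 + 1 - Hfun p.1), (hHtop p.1 hxA).1 _ (by omega),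
          p.2 + 1 - Hfun p.1, Or.inr rfl, by ring⟩
    · obtain ⟨y, hy, s, hs, hys⟩ := (hSF x hx).1 t
      exact Or.inl ⟨y, (hLFeq x hx y).2 hy, s, hs, hys⟩
  have hsel : ∀ x ∈ D, ∀ y ∈ L x, ∃ g ∈ 𝒢, colx g = x ∧ ∃ t0 : ℤ,
      (∀ y' ∈ L x, ∀ s ∈ S g, y' + s = t0 → y' = y) ∧
      (∀ y'' ∈ L x₀, ∀ s ∈ S₀ g, y'' + s ≠ t0) := by
    intro x hxD y hy
    by_cases hxA : x ∈ Aimg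
    · by_cases hcase : Hfun x ≤ y
      · obtain ⟨p, hp, hpe⟩ := Finset.mem_image.1 hxA
        refine ⟨Sum.inl p, h𝒢A p hp, hpe, y, ?_, ?_⟩
        · intro y' _ s hs hys
          have hs0 : s = (0:ℤ) := hs
          omega
        · intro y'' hy'' s hs0 hys
          have h1 : y'' ≤ y₀M := hy₀Mub y'' hy''
          have h2 : s ≤ Hfun p.1 - 1 - y₀M := hs0
          rw [hpe] at h2
          omega
      · push_neg at hcase
        have hyB : (x, y) ∈ Bhat := hBlow x hxA y hy hcase
        refine ⟨Sum.inr (Sum.inl (x, y)), h𝒢B _ hyB, rfl, y, ?_, ?_⟩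
        · intro y' hy' s hs hys
          rcases hs with h | h
          · have hs0 : s = 0 := h
            omega
          · exfalso
            have hsv : s = (x, y).2 + 1 - Hfun (x, y).1 := h
            simp only at hsv
            have hyv : y' = Hfun x - 1 := by omega
            exact (hHtop x hxA).2.1 (hyv ▸ hy')
        · intro y'' hy'' s hs0 hys
          have h1 : y'' ≤ y₀M := hy₀Mub y'' hy''
          have h2 : s ≤ (x, y).2 - 1 - y₀M := hs0
          simp only at h2
          omega
    · have hxF : x ∈ Fimg := by
        rw [hDdef] at hxD
        rcases Finset.mem_union.1 hxD with h | h
        · rcases Finset.mem_union.1 h with h' | h'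
          · exact absurd h' hxA
          · exact absurd (hBA h') hxA
        · exact h
      refine ⟨Sum.inr (Sum.inr x), h𝒢F x hxF, rfl, wtF x y, ?_, ?_⟩
      · intro y' hy' s hs hys
        exact (hSF x hxF).2 y ((hLFeq x hxF y).1 hy) y' ((hLFeq x hxF y').1 hy') s hs hys
      · intro y'' _ s hs0 _
        exact absurd hs0 (Set.notMem_empty s)
  exact core m ℓ K a b α C W₀ D L 𝒢 slot colx S S₀ x₀ hmpos hl1 hK1 hmK (by omega)
    hLmem hwin hdecomp hLne hsum hcov₀ hx₀D hslotinj hslotb hslotsurj hcolD hgcov hsel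
end

section
/- Let Ĉ ⊆ ℤ × ℤ be such that its set of x-coordinates D = Ĉ_/ is finite. For c ∈ D write Ĉ(c) = {p ∈ Ĉ : p has x-coordinate c} and Line(c) = {(c, y) : y ∈ ℤ}. Suppose the columns Ĉ(c) that are finite are nonempty in number: enumerate them F̂₁, …, F̂_t (t ≥ 1, with distinct x-coordinates x(F̂₁), …, x(F̂_t)), and enumerate the infinite columns K̂₁, …, K̂_r (with distinct x-coordinates). Suppose for each i ∈ {1, …, r} there exist sets Ŝ_{i,1}, …, Ŝ_{i,nᵢ} ⊆ ℤ × ℤ with Ŝ_{i,1} ∪ ⋯ ∪ Ŝ_{i,nᵢ} = K̂ᵢ such that for each i, j there exist (possibly empty) subsets Ŵ_{i,j;μ} (1 ≤ μ ≤ t) and Û_{i,j;ν} (1 ≤ ν ≤ r) of ℤ × ℤ with Line(x(K̂ᵢ)) \ Ŝ_{i,j} = ⋃_{μ=1}^{t} (F̂_μ + Ŵ_{i,j;μ}) ∪ ⋃_{ν=1}^{r} (K̂_ν + Û_{i,j;ν}), where + denotes the coordinatewise Minkowski sum in ℤ × ℤ. Suppose further there exist W₀ ⊆ ℤ and integers a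 ≤ b with D + W₀ = {a, a+1, …, b}; set ℓ = b − a + 1. If m is a positive integer with m ≥ (ℓ + 1)·(t + n₁ + ⋯ + n_r), then C = π_m(Ĉ) arises as a minimal additive complement in ℤ. -/
/-!
Every column of `Ĉ` is served by a *gadget*: a set `T ⊆ ℤ²` with `Ĉ + T ⊇ Line(c)` in which
each point of the column (or of a piece `Ŝ_{i,j}` of an infinite column) has a private point,
i.e. one reached only from it. For a finite column `T = {0} × V`, where the column's heights
form a minimal additive complement to `V` (by Kwon, every finite set is a MAC); for a piece
`Ŝ_{i,j}`, `T = {0} ∪ ⋃ Ŵ ∪ ⋃ Û` and every point of `Ŝ_{i,j}` is its own private point.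

Under `π_m` the gadgets are placed at the residues `k(ℓ + 1)`, `k < t + Σ nᵢ`. A translate of
`C` by a gadget element lands within `ℓ - 1` of its residue, so different gadgets cannot reach
each other's residue modulo `m`. The remaining residues are covered by `W₀` shifted into
windows of length `ℓ` that contain no gadget residue. Hence private points stay private and
`C` is minimal.
-/

open Pointwise

/-- The column of `Chat` at `x`-coordinate `c`. -/
def column (Chat : Set (ℤ × ℤ)) (c : ℤ) : Set (ℤ × ℤ) := {p ∈ Chat | p.1 = c}

/-- The full vertical line at `x`-coordinate `c`. -/
def line (c : ℤ) : Set (ℤ × ℤ) := {p : ℤ × ℤ | p.1 = c}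

theorem isMAC_iff {C W : Set ℤ} :
    IsMAC C W ↔
      C + W = Set.univ ∧ ∀ c ∈ C, ∃ z, ∀ c' ∈ C, ∀ w ∈ W, c' + w = z → c' = c := by
  refine and_congr_right fun _ => ⟨fun hmin c hc => ?_, fun hpriv C' hC' hcov => ?_⟩
  · by_contra! h
    refine hmin (C \ {c}) (Set.sdiff_singleton_ssubset.mpr hc) (Set.eq_univ_of_forall fun z => ?_)
    obtain ⟨c', hc', w, hw, rfl, hne⟩ := h z
    exact Set.add_mem_add ⟨hc', hne⟩ hw
  · obtain ⟨c, hc, hcC'⟩ := Set.exists_of_ssubset hC'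
    obtain ⟨z, hz⟩ := hpriv c hc
    obtain ⟨c', hc', w, hw, hcw⟩ := Set.mem_add.mp (hcov ▸ Set.mem_univ z)
    exact hcC' (hz c' (hC'.subset hc') w hw hcw ▸ hc')

theorem eq_and_eq_of_add_mul_eq {m r r' k k' : ℤ} (h : r + m * k = r' + m * k')
    (hr : |r - r'| < m) : r = r' ∧ k = k' := by
  have hrr : r - r' = 0 := Int.eq_zero_of_abs_lt_dvd ⟨k' - k, by linear_combination h⟩ hr
  have hm : m ≠ 0 := (lt_of_le_of_lt (abs_nonneg _) hr).ne'
  exact ⟨by linarith, mul_left_cancel₀ hm (by linarith)⟩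

/-- Kwon's theorem. The complement is `ℤ` minus the numbers `K y - y'` with `y ≠ y'` in `F`;
since `K` exceeds twice the diameter of `F`, such a number determines its "digits" `y, y'`. -/
theorem arisesAsMAC_of_finite {F : Set ℤ} (hfin : F.Finite) (hne : F.Nonempty) :
    ArisesAsMAC F := by
  obtain ⟨lo, hlo, hlo_le⟩ := Set.exists_min_image F id hfin hne
  obtain ⟨hi, hhi, hle_hi⟩ := Set.exists_max_image F id hfin hne
  have hbound : ∀ y ∈ F, lo ≤ y ∧ y ≤ hi := fun y hy => ⟨hlo_le y hy, hle_hi y hy⟩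
  set K := 2 * (hi - lo) + 1
  set E := {e | ∃ y ∈ F, ∃ y' ∈ F, y' ≠ y ∧ e = K * y - y'}
  refine ⟨Eᶜ, isMAC_iff.mpr ⟨Set.eq_univ_of_forall fun H => ?_,
    fun y hy => ⟨K * y, fun y' hy' v hv hyv => ?_⟩⟩⟩
  · by_contra hH
    have hE : ∀ y ∈ F, H - y ∈ E := fun y hy =>
      not_not.mp fun h => hH (Set.mem_add.mpr ⟨y, hy, H - y, h, by ring⟩)
    -- Comparing `H - lo` with `H - hi` forces `H = K * g₁`; then `H - g₁` is not in `E`.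
    obtain ⟨g₁, hg₁, h₁, hh₁, -, e₁⟩ := hE lo hlo
    obtain ⟨g₂, -, h₂, hh₂, -, e₂⟩ := hE hi hhi
    obtain ⟨hh, -⟩ := eq_and_eq_of_add_mul_eq (r := h₁ - lo + (hi - h₂)) (r' := 0) (m := K)
      (k := g₂) (k' := g₁) (by linear_combination e₁ - e₂) (by
        rw [sub_zero, abs_lt]; constructor <;> linarith [hbound h₁ hh₁, hbound h₂ hh₂])
    obtain ⟨g, -, h, hh, hne, e⟩ := hE g₁ hg₁
    obtain ⟨hgh, hg⟩ := eq_and_eq_of_add_mul_eq (r := -g₁) (r' := -h) (m := K) (k := g₁)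
      (k' := g) (by linarith [hbound h₁ hh₁, hbound h₂ hh₂]) (by
        rw [abs_lt]; constructor <;> linarith [hbound h hh, hbound g₁ hg₁])
    exact hne (by linarith)
  · by_contra hne
    exact hv ⟨y, hy, y', hy', hne, by linarith⟩

theorem eq_of_mul_add_add_mul_eq {N : ℕ} {ℓ m δ j j' : ℤ} {k k' : ℕ} (hℓ : 0 ≤ ℓ)
    (hm : N * (ℓ + 1) ≤ m) (hk : k < N) (hk' : k' < N) (hδ : |δ| ≤ ℓ)
    (h : k * (ℓ + 1) + δ + m * j = k' * (ℓ + 1) + m * j') : k = k' ∧ δ = 0 ∧ j = j' := by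
  have hk1 : (k : ℤ) + 1 ≤ N := by exact_mod_cast hk
  have hk1' : (k' : ℤ) + 1 ≤ N := by exact_mod_cast hk'
  obtain ⟨hr, hj⟩ := eq_and_eq_of_add_mul_eq h (by
    rw [abs_le] at hδ
    rw [abs_lt]; constructor <;> nlinarith)
  obtain ⟨hδ0, hkk⟩ := eq_and_eq_of_add_mul_eq (m := ℓ + 1) (r := δ) (r' := 0) (k := k)
    (k' := k') (by linarith) (by rw [sub_zero]; linarith)
  exact ⟨by exact_mod_cast hkk, hδ0, hj⟩

def IsFreeWindow (ℓ m : ℤ) (N : ℕ) (s : ℤ) : Prop :=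
  0 ≤ s ∧ s + ℓ ≤ m ∧ ∀ k < N, (k : ℤ) * (ℓ + 1) ∉ Set.Ico s (s + ℓ)

theorem exists_isFreeWindow {ℓ m ρ : ℤ} {N : ℕ} (hℓ : 0 < ℓ) (hN : 0 < N)
    (hm : N * (ℓ + 1) ≤ m) (hρ : ρ ∈ Set.Ico 0 m) (hslot : ∀ k < N, (k : ℤ) * (ℓ + 1) ≠ ρ) :
    ∃ s, IsFreeWindow ℓ m N s ∧ ρ ∈ Set.Ico s (s + ℓ) := by
  obtain ⟨hρ0, hρm⟩ := hρ
  have hr0 : 0 ≤ ρ % (ℓ + 1) := Int.emod_nonneg ρ (by omega)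
  have hr1 : ρ % (ℓ + 1) < ℓ + 1 := Int.emod_lt_of_pos ρ (by omega)
  set q := ρ / (ℓ + 1)
  have hq0 : 0 ≤ q := Int.ediv_nonneg hρ0 (by omega)
  have hdiv : ρ % (ℓ + 1) + q * (ℓ + 1) = ρ := by rw [mul_comm]; exact Int.emod_add_mul_ediv ρ _
  by_cases hq : q < N
  · have hr : ρ % (ℓ + 1) ≠ 0 := fun h0 =>
      hslot q.toNat (by omega) (by rw [Int.toNat_of_nonneg hq0]; linarith)
    refine ⟨q * (ℓ + 1) + 1, ⟨by positivity, ?_, fun k _ hk => ?_⟩, by constructor <;> omega⟩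
    · nlinarith
    · rcases le_or_gt (k : ℤ) q with hkq | hkq
      · nlinarith [hk.1]
      · nlinarith [hk.2]
  · have hN1 : (1 : ℤ) ≤ N := by exact_mod_cast hN
    refine ⟨min ρ (m - ℓ), ⟨?_, by omega, fun k hk hks => ?_⟩, by omega, by omega⟩
    · apply le_min hρ0; nlinarith
    · have hk1 : (k : ℤ) + 1 ≤ N := by exact_mod_cast hk
      rcases min_le_iff.mp hks.1 with h | h <;> nlinarith

theorem abs_sub_le_of_add_eq_Icc {D W₀ : Set ℤ} {a b d d' : ℤ} (hab : a ≤ b)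
    (hW₀ : D + W₀ = Set.Icc a b) (hd : d ∈ D) (hd' : d' ∈ D) : |d - d'| ≤ b - a := by
  obtain ⟨-, -, w, hw, -⟩ := Set.mem_add.mp (hW₀ ▸ Set.left_mem_Icc.mpr hab : a ∈ D + W₀)
  have h := hW₀ ▸ Set.add_mem_add hd hw
  have h' := hW₀ ▸ Set.add_mem_add hd' hw
  rw [abs_le]; constructor <;> linarith [h.1, h.2, h'.1, h'.2]

def piMap (m : ℤ) (p : ℤ × ℤ) : ℤ := p.1 + m * p.2

theorem piMap_add (m : ℤ) (p q : ℤ × ℤ) : piMap m (p + q) = piMap m p + piMap m q := by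
  simp only [piMap, Prod.fst_add, Prod.snd_add]; ring

/-- Placed at the residue `s`, a gadget contributes `s - c + π_m(T)` to the complement of
`π_m(Chat)`; the points of `P` are those it protects. -/
structure IsGadget (Chat : Set (ℤ × ℤ)) (c : ℤ) (T P : Set (ℤ × ℤ)) : Prop where
  sub_fst_mem : ∀ u ∈ T, c - u.1 ∈ Prod.fst '' Chat
  line_subset : line c ⊆ Chat + T
  exists_private : ∀ p ∈ P, ∃ z ∈ line c, ∀ q ∈ Chat, ∀ u ∈ T, q + u = z → q = p

theorem exists_isGadget_column_of_finite {Chat : Set (ℤ × ℤ)} {c : ℤ}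
    (hfin : (column Chat c).Finite) (hne : (column Chat c).Nonempty) :
    ∃ T, IsGadget Chat c T (column Chat c) := by
  have hFfin : {y | (c, y) ∈ Chat}.Finite :=
    (hfin.image Prod.snd).subset fun y hy => ⟨(c, y), ⟨hy, rfl⟩, rfl⟩
  obtain ⟨p₀, hp₀, rfl⟩ := hne
  obtain ⟨V, hV⟩ := arisesAsMAC_of_finite hFfin ⟨p₀.2, hp₀⟩
  obtain ⟨hcov, hpriv⟩ := isMAC_iff.mp hV
  refine ⟨{0} ×ˢ V, ⟨?_, ?_, ?_⟩⟩
  · rintro u ⟨hu, -⟩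
    exact ⟨p₀, hp₀, by simp [Set.mem_singleton_iff.mp hu]⟩
  · rintro ⟨_, H⟩ rfl
    obtain ⟨y, hy, v, hv, hyv⟩ := Set.mem_add.mp (hcov ▸ Set.mem_univ H)
    exact Set.mem_add.mpr ⟨(p₀.1, y), hy, (0, v), ⟨rfl, hv⟩, by simp [hyv]⟩
  · rintro p ⟨hp, hpc⟩
    obtain ⟨ζ, hζ⟩ := hpriv p.2 (show (p₀.1, p.2) ∈ Chat from hpc ▸ hp)
    refine ⟨(p₀.1, ζ), rfl, ?_⟩
    rintro q hq u ⟨hu0, hu⟩ hqu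
    have h1 : q.1 = p.1 := by
      simpa [Set.mem_singleton_iff.mp hu0, hpc] using congrArg Prod.fst hqu
    exact Prod.ext h1 (hζ q.2 (show (p₀.1, q.2) ∈ Chat from hpc ▸ h1 ▸ hq) u.2 hu
      (congrArg Prod.snd hqu))

theorem isGadget_of_line_diff_eq_iUnion {κ : Type*} {Chat S : Set (ℤ × ℤ)} {c : ℤ}
    {d : κ → ℤ} {U : κ → Set (ℤ × ℤ)} (hc : c ∈ Prod.fst '' Chat) (hS : S ⊆ column Chat c)
    (hd : ∀ k, (column Chat (d k)).Nonempty)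
    (hdecomp : line c \ S = ⋃ k, (column Chat (d k) + U k)) :
    IsGadget Chat c (insert 0 (⋃ k, U k)) S := by
  have hshift : ∀ k, ∀ u ∈ U k, u.1 = c - d k := by
    intro k u hu
    obtain ⟨p, hp⟩ := hd k
    have : (p + u).1 = c :=
      (hdecomp ▸ Set.mem_iUnion.mpr ⟨k, Set.add_mem_add hp hu⟩ : p + u ∈ line c \ S).1
    rw [Prod.fst_add, hp.2] at this
    linarith
  refine ⟨?_, fun z hz => ?_, fun p hp => ⟨p, (hS hp).2, ?_⟩⟩
  · rintro u (rfl | hu)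
    · simpa using hc
    · obtain ⟨k, hu⟩ := Set.mem_iUnion.mp hu
      obtain ⟨p, hp, hpd⟩ := hd k
      exact ⟨p, hp, by rw [hshift k u hu, hpd]; ring⟩
  · by_cases hzS : z ∈ S
    · exact ⟨z, (hS hzS).1, 0, Set.mem_insert _ _, add_zero z⟩
    · have hz' : z ∈ ⋃ k, (column Chat (d k) + U k) := hdecomp ▸ ⟨hz, hzS⟩
      obtain ⟨k, q, hq, u, hu, rfl⟩ := Set.mem_iUnion.mp hz'
      exact Set.add_mem_add hq.1 (Or.inr (Set.mem_iUnion.mpr ⟨k, hu⟩))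
  · rintro q hq u (rfl | hu) hqu
    · simpa using hqu
    · obtain ⟨k, hu⟩ := Set.mem_iUnion.mp hu
      have hqd : q.1 = d k := by
        have := congrArg Prod.fst hqu
        rw [Prod.fst_add, hshift k u hu, (hS hp).2] at this
        linarith
      have := (hdecomp ▸ Set.mem_iUnion.mpr ⟨k, Set.add_mem_add ⟨hq, hqd⟩ hu⟩ :
        q + u ∈ line c \ S).2
      exact absurd (hqu ▸ hp) this

section Complement

variable {ι : Type*} [Fintype ι]

noncomputable def slot (ℓ : ℤ) (g : ι) : ℤ := ((Fintype.equivFin ι g : ℕ) : ℤ) * (ℓ + 1)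

noncomputable def gadgetComplement (W₀ : Set ℤ) (a b m : ℤ) (c : ι → ℤ)
    (T : ι → Set (ℤ × ℤ)) : Set ℤ :=
  {w | ∃ s, IsFreeWindow (b - a + 1) m (Fintype.card ι) s ∧
      ∃ w₀ ∈ W₀, ∃ v, w = s - a + w₀ + m * v} ∪
    ⋃ g, (fun u => slot (b - a + 1) g - c g + piMap m u) '' T g

theorem slot_mem_Ico (ℓ : ℤ) (hℓ : 0 ≤ ℓ) (g : ι) :
    slot ℓ g ∈ Set.Ico 0 (Fintype.card ι * (ℓ + 1)) := by
  have hg : ((Fintype.equivFin ι g : ℕ) : ℤ) + 1 ≤ Fintype.card ι := by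
    exact_mod_cast (Fintype.equivFin ι g).isLt
  constructor <;> simp only [slot] <;> nlinarith

variable {Chat : Set (ℤ × ℤ)} {W₀ : Set ℤ} {a b m : ℤ} {c : ι → ℤ} {T P : ι → Set (ℤ × ℤ)}

theorem piMap_image_add_gadgetComplement [Nonempty ι] (hab : a ≤ b)
    (hW₀ : Prod.fst '' Chat + W₀ = Set.Icc a b) (hT : ∀ g, line (c g) ⊆ Chat + T g)
    (hm : (b - a + 2) * Fintype.card ι ≤ m) :
    piMap m '' Chat + gadgetComplement W₀ a b m c T = Set.univ := by
  have hN : 0 < Fintype.card ι := Fintype.card_pos (α := ι)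
  have hm0 : 0 < m := by nlinarith [(by exact_mod_cast hN : (0 : ℤ) < Fintype.card ι)]
  refine Set.eq_univ_of_forall fun z => ?_
  have hz := Int.emod_add_mul_ediv z m
  by_cases hslot : ∃ g : ι, slot (b - a + 1) g = z % m
  · obtain ⟨g, hg⟩ := hslot
    obtain ⟨q, hq, u, hu, hqu⟩ := Set.mem_add.mp (hT g (show (c g, z / m) ∈ line (c g) from rfl))
    refine Set.mem_add.mpr ⟨piMap m q, ⟨q, hq, rfl⟩, _,
      Or.inr (Set.mem_iUnion.mpr ⟨g, u, hu, rfl⟩), ?_⟩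
    have := congrArg (piMap m) hqu
    rw [piMap_add] at this
    simp only [piMap] at this ⊢
    linarith
  · obtain ⟨s, hs, hρs⟩ := exists_isFreeWindow (ℓ := b - a + 1) (ρ := z % m) (by omega) hN
      (by linarith) ⟨Int.emod_nonneg _ hm0.ne', Int.emod_lt_of_pos _ hm0⟩
      (fun k hk h => hslot ⟨(Fintype.equivFin ι).symm ⟨k, hk⟩, by simp [slot, h]⟩)
    have : z % m - s + a ∈ Prod.fst '' Chat + W₀ :=
      hW₀ ▸ ⟨by linarith [hρs.1], by linarith [hρs.2]⟩
    obtain ⟨_, ⟨q, hq, rfl⟩, w₀, hw₀, hsum⟩ := Set.mem_add.mp this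
    refine Set.mem_add.mpr ⟨piMap m q, ⟨q, hq, rfl⟩, s - a + w₀ + m * (z / m - q.2),
      Or.inl ⟨s, hs, w₀, hw₀, _, rfl⟩, ?_⟩
    simp only [piMap]
    linarith

theorem exists_private_piMap (hab : a ≤ b) (hW₀ : Prod.fst '' Chat + W₀ = Set.Icc a b)
    (hG : ∀ g, IsGadget Chat (c g) (T g) (P g)) (hm : (b - a + 2) * Fintype.card ι ≤ m)
    {p : ℤ × ℤ} {g : ι} (hp : p ∈ P g) :
    ∃ z, ∀ c' ∈ piMap m '' Chat, ∀ w ∈ gadgetComplement W₀ a b m c T, c' + w = z →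
      c' = piMap m p := by
  obtain ⟨z, hz, hpriv⟩ := (hG g).exists_private p hp
  have hslot := slot_mem_Ico (b - a + 1) (by omega) g
  refine ⟨slot (b - a + 1) g + m * z.2, ?_⟩
  rintro _ ⟨q, hq, rfl⟩ w (⟨s, ⟨hs0, hsm, hfree⟩, w₀, hw₀, v, rfl⟩ | hw) hqw
  · have hqw₀ := hW₀ ▸ Set.add_mem_add (Set.mem_image_of_mem Prod.fst hq) hw₀
    obtain ⟨hr, -⟩ := eq_and_eq_of_add_mul_eq (m := m) (r := q.1 + w₀ - a + s)
      (r' := slot (b - a + 1) g) (k := q.2 + v) (k' := z.2) (by simp only [piMap] at hqw; linarith)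
      (by rw [abs_lt]; constructor <;> linarith [hqw₀.1, hqw₀.2, hslot.1, hslot.2])
    simp only [slot] at hr
    exact (hfree _ (Fintype.equivFin ι g).isLt
      ⟨by linarith [hqw₀.1], by linarith [hqw₀.2]⟩).elim
  · obtain ⟨g', u, hu, rfl⟩ := Set.mem_iUnion.mp hw
    have hδ := abs_sub_le_of_add_eq_Icc hab hW₀ (Set.mem_image_of_mem Prod.fst hq)
      ((hG g').sub_fst_mem u hu)
    obtain ⟨hgg, hδ0, h2⟩ := eq_of_mul_add_add_mul_eq (ℓ := b - a + 1) (m := m)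
      (δ := (q + u).1 - c g') (j := (q + u).2) (j' := z.2) (by omega) (by linarith)
      (Fintype.equivFin ι g').isLt (Fintype.equivFin ι g).isLt (by
        rw [Prod.fst_add, show q.1 + u.1 - c g' = q.1 - (c g' - u.1) by ring]; linarith)
      (by simp only [slot, piMap, Prod.fst_add, Prod.snd_add] at hqw ⊢; linarith)
    obtain rfl : g' = g := (Fintype.equivFin ι).injective (Fin.ext hgg)
    rw [hpriv q hq u hu (Prod.ext (by rw [hz]; linarith) h2)]

theorem arisesAsMAC_piMap_of_isGadget (hab : a ≤ b)
    (hW₀ : Prod.fst '' Chat + W₀ = Set.Icc a b) (hG : ∀ g, IsGadget Chat (c g) (T g) (P g))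
    (hP : Chat ⊆ ⋃ g, P g) (hm : (b - a + 2) * Fintype.card ι ≤ m) :
    ArisesAsMAC (piMap m '' Chat) := by
  obtain ⟨_, ⟨p, hp, rfl⟩, -⟩ := Set.mem_add.mp (hW₀ ▸ Set.left_mem_Icc.mpr hab)
  obtain ⟨g, -⟩ := Set.mem_iUnion.mp (hP hp)
  have : Nonempty ι := ⟨g⟩
  refine ⟨gadgetComplement W₀ a b m c T, isMAC_iff.mpr
    ⟨piMap_image_add_gadgetComplement hab hW₀ (fun g => (hG g).line_subset) hm, ?_⟩⟩
  rintro _ ⟨p, hp, rfl⟩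
  obtain ⟨g, hpg⟩ := Set.mem_iUnion.mp (hP hp)
  exact exists_private_piMap hab hW₀ hG hm hpg

end Complement

theorem pattern_set_cover_bound_implies_MAC_general
    (Chat : Set (ℤ × ℤ))
    (t r : ℕ)
    (xF : Fin t → ℤ) (xK : Fin r → ℤ)
    (hcols : Prod.fst '' Chat = Set.range xF ∪ Set.range xK)
    (hFfin : ∀ i, (column Chat (xF i)).Finite)
    (hFne : ∀ i, (column Chat (xF i)).Nonempty)
    (hKinf : ∀ i, (column Chat (xK i)).Infinite)
    (n : Fin r → ℕ)
    (S : (i : Fin r) → Fin (n i) → Set (ℤ × ℤ))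
    (hScover : ∀ i, (⋃ j, S i j) = column Chat (xK i))
    (hScov : ∀ i j, ∃ (W : Fin t → Set (ℤ × ℤ)) (U : Fin r → Set (ℤ × ℤ)),
      line (xK i) \ S i j =
        (⋃ μ, (column Chat (xF μ) + W μ)) ∪ (⋃ ν, (column Chat (xK ν) + U ν)))
    (W₀ : Set ℤ) (a b : ℤ) (hab : a ≤ b)
    (hW₀ : (Prod.fst '' Chat) + W₀ = Set.Icc a b)
    (m : ℤ)
    (hm : ((b - a + 1) + 1) * ((t : ℤ) + ∑ i, (n i : ℤ)) ≤ m) :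
    ArisesAsMAC ((fun p : ℤ × ℤ => p.1 + m * p.2) '' Chat) := by
  choose WF UK hWU using hScov
  choose TF hTF using fun μ => exists_isGadget_column_of_finite (hFfin μ) (hFne μ)
  have hK : ∀ i j, IsGadget Chat (xK i)
      (insert 0 (⋃ k, Sum.elim (WF i j) (UK i j) k)) (S i j) := fun i j =>
    isGadget_of_line_diff_eq_iUnion (d := Sum.elim xF xK) (hcols ▸ Or.inr ⟨i, rfl⟩)
      (hScover i ▸ Set.subset_iUnion (S i) j) (Sum.rec hFne fun ν => (hKinf ν).nonempty)
      (by simp only [hWU, Set.iUnion_sum, Sum.elim_inl, Sum.elim_inr])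
  have hP : Chat ⊆ ⋃ g, Sum.elim (fun μ => column Chat (xF μ))
      (fun ij : (i : Fin r) × Fin (n i) => S ij.1 ij.2) g := by
    intro p hp
    rcases (hcols ▸ ⟨p, hp, rfl⟩ : p.1 ∈ Set.range xF ∪ Set.range xK) with ⟨μ, hμ⟩ | ⟨i, hi⟩
    · exact Set.mem_iUnion.mpr ⟨.inl μ, hp, hμ.symm⟩
    · obtain ⟨j, hj⟩ := Set.mem_iUnion.mp (hScover i ▸ ⟨hp, hi.symm⟩ : p ∈ ⋃ j, S i j)
      exact Set.mem_iUnion.mpr ⟨.inr ⟨i, j⟩, hj⟩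
  refine arisesAsMAC_piMap_of_isGadget hab hW₀
    (c := Sum.elim xF fun ij : (i : Fin r) × Fin (n i) => xK ij.1)
    (T := Sum.elim TF fun ij => insert 0 (⋃ k, Sum.elim (WF ij.1 ij.2) (UK ij.1 ij.2) k))
    (by rintro (μ | ⟨i, j⟩); exacts [hTF μ, hK i j]) hP ?_
  have hcard : (Fintype.card (Fin t ⊕ (i : Fin r) × Fin (n i)) : ℤ) = t + ∑ i, (n i : ℤ) := by
    simp [Fintype.card_sum, Fintype.card_sigma]
  rw [hcard]
  linarith

theorem pattern_set_cover_bound_implies_MAC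
    (Chat : Set (ℤ × ℤ)) (hD : (Prod.fst '' Chat).Finite)
    (t r : ℕ) (ht : 1 ≤ t)
    (xF : Fin t → ℤ) (xK : Fin r → ℤ)
    (hxF : Function.Injective xF) (hxK : Function.Injective xK)
    (hcols : Prod.fst '' Chat = Set.range xF ∪ Set.range xK)
    (hFfin : ∀ i, (column Chat (xF i)).Finite)
    (hFne : ∀ i, (column Chat (xF i)).Nonempty)
    (hKinf : ∀ i, (column Chat (xK i)).Infinite)
    (n : Fin r → ℕ)
    (S : (i : Fin r) → Fin (n i) → Set (ℤ × ℤ))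
    (hScover : ∀ i, (⋃ j, S i j) = column Chat (xK i))
    (hScov : ∀ i j, ∃ (W : Fin t → Set (ℤ × ℤ)) (U : Fin r → Set (ℤ × ℤ)),
      line (xK i) \ S i j =
        (⋃ μ, (column Chat (xF μ) + W μ)) ∪ (⋃ ν, (column Chat (xK ν) + U ν)))
    (W₀ : Set ℤ) (a b : ℤ) (hab : a ≤ b)
    (hW₀ : (Prod.fst '' Chat) + W₀ = Set.Icc a b)
    (m : ℤ) (hmpos : 0 < m)
    (hm : ((b - a + 1) + 1) * ((t : ℤ) + ∑ i, (n i : ℤ)) ≤ m) :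
    ArisesAsMAC ((fun p : ℤ × ℤ => p.1 + m * p.2) '' Chat) :=
  pattern_set_cover_bound_implies_MAC_general Chat t r xF xK hcols hFfin hFne hKinf n S hScover
    hScov W₀ a b hab hW₀ m hm
end
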